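/- arXiv:2204.05914 — 2 statements merged into one kernel-verified Lean document; each statement's English description precedes it below -/
import Mathlib

section
/- For every matroid M on a finite ground set E, the augmented Bergman complex Δ̂(M) is vertex decomposable. -/
open Finset

/-! ## Simplicial complexes as downward-relevant families of finite faces -/

section Complexes

variable {V : Type*} {W : Type*}

/-- A facet of a complex (given by its set of faces) is a maximal face. -/
def IsFacet (Δ : Set (Finset V)) (s : Finset V) : Prop :=
  s ∈ Δ ∧ ∀ t ∈ Δ, s ⊆ t → s = t

/-- The deletion of a vertex `v`: all faces not containing `v`. -/
def faceDeletion (Δ : Set (Finset V)) (v : V) : Set (Finset V) :=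
  {s ∈ Δ | v ∉ s}

/-- The link of a vertex `v`: faces `τ \ {v}` for `v ∈ τ ∈ Δ`. -/
def faceLink [DecidableEq V] (Δ : Set (Finset V)) (v : V) : Set (Finset V) :=
  {s | v ∉ s ∧ insert v s ∈ Δ}

/-- Vertex decomposability: `Δ` is a simplex (the family of all subsets of one finite
set, including the case `{∅}`), or it has a vertex `v` whose deletion and link are vertex
decomposable and such that every facet of the deletion is a facet of `Δ`. -/
inductive IsVertexDecomposable [DecidableEq V] : Set (Finset V) → Prop
  | simplex (s : Finset V) : IsVertexDecomposable {t | t ⊆ s}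
  | step (Δ : Set (Finset V)) (v : V) :
      {v} ∈ Δ →
      IsVertexDecomposable (faceDeletion Δ v) →
      IsVertexDecomposable (faceLink Δ v) →
      (∀ s, IsFacet (faceDeletion Δ v) s → IsFacet Δ s) →
      IsVertexDecomposable Δ

/-- A family of faces is pure of dimension `d` if it is nonempty and all of its
maximal elements have cardinality `d + 1`. -/
def IsPureDim (Δ : Set (Finset V)) (d : ℤ) : Prop :=
  Δ.Nonempty ∧ ∀ s, IsFacet Δ s → (s.card : ℤ) = d + 1

/-- `l` is a shelling order of `Δ`: it enumerates the facets of `Δ` without repetition,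
and for every `i ≥ 1` the complex `⟨σ₀, …, σ_{i-1}⟩ ∩ ⟨σ_i⟩` is pure of dimension
`dim σ_i - 1 = |σ_i| - 2`. -/
def IsShelling (Δ : Set (Finset V)) (l : List (Finset V)) : Prop :=
  l.Nodup ∧ (∀ s, s ∈ l ↔ IsFacet Δ s) ∧
  ∀ (i : ℕ) (hi : i < l.length), 0 < i →
    IsPureDim ({t | ∃ s ∈ l.take i, t ⊆ s} ∩ {t | t ⊆ l[i]})
      ((l[i].card : ℤ) - 2)

/-- A complex is shellable if it admits a shelling order of its facets. -/
def Shellable (Δ : Set (Finset V)) : Prop := ∃ l, IsShelling Δ l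

/-- The join of two complexes, realized on the sum of the two vertex types. -/
def complexJoin [DecidableEq V] [DecidableEq W]
    (Δ : Set (Finset V)) (Γ : Set (Finset W)) : Set (Finset (V ⊕ W)) :=
  {s | ∃ a ∈ Δ, ∃ b ∈ Γ, s = a.image Sum.inl ∪ b.image Sum.inr}

/-- An isomorphism of simplicial complexes: a vertex map which is injective on every
face and induces a bijection between the two families of faces. -/
def ComplexIso [DecidableEq W] (Δ : Set (Finset V)) (Γ : Set (Finset W)) : Prop :=
  ∃ φ : V → W,
    (∀ s ∈ Δ, Set.InjOn φ ↑s) ∧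
    (∀ s ∈ Δ, s.image φ ∈ Γ) ∧
    (∀ s t, s ∈ Δ → t ∈ Δ → s.image φ = t.image φ → s = t) ∧
    (∀ t ∈ Γ, ∃ s ∈ Δ, s.image φ = t)

/-- The property of appearing as an initial segment: any entry of `l` earlier than an
entry satisfying `P` also satisfies `P`. -/
def PrefixProp {α : Type*} (l : List α) (P : α → Prop) : Prop :=
  ∀ (i j : ℕ) (hi : i < l.length) (hj : j < l.length), i < j → P l[j] → P l[i]

/-- The property of appearing as a final segment: any entry of `l` later than an
entry satisfying `P` also satisfies `P`. -/
def SuffixProp {α : Type*} (l : List α) (P : α → Prop) : Prop :=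
  ∀ (i j : ℕ) (hi : i < l.length) (hj : j < l.length), i < j → P l[i] → P l[j]

/-- `a` appears strictly before `b` in the list `l`. -/
def ListPrec {α : Type*} (l : List α) (a b : α) : Prop :=
  ∃ (i j : ℕ) (hi : i < l.length) (hj : j < l.length), i < j ∧ l[i] = a ∧ l[j] = b

/-- The h-polynomial of a (finite) complex `Δ`, via
`h(Δ,t) = ∑_{s ∈ Δ} t^{|s|} (1-t)^{(d+1)-|s|}` where `d = dim Δ`. -/
noncomputable def hPoly {V : Type*} [Fintype V] [DecidableEq V]
    (Δ : Set (Finset V)) : Polynomial ℤ :=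
  ∑ s ∈ Δ.toFinite.toFinset,
    Polynomial.X ^ s.card *
      (1 - Polynomial.X) ^ (Δ.toFinite.toFinset.sup Finset.card - s.card)

end Complexes

/-! ## Closure operators -/

/-- A closure operator on the finite set `E`. -/
structure ClosureOp (E : Type*) [Fintype E] [DecidableEq E] where
  cl : Finset E → Finset E
  subset_cl : ∀ A, A ⊆ cl A
  cl_mono : ∀ ⦃A B : Finset E⦄, A ⊆ B → cl A ⊆ cl B
  cl_idem : ∀ A, cl (cl A) = cl A

namespace ClosureOp

variable {E : Type*} [Fintype E] [DecidableEq E]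

/-- A flat of `f` is a closed set. -/
def IsFlat (f : ClosureOp E) (F : Finset E) : Prop := f.cl F = F

/-- A proper flat of `f` is a flat different from the whole ground set. -/
def IsProperFlat (f : ClosureOp E) (F : Finset E) : Prop :=
  f.cl F = F ∧ F ≠ Finset.univ

/-- `I` is independent for `f` if removing any of its elements strictly shrinks its
closure. -/
def Indep (f : ClosureOp E) (I : Finset E) : Prop :=
  ∀ i ∈ I, f.cl (I.erase i) ⊂ f.cl I

/-- A basis is an independent set whose closure is all of `E`. -/
def IsBasis (f : ClosureOp E) (I : Finset E) : Prop :=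
  f.Indep I ∧ f.cl I = Finset.univ

/-- The independence complex of `f`: faces are the independent sets. -/
def indepComplex (f : ClosureOp E) : Set (Finset E) := {I | f.Indep I}

/-- The Bergman complex of `f`: faces are chains of proper flats strictly between
`f(∅)` and `E`. A vertex `x_F` is represented by the flat `F` itself. -/
def bergman (f : ClosureOp E) : Set (Finset (Finset E)) :=
  {C | (∀ F ∈ C, f.IsProperFlat F ∧ f.cl ∅ ⊂ F) ∧
       (∀ F ∈ C, ∀ G ∈ C, F ⊆ G ∨ G ⊆ F)}

/-- The cone over the Bergman complex of `f`: chains of proper flats, where the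
bottom flat `f(∅)` is allowed as a member. -/
def coneBergman (f : ClosureOp E) : Set (Finset (Finset E)) :=
  {C | (∀ F ∈ C, f.IsProperFlat F) ∧
       (∀ F ∈ C, ∀ G ∈ C, F ⊆ G ∨ G ⊆ F)}

/-- The augmented Bergman complex of `f`, on the vertex set
`{y_i : i ∈ E} ⊔ {x_F : F a proper flat}`; here `y_i = Sum.inl i` and
`x_F = Sum.inr F`.  Faces consist of an independent set `I` together with a chain of
proper flats all containing `f(I)`. -/
def augBergman (f : ClosureOp E) : Set (Finset (E ⊕ Finset E)) :=
  {s | ∃ (I : Finset E) (C : Finset (Finset E)),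
    s = I.image Sum.inl ∪ C.image Sum.inr ∧
    f.Indep I ∧
    (∀ F ∈ C, f.IsProperFlat F) ∧
    (∀ F ∈ C, ∀ G ∈ C, F ⊆ G ∨ G ⊆ F) ∧
    (∀ F ∈ C, f.cl I ⊆ F)}

/-- An upper-set of proper flats of `f`. -/
def IsFlatUpperSet (f : ClosureOp E) (L : Set (Finset E)) : Prop :=
  (∀ F ∈ L, f.IsProperFlat F) ∧
  ∀ F ∈ L, ∀ F', f.IsProperFlat F' → F ⊆ F' → F' ∈ L

/-- The induced subcomplex of the augmented Bergman complex on the vertex set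
`{y_i : i ∈ E} ⊔ {x_F : F ∈ L}`. -/
def augBergmanOn (f : ClosureOp E) (L : Set (Finset E)) :
    Set (Finset (E ⊕ Finset E)) :=
  {s | s ∈ f.augBergman ∧ ∀ F : Finset E, Sum.inr F ∈ s → F ∈ L}

/-- The restriction `f|_F` of a closure operator to `F`, as a closure operator on the
subtype `{x // x ∈ F}`; when `F` is a flat, `(f|_F)(A) = f(A)`. -/
def restrict (f : ClosureOp E) (F : Finset E) : ClosureOp {x // x ∈ F} where
  cl A := (f.cl (A.image Subtype.val)).subtype (· ∈ F)
  subset_cl A a ha := by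
    rw [Finset.mem_subtype]
    exact f.subset_cl _ (Finset.mem_image_of_mem _ ha)
  cl_mono A B h a ha := by
    rw [Finset.mem_subtype] at *
    exact f.cl_mono (Finset.image_subset_image h) ha
  cl_idem A := by
    have key : ∀ s : Finset E,
        ((s.subtype (· ∈ F)).image Subtype.val) = s.filter (· ∈ F) := by
      intro s
      ext x
      simp [Finset.mem_subtype, Finset.mem_image, Finset.mem_filter, Subtype.exists,
        and_comm]
    ext a
    rw [Finset.mem_subtype, Finset.mem_subtype, key]
    constructor
    · intro hx
      have h1 : f.cl ((f.cl (A.image Subtype.val)).filter (· ∈ F))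
          ⊆ f.cl (A.image Subtype.val) := by
        have := f.cl_mono (Finset.filter_subset (· ∈ F) (f.cl (A.image Subtype.val)))
        rw [f.cl_idem] at this
        exact this
      exact h1 hx
    · intro hx
      refine f.cl_mono ?_ hx
      intro x hxA
      rw [Finset.mem_filter]
      obtain ⟨a', _, rfl⟩ := Finset.mem_image.mp hxA
      exact ⟨f.subset_cl _ hxA, a'.2⟩

/-- The contraction `f/F` of a closure operator by `F`, as a closure operator on the
subtype `{x // x ∉ F}`; it is given by `(f/F)(A) = f(A ∪ F) \ F`. -/
def contract (f : ClosureOp E) (F : Finset E) : ClosureOp {x // x ∉ F} where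
  cl A := (f.cl (A.image Subtype.val ∪ F)).subtype (· ∉ F)
  subset_cl A a ha := by
    rw [Finset.mem_subtype]
    exact f.subset_cl _ (Finset.mem_union_left _ (Finset.mem_image_of_mem _ ha))
  cl_mono A B h a ha := by
    rw [Finset.mem_subtype] at *
    exact f.cl_mono (Finset.union_subset_union_left (Finset.image_subset_image h)) ha
  cl_idem A := by
    have key : ∀ s : Finset E,
        ((s.subtype (· ∉ F)).image Subtype.val) = s.filter (· ∉ F) := by
      intro s
      ext x
      simp [Finset.mem_subtype, Finset.mem_image, Finset.mem_filter, Subtype.exists,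
        and_comm]
    set s := f.cl (A.image Subtype.val ∪ F) with hs
    have hFs : F ⊆ s := fun x hx => f.subset_cl _ (Finset.mem_union_right _ hx)
    have hmain : f.cl ((s.subtype (· ∉ F)).image Subtype.val ∪ F) = s := by
      rw [key]
      apply le_antisymm
      · have h1 : s.filter (· ∉ F) ∪ F ⊆ s :=
          Finset.union_subset (Finset.filter_subset _ _) hFs
        have := f.cl_mono h1
        rw [hs, f.cl_idem] at this
        exact this
      · refine f.cl_mono ?_
        intro x hx
        rcases Finset.mem_union.mp hx with hx' | hx'
        · obtain ⟨a', _, rfl⟩ := Finset.mem_image.mp hx'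
          by_cases hxF : (a' : E) ∈ F
          · exact Finset.mem_union_right _ hxF
          · exact Finset.mem_union_left _
              (Finset.mem_filter.mpr ⟨f.subset_cl _ (Finset.mem_union_left _ hx'), hxF⟩)
        · exact Finset.mem_union_right _ hx'
    ext a
    rw [Finset.mem_subtype, Finset.mem_subtype, hmain]

end ClosureOp

/-! ## Matroids and their closure operators -/

/-- The closure operator (on finsets) of a matroid whose ground set is all of the
finite type `E`. -/
noncomputable def Matroid.closureOp {E : Type*} [Fintype E] [DecidableEq E]
    (M : Matroid E) (hE : M.E = Set.univ) : ClosureOp E where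
  cl A := (M.closure ↑A).toFinite.toFinset
  subset_cl A := by
    intro a ha
    simp only [Set.Finite.mem_toFinset]
    exact M.subset_closure (↑A) (by simp [hE]) ha
  cl_mono A B h := by
    intro a ha
    simp only [Set.Finite.mem_toFinset] at *
    exact M.closure_subset_closure (Finset.coe_subset.mpr h) ha
  cl_idem A := by
    ext a
    simp only [Set.Finite.mem_toFinset, Set.Finite.coe_toFinset]
    rw [M.closure_closure]

/-! ## The flag-to-basis order on facets of the augmented Bergman complex -/

namespace ClosureOp

variable {E : Type*} [Fintype E] [DecidableEq E]

/-- The independent-set part `I` of a face of the augmented Bergman complex. -/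
noncomputable def faceIndep (s : Finset (E ⊕ Finset E)) : Finset E :=
  s.preimage Sum.inl Sum.inl_injective.injOn

/-- The flag part `F_•` of a face of the augmented Bergman complex. -/
noncomputable def faceFlag (s : Finset (E ⊕ Finset E)) : Finset (Finset E) :=
  s.preimage Sum.inr Sum.inr_injective.injOn

/-- The flag part of a facet with its minimal flat `f(I)` removed, regarded as a face
of the Bergman complex of the contraction `f / f(I)`: each flat `G` of the flag is
sent to the flat `G \ f(I)` of the contraction. -/
noncomputable def reducedFlag (f : ClosureOp E) (s : Finset (E ⊕ Finset E)) : Finset (Finset E) :=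
  ((faceFlag s).erase (f.cl (faceIndep s))).image (fun G => G \ f.cl (faceIndep s))

/-- The flag-to-basis order `≺` on facets of the augmented Bergman complex, relative
to a linear extension `r` of the independence complex and a fixed family `sh` of
shellings of the Bergman complexes of the contractions `f/F`.  Facets with nonempty
flag are compared first by `r` on their independent parts, then (for equal independent
parts) by the position of their reduced flags in the fixed shelling `sh (f.cl I)`
(whose faces are mapped down to `Finset E` level by taking images of `Subtype.val`);
facets with empty flag (bases) come after all facets with nonempty flag. -/
def augPrec (f : ClosureOp E) (r : Finset E → Finset E → Prop)
    (sh : (F : Finset E) → List (Finset (Finset {x // x ∉ F})))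
    (s t : Finset (E ⊕ Finset E)) : Prop :=
  ((faceFlag s).Nonempty ∧ (faceFlag t).Nonempty ∧
    (r (faceIndep s) (faceIndep t) ∨
      (faceIndep s = faceIndep t ∧
        ListPrec ((sh (f.cl (faceIndep s))).map
            (fun c => c.image (fun G => G.image Subtype.val)))
          (f.reducedFlag s) (f.reducedFlag t)))) ∨
  ((faceFlag s).Nonempty ∧ faceFlag t = ∅)

end ClosureOp

section VDJoin

set_option linter.unusedSectionVars false
set_option linter.unusedVariables false

variable {V : Type*} [DecidableEq V]

/-- Downward closed family of faces. -/
def DClosed (Δ : Set (Finset V)) : Prop := ∀ s ∈ Δ, ∀ t ⊆ s, t ∈ Δ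

/-- Join of two families on the same vertex type. -/
def myJoin (Δ Γ : Set (Finset V)) : Set (Finset V) :=
  {s | ∃ a ∈ Δ, ∃ b ∈ Γ, s = a ∪ b}

theorem myJoin_comm (Δ Γ : Set (Finset V)) : myJoin Δ Γ = myJoin Γ Δ := by
  ext s
  constructor <;> rintro ⟨a, ha, b, hb, rfl⟩ <;>
    exact ⟨b, hb, a, ha, Finset.union_comm _ _⟩

theorem vd_empty_mem {Δ : Set (Finset V)} (h : IsVertexDecomposable Δ) : ∅ ∈ Δ := by
  induction h with
  | simplex s => simp [Set.mem_setOf_eq]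
  | step Δ v hv hdel hlink hfct ihdel ihlink => exact ihdel.1

theorem DClosed.del {Δ : Set (Finset V)} (h : DClosed Δ) (v : V) :
    DClosed (faceDeletion Δ v) :=
  fun s hs t ht => ⟨h s hs.1 t ht, fun hv => hs.2 (ht hv)⟩

theorem DClosed.link {Δ : Set (Finset V)} (h : DClosed Δ) (v : V) :
    DClosed (faceLink Δ v) :=
  fun s hs t ht =>
    ⟨fun hv => hs.1 (ht hv), h _ hs.2 _ (Finset.insert_subset_insert _ ht)⟩

theorem del_myJoin {Δ Γ : Set (Finset V)} {v : V} (hv : ∀ a ∈ Δ, v ∉ a) :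
    faceDeletion (myJoin Δ Γ) v = myJoin Δ (faceDeletion Γ v) := by
  ext s
  constructor
  · rintro ⟨⟨a, ha, b, hb, rfl⟩, hvs⟩
    exact ⟨a, ha, b, ⟨hb, fun h => hvs (Finset.mem_union_right _ h)⟩, rfl⟩
  · rintro ⟨a, ha, b, ⟨hb, hvb⟩, rfl⟩
    exact ⟨⟨a, ha, b, hb, rfl⟩, by simp [hv a ha, hvb]⟩

theorem link_myJoin {Δ Γ : Set (Finset V)} {v : V} (hv : ∀ a ∈ Δ, v ∉ a) :
    faceLink (myJoin Δ Γ) v = myJoin Δ (faceLink Γ v) := by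
  ext s
  constructor
  · rintro ⟨hvs, a, ha, b, hb, hins⟩
    have hvb : v ∈ b := by
      have h0 : v ∈ insert v s := Finset.mem_insert_self _ _
      rw [hins] at h0
      rcases Finset.mem_union.mp h0 with h | h
      · exact absurd h (hv a ha)
      · exact h
    refine ⟨a, ha, b.erase v, ⟨Finset.notMem_erase _ _, ?_⟩, ?_⟩
    · rw [Finset.insert_erase hvb]; exact hb
    · have h1 : s = (insert v s).erase v := (Finset.erase_insert hvs).symm
      rw [hins, Finset.erase_union_distrib,
        Finset.erase_eq_of_notMem (hv a ha)] at h1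
      exact h1
  · rintro ⟨a, ha, b, ⟨hvb, hins⟩, rfl⟩
    refine ⟨by simp [hv a ha, hvb], a, ha, insert v b, hins, ?_⟩
    rw [Finset.union_insert]

theorem facet_myJoin {Δ Γ : Set (Finset V)} {v : V}
    (dis : ∀ a ∈ Δ, ∀ b ∈ Γ, Disjoint a b)
    (hf : ∀ t, IsFacet (faceDeletion Γ v) t → IsFacet Γ t) :
    ∀ t, IsFacet (myJoin Δ (faceDeletion Γ v)) t → IsFacet (myJoin Δ Γ) t := by
  rintro t ⟨⟨a, ha, b, hb, rfl⟩, hmax⟩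
  have hamax : ∀ α ∈ Δ, a ⊆ α → a = α := by
    intro α hα hsub
    have h2 := hmax (α ∪ b) ⟨α, hα, b, hb, rfl⟩ (Finset.union_subset_union_left hsub)
    have dα : Disjoint α b := dis α hα b hb.1
    refine Finset.Subset.antisymm hsub (fun x hx => ?_)
    have hxu : x ∈ a ∪ b := h2 ▸ Finset.mem_union_left _ hx
    rcases Finset.mem_union.mp hxu with h | h
    · exact h
    · exact absurd hx (Finset.disjoint_left.mp dα.symm h)
  have hbfacet : IsFacet (faceDeletion Γ v) b := by
    refine ⟨hb, fun ρ hρ hsub => ?_⟩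
    have h2 := hmax (a ∪ ρ) ⟨a, ha, ρ, hρ, rfl⟩ (Finset.union_subset_union_right hsub)
    have dρ : Disjoint a ρ := dis a ha ρ hρ.1
    refine Finset.Subset.antisymm hsub (fun x hx => ?_)
    have hxu : x ∈ a ∪ b := h2 ▸ Finset.mem_union_right _ hx
    rcases Finset.mem_union.mp hxu with h | h
    · exact absurd hx (Finset.disjoint_left.mp dρ h)
    · exact h
  have hbΓ := hf b hbfacet
  refine ⟨⟨a, ha, b, hbΓ.1, rfl⟩, ?_⟩
  rintro t' ⟨a', ha', b', hb', rfl⟩ hsub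
  have hbb' : b ⊆ b' := by
    intro x hx
    rcases Finset.mem_union.mp (hsub (Finset.mem_union_right _ hx)) with h | h
    · exact absurd hx (Finset.disjoint_left.mp (dis a' ha' b hbΓ.1) h)
    · exact h
  have haa' : a ⊆ a' := by
    intro x hx
    rcases Finset.mem_union.mp (hsub (Finset.mem_union_left _ hx)) with h | h
    · exact h
    · exact absurd hx (Finset.disjoint_left.mp (dis a ha b' hb').symm h)
  rw [hamax a' ha' haa', hbΓ.2 b' hb' hbb']

theorem vd_myJoin_simplex {Γ : Set (Finset V)} (hΓ : IsVertexDecomposable Γ) :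
    ∀ s₀ : Finset V, DClosed Γ → (∀ b ∈ Γ, Disjoint s₀ b) →
      IsVertexDecomposable (myJoin {t | t ⊆ s₀} Γ) := by
  induction hΓ with
  | simplex s =>
    intro s₀ _ dis
    have he : myJoin {t | t ⊆ s₀} {t | t ⊆ s} = {t : Finset V | t ⊆ s₀ ∪ s} := by
      ext t
      constructor
      · rintro ⟨a, ha, b, hb, rfl⟩
        exact Finset.union_subset_union ha hb
      · intro ht
        refine ⟨t ∩ s₀, Finset.inter_subset_right, t \ s₀, fun x hx => ?_,
          by rw [Finset.union_comm, Finset.sdiff_union_inter]⟩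
        rcases Finset.mem_union.mp (ht (Finset.mem_sdiff.mp hx).1) with h | h
        · exact absurd h (Finset.mem_sdiff.mp hx).2
        · exact h
    rw [he]
    exact .simplex _
  | step Γ v hv hdel hlink hfct ihdel ihlink =>
    intro s₀ dc dis
    have hvs₀ : v ∉ s₀ := by
      have := dis {v} hv
      simp [Finset.disjoint_singleton_right] at this
      exact this
    have hvΔ : ∀ a ∈ {t : Finset V | t ⊆ s₀}, v ∉ a := fun a ha h => hvs₀ (ha h)
    refine .step _ v ⟨∅, by simp, {v}, hv, by simp⟩ ?_ ?_ ?_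
    · rw [del_myJoin hvΔ]
      exact ihdel s₀ (dc.del v) (fun b hb => dis b hb.1)
    · rw [link_myJoin hvΔ]
      refine ihlink s₀ (dc.link v) (fun b hb => ?_)
      exact (dis _ hb.2).mono_right (Finset.subset_insert _ _)
    · rw [del_myJoin hvΔ]
      exact facet_myJoin (fun a ha b hb => (dis b hb).mono_left ha) hfct

theorem vd_myJoin {Δ : Set (Finset V)} (hΔ : IsVertexDecomposable Δ) :
    ∀ Γ : Set (Finset V), IsVertexDecomposable Γ → DClosed Δ → DClosed Γ →
      (∀ a ∈ Δ, ∀ b ∈ Γ, Disjoint a b) → IsVertexDecomposable (myJoin Δ Γ) := by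
  induction hΔ with
  | simplex s =>
    intro Γ hΓ _ dcΓ dis
    exact vd_myJoin_simplex hΓ s dcΓ (fun b hb => dis s (fun _ h => h) b hb)
  | step Δ w hw hdel hlink hfct ihdel ihlink =>
    intro Γ hΓ dcΔ dcΓ dis
    have hwΓ : ∀ b ∈ Γ, w ∉ b := fun b hb h =>
      Finset.disjoint_left.mp (dis {w} hw b hb) (Finset.mem_singleton_self w) h
    rw [myJoin_comm]
    refine .step _ w ⟨∅, vd_empty_mem hΓ, {w}, hw, (Finset.empty_union _).symm⟩ ?_ ?_ ?_
    · rw [del_myJoin hwΓ, myJoin_comm]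
      exact ihdel Γ hΓ (dcΔ.del w) dcΓ (fun a ha b hb => dis a ha.1 b hb)
    · rw [link_myJoin hwΓ, myJoin_comm]
      refine ihlink Γ hΓ (dcΔ.link w) dcΓ (fun a ha b hb => ?_)
      exact (dis _ ha.2 b hb).mono_left (Finset.subset_insert _ _)
    · rw [del_myJoin hwΓ]
      exact facet_myJoin (fun b hb a ha => (dis a ha b hb).symm) hfct

end VDJoin


namespace ClosureOp

variable {E : Type*} [Fintype E] [DecidableEq E] (f : ClosureOp E)

/-- MacLane–Steinitz exchange property. -/
def Exch : Prop :=
  ∀ (A : Finset E) (a b : E), a ∈ f.cl (insert b A) → a ∉ f.cl A →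
    b ∈ f.cl (insert a A)

variable {f}

theorem isFlat_cl (A : Finset E) : f.IsFlat (f.cl A) := f.cl_idem A

theorem isFlat_univ : f.IsFlat (Finset.univ : Finset E) :=
  Finset.Subset.antisymm (Finset.subset_univ _) (f.subset_cl _)

theorem cl_subset_of_subset_flat {A F : Finset E} (hF : f.IsFlat F) (h : A ⊆ F) :
    f.cl A ⊆ F := hF ▸ f.cl_mono h

theorem indep_iff {I : Finset E} :
    f.Indep I ↔ ∀ i ∈ I, i ∉ f.cl (I.erase i) := by
  constructor
  · intro h i hi hmem
    have hsub : I ⊆ f.cl (I.erase i) := by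
      intro j hj
      by_cases hji : j = i
      · exact hji ▸ hmem
      · exact f.subset_cl _ (Finset.mem_erase.mpr ⟨hji, hj⟩)
    have : f.cl I ⊆ f.cl (I.erase i) := by
      have := f.cl_mono hsub
      rwa [f.cl_idem] at this
    exact absurd this (h i hi).not_subset
  · intro h i hi
    rw [Finset.ssubset_iff_subset_ne]
    refine ⟨f.cl_mono (Finset.erase_subset _ _), fun hcl => h i hi ?_⟩
    rw [hcl]
    exact f.subset_cl _ hi

theorem Indep.subset {I J : Finset E} (hI : f.Indep I) (hJI : J ⊆ I) : f.Indep J := by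
  rw [indep_iff] at hI ⊢
  intro i hi hmem
  exact hI i (hJI hi) (f.cl_mono (Finset.erase_subset_erase _ hJI) hmem)

theorem indep_insert (hx : Exch f) {I : Finset E} (hI : f.Indep I) {e : E}
    (he : e ∉ f.cl I) : f.Indep (insert e I) := by
  have heI : e ∉ I := fun h => he (f.subset_cl _ h)
  rw [indep_iff] at hI ⊢
  intro j hj
  rcases Finset.mem_insert.mp hj with rfl | hjI
  · rwa [Finset.erase_insert heI]
  · have hji : j ≠ e := fun h => heI (h ▸ hjI)
    rw [Finset.erase_insert_of_ne hji.symm]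
    intro hmem
    have hj' : j ∉ f.cl (I.erase j) := hI j hjI
    have := hx (I.erase j) j e hmem hj'
    rw [Finset.insert_erase hjI] at this
    exact he this

theorem Indep.notMem_cl {I : Finset E} {e : E} (hI : f.Indep (insert e I)) (he : e ∉ I) :
    e ∉ f.cl I := by
  rw [indep_iff] at hI
  have := hI e (Finset.mem_insert_self _ _)
  rwa [Finset.erase_insert he] at this

/-- Covering property: there is no flat strictly between a flat `b` and
`f.cl (insert x b)`. -/
theorem flat_between (hx : Exch f) {b G : Finset E} (x : E) (hb : f.IsFlat b)
    (hG : f.IsFlat G) (hbG : b ⊆ G) (hGm : G ⊆ f.cl (insert x b))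
    (hne : G ≠ f.cl (insert x b)) : G = b := by
  by_contra hne2
  obtain ⟨g, hgG, hgb⟩ := Finset.exists_of_ssubset (lt_of_le_of_ne hbG (Ne.symm hne2))
  have hg1 : g ∈ f.cl (insert x b) := hGm hgG
  have hg2 : g ∉ f.cl b := by rw [hb]; exact hgb
  have hxg : x ∈ f.cl (insert g b) := hx b g x hg1 hg2
  have hxG : x ∈ G := by
    have : f.cl (insert g b) ⊆ G :=
      cl_subset_of_subset_flat hG (Finset.insert_subset hgG hbG)
    exact this hxg
  have : f.cl (insert x b) ⊆ G :=
    cl_subset_of_subset_flat hG (Finset.insert_subset hxG hbG)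
  exact hne (Finset.Subset.antisymm hGm this)

end ClosureOp


section ChainsComplex

set_option linter.unusedSectionVars false

variable {E : Type*} [Fintype E] [DecidableEq E]

/-- Complex of chains of flats (or arbitrary finsets) satisfying `P`, realized on the
vertex type `E ⊕ Finset E` (using only `Sum.inr` vertices). -/
def chainsOf (P : Finset E → Prop) : Set (Finset (E ⊕ Finset E)) :=
  {s | (∀ v ∈ s, ∃ G, v = Sum.inr G ∧ P G) ∧
    ∀ ⦃G H : Finset E⦄, Sum.inr G ∈ s → Sum.inr H ∈ s → G ⊆ H ∨ H ⊆ G}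

theorem dClosed_chainsOf (P : Finset E → Prop) : DClosed (chainsOf P) :=
  fun s hs t ht => ⟨fun v hv => hs.1 v (ht hv), fun _ _ h1 h2 => hs.2 (ht h1) (ht h2)⟩

theorem chainsOf_congr {P Q : Finset E → Prop} (h : ∀ G, P G ↔ Q G) :
    chainsOf P = chainsOf Q := by
  ext s
  exact ⟨fun hs => ⟨fun v hv => by
      obtain ⟨G, rfl, hPG⟩ := hs.1 v hv; exact ⟨G, rfl, (h G).mp hPG⟩, hs.2⟩,
    fun hs => ⟨fun v hv => by
      obtain ⟨G, rfl, hPG⟩ := hs.1 v hv; exact ⟨G, rfl, (h G).mpr hPG⟩, hs.2⟩⟩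

theorem singleton_mem_chainsOf {P : Finset E → Prop} {F : Finset E} (hF : P F) :
    ({Sum.inr F} : Finset (E ⊕ Finset E)) ∈ chainsOf P := by
  constructor
  · intro v hv
    rw [Finset.mem_singleton] at hv
    exact ⟨F, hv, hF⟩
  · intro G H hG hH
    rw [Finset.mem_singleton, Sum.inr.injEq] at hG hH
    exact Or.inl (hG ▸ hH ▸ Finset.Subset.refl _)

theorem chainsOf_empty_pred {P : Finset E → Prop} (h : ∀ G, ¬ P G) :
    chainsOf P = {t : Finset (E ⊕ Finset E) | t ⊆ ∅} := by
  ext s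
  constructor
  · intro hs
    intro v hv
    obtain ⟨G, rfl, hPG⟩ := hs.1 v hv
    exact absurd hPG (h G)
  · intro hs
    have : s = ∅ := Finset.subset_empty.mp hs
    subst this
    exact ⟨fun v hv => absurd hv (Finset.notMem_empty v), fun G H hG _ => by
      exact absurd hG (Finset.notMem_empty _)⟩

theorem faceDeletion_chainsOf (P : Finset E → Prop) (F : Finset E) :
    faceDeletion (chainsOf P) (Sum.inr F) = chainsOf (fun G => P G ∧ G ≠ F) := by
  ext s
  constructor
  · rintro ⟨⟨hmem, hcomp⟩, hFs⟩
    refine ⟨fun v hv => ?_, hcomp⟩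
    obtain ⟨G, rfl, hPG⟩ := hmem v hv
    exact ⟨G, rfl, hPG, fun h => hFs (h ▸ hv)⟩
  · rintro ⟨hmem, hcomp⟩
    refine ⟨⟨fun v hv => ?_, hcomp⟩, fun hFs => ?_⟩
    · obtain ⟨G, rfl, hPG⟩ := hmem v hv
      exact ⟨G, rfl, hPG.1⟩
    · obtain ⟨G, hGe, hPG⟩ := hmem _ hFs
      rw [Sum.inr.injEq] at hGe
      exact hPG.2 hGe.symm

/-- Cone decomposition of a chain complex whose bottom element is `b`. -/
theorem chainsOf_eq_cone {P Q : Finset E → Prop} {b : Finset E}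
    (hPQ : ∀ G, P G ↔ (G = b ∨ Q G)) (hQb : ¬ Q b) (hcomp : ∀ G, Q G → b ⊆ G) :
    chainsOf P = myJoin {t : Finset (E ⊕ Finset E) | t ⊆ {Sum.inr b}} (chainsOf Q) := by
  ext s
  constructor
  · rintro ⟨hmem, hcompS⟩
    classical
    refine ⟨s.filter (fun v => v = Sum.inr b), ?_, s.filter (fun v => v ≠ Sum.inr b),
      ⟨fun v hv => ?_, fun G H hG hH => hcompS (Finset.mem_filter.mp hG).1
        (Finset.mem_filter.mp hH).1⟩, ?_⟩
    · intro v hv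
      rw [Finset.mem_singleton]
      exact (Finset.mem_filter.mp hv).2
    · obtain ⟨hvs, hvne⟩ := Finset.mem_filter.mp hv
      obtain ⟨G, rfl, hPG⟩ := hmem v hvs
      rcases (hPQ G).mp hPG with rfl | hQG
      · exact absurd rfl hvne
      · exact ⟨G, rfl, hQG⟩
    · rw [Finset.filter_union_filter_not_eq]
  · rintro ⟨a, ha, c, ⟨hmem, hcompC⟩, rfl⟩
    constructor
    · intro v hv
      rcases Finset.mem_union.mp hv with h | h
      · have := ha h
        rw [Finset.mem_singleton] at this
        exact ⟨b, this, (hPQ b).mpr (Or.inl rfl)⟩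
      · obtain ⟨G, rfl, hQG⟩ := hmem v h
        exact ⟨G, rfl, (hPQ G).mpr (Or.inr hQG)⟩
    · intro G H hG hH
      have key : ∀ K, Sum.inr K ∈ a ∪ c → K = b ∨ Q K := by
        intro K hK
        rcases Finset.mem_union.mp hK with h | h
        · have := ha h
          rw [Finset.mem_singleton, Sum.inr.injEq] at this
          exact Or.inl this
        · obtain ⟨G', hGe, hQ⟩ := hmem _ h
          rw [Sum.inr.injEq] at hGe
          exact Or.inr (hGe ▸ hQ)
      have hGin : Sum.inr G ∈ c ∨ G = b := by
        rcases Finset.mem_union.mp hG with h | h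
        · have := ha h; rw [Finset.mem_singleton, Sum.inr.injEq] at this
          exact Or.inr this
        · exact Or.inl h
      have hHin : Sum.inr H ∈ c ∨ H = b := by
        rcases Finset.mem_union.mp hH with h | h
        · have := ha h; rw [Finset.mem_singleton, Sum.inr.injEq] at this
          exact Or.inr this
        · exact Or.inl h
      rcases hGin with hGc | rfl
      · rcases hHin with hHc | rfl
        · exact hcompC hGc hHc
        · obtain ⟨G', hGe, hQ⟩ := hmem _ hGc
          rw [Sum.inr.injEq] at hGe
          exact Or.inr (hcomp G (hGe ▸ hQ))
      · rcases hHin with hHc | rfl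
        · obtain ⟨H', hHe, hQ⟩ := hmem _ hHc
          rw [Sum.inr.injEq] at hHe
          exact Or.inl (hcomp H (hHe ▸ hQ))
        · exact Or.inl (Finset.Subset.refl _)

end ChainsComplex


namespace ClosureOp

set_option linter.unusedSectionVars false
set_option maxHeartbeats 1000000

variable {E : Type*} [Fintype E] [DecidableEq E] (f : ClosureOp E)

/-- Flats allowed at a given stage of the decomposition of the interval `(b, B)`:
flats strictly between `b` and `B` that either contain `e`, or have cardinality less
than `c`, or have cardinality exactly `c` but have not yet been deleted (`∉ Y`). -/
def Allowed (b B : Finset E) (e : E) (c : ℕ) (Y : Finset (Finset E)) (G : Finset E) :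
    Prop :=
  f.IsFlat G ∧ b ⊂ G ∧ G ⊂ B ∧ (e ∈ G ∨ G.card < c ∨ (G.card = c ∧ G ∉ Y))

/-- The partially decomposed interval complex. -/
def gam (b B : Finset E) (e : E) (c : ℕ) (Y : Finset (Finset E)) :
    Set (Finset (E ⊕ Finset E)) :=
  chainsOf (f.Allowed b B e c Y)

/-- Chains in the open interval of flats `(b, B)`. -/
def ioo (b B : Finset E) : Set (Finset (E ⊕ Finset E)) :=
  chainsOf (fun G => f.IsFlat G ∧ b ⊂ G ∧ G ⊂ B)

/-- Chains in the half-open interval of flats `[b, B)`. -/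
def icc (b B : Finset E) : Set (Finset (E ⊕ Finset E)) :=
  chainsOf (fun G => f.IsFlat G ∧ b ⊆ G ∧ G ⊂ B)

variable {f}

theorem ioo_eq_gam {b B : Finset E} (e : E) :
    f.ioo b B = f.gam b B e (Fintype.card E) ∅ := by
  refine chainsOf_congr (fun G => ?_)
  unfold Allowed
  constructor
  · rintro ⟨h1, h2, h3⟩
    refine ⟨h1, h2, h3, Or.inr (Or.inl ?_)⟩
    have hGu : G ⊂ Finset.univ :=
      lt_of_lt_of_le h3 (Finset.subset_univ B)
    have := Finset.card_lt_card hGu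
    rwa [Finset.card_univ] at this
  · rintro ⟨h1, h2, h3, _⟩
    exact ⟨h1, h2, h3⟩

theorem gam_zero {b B : Finset E} {e : E} (hb : f.IsFlat b) (heb : e ∉ b)
    (Y : Finset (Finset E)) :
    f.gam b B e 0 Y = f.icc (f.cl (insert e b)) B := by
  refine chainsOf_congr (fun G => ?_)
  unfold Allowed
  constructor
  · rintro ⟨h1, h2, h3, h4⟩
    have heG : e ∈ G := by
      rcases h4 with h | h | ⟨h, _⟩
      · exact h
      · omega
      · exfalso
        rw [Finset.card_eq_zero] at h
        subst h
        exact Finset.not_ssubset_empty b h2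
    refine ⟨h1, ?_, h3⟩
    exact cl_subset_of_subset_flat h1 (Finset.insert_subset heG h2.subset)
  · rintro ⟨h1, h2, h3⟩
    have hsub : insert e b ⊆ G := (f.subset_cl _).trans h2
    have heG : e ∈ G := hsub (Finset.mem_insert_self _ _)
    have hbG : b ⊆ G := (Finset.subset_insert _ _).trans hsub
    refine ⟨h1, ⟨hbG, fun hGb => heb (hGb heG)⟩, h3, Or.inl heG⟩

theorem gam_succ_stall {b B : Finset E} {e : E} {c : ℕ} {Y : Finset (Finset E)}
    (hempty : ∀ G, f.IsFlat G → b ⊂ G → G ⊂ B → e ∉ G → G.card = c + 1 → G ∈ Y) :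
    f.gam b B e (c + 1) Y = f.gam b B e c ∅ := by
  refine chainsOf_congr (fun G => ?_)
  unfold Allowed
  constructor
  · rintro ⟨h1, h2, h3, h4⟩
    refine ⟨h1, h2, h3, ?_⟩
    rcases h4 with h | h | ⟨hc, hY⟩
    · exact Or.inl h
    · by_cases hGc : G.card < c
      · exact Or.inr (Or.inl hGc)
      · exact Or.inr (Or.inr ⟨by omega, Finset.notMem_empty _⟩)
    · by_cases heG : e ∈ G
      · exact Or.inl heG
      · exact absurd (hempty G h1 h2 h3 heG hc) hY
  · rintro ⟨h1, h2, h3, h4⟩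
    refine ⟨h1, h2, h3, ?_⟩
    rcases h4 with h | h | ⟨hc, _⟩
    · exact Or.inl h
    · exact Or.inr (Or.inl (by omega))
    · exact Or.inr (Or.inl (by omega))

theorem gam_delete {b B : Finset E} {e : E} {c : ℕ} {Y : Finset (Finset E)}
    {F : Finset E} (hF : f.IsFlat F) (heF : e ∉ F) (hcF : F.card = c) (hFY : F ∉ Y)
    (hbF : b ⊂ F) (hFB : F ⊂ B) :
    faceDeletion (f.gam b B e c Y) (Sum.inr F) = f.gam b B e c (insert F Y) := by
  rw [gam, faceDeletion_chainsOf]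
  refine chainsOf_congr (fun G => ?_)
  unfold Allowed
  constructor
  · rintro ⟨⟨h1, h2, h3, h4⟩, hne⟩
    refine ⟨h1, h2, h3, ?_⟩
    rcases h4 with h | h | ⟨hc, hY⟩
    · exact Or.inl h
    · exact Or.inr (Or.inl h)
    · refine Or.inr (Or.inr ⟨hc, fun hmem => ?_⟩)
      rcases Finset.mem_insert.mp hmem with h | h
      · exact hne h
      · exact hY h
  · rintro ⟨h1, h2, h3, h4⟩
    have hne : G ≠ F := by
      rintro rfl
      rcases h4 with h | h | ⟨_, hY'⟩
      · exact heF h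
      · omega
      · exact hY' (Finset.mem_insert_self _ _)
    refine ⟨⟨h1, h2, h3, ?_⟩, hne⟩
    rcases h4 with h | h | ⟨hc, hY'⟩
    · exact Or.inl h
    · exact Or.inr (Or.inl h)
    · exact Or.inr (Or.inr ⟨hc, fun h => hY' (Finset.mem_insert_of_mem h)⟩)

end ClosureOp


namespace ClosureOp

set_option linter.unusedSectionVars false
set_option linter.unusedVariables false
set_option maxHeartbeats 1000000

variable {E : Type*} [Fintype E] [DecidableEq E] {f : ClosureOp E}
variable {b B F : Finset E} {e : E} {c : ℕ} {Y : Finset (Finset E)}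

theorem gam_link (hF : f.IsFlat F) (hbF : b ⊂ F) (hFB : F ⊂ B) (heF : e ∉ F)
    (hcF : F.card = c) (hFY : F ∉ Y) :
    faceLink (f.gam b B e c Y) (Sum.inr F)
      = myJoin (f.ioo b F) (f.icc (f.cl (insert e F)) B) := by
  have hFm : F ⊆ f.cl (insert e F) := (Finset.subset_insert _ _).trans (f.subset_cl _)
  have hem : e ∈ f.cl (insert e F) := f.subset_cl _ (Finset.mem_insert_self _ _)
  ext s
  constructor
  · rintro ⟨hFs, hins⟩
    have hmemS : ∀ v ∈ s, ∃ G, v = Sum.inr G ∧ f.Allowed b B e c Y G :=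
      fun v hv => hins.1 v (Finset.mem_insert_of_mem hv)
    have hcompS : ∀ ⦃G H : Finset E⦄, Sum.inr G ∈ s → Sum.inr H ∈ s →
        G ⊆ H ∨ H ⊆ G := fun G H h1 h2 =>
      hins.2 (Finset.mem_insert_of_mem h1) (Finset.mem_insert_of_mem h2)
    have hcompF : ∀ G, Sum.inr G ∈ s → G ⊆ F ∨ F ⊆ G := fun G h =>
      hins.2 (Finset.mem_insert_of_mem h) (Finset.mem_insert_self _ _)
    classical
    refine ⟨s.filter (fun v => ∃ G, v = Sum.inr G ∧ G ⊂ F), ⟨?_, ?_⟩,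
      s.filter (fun v => ¬ ∃ G, v = Sum.inr G ∧ G ⊂ F), ⟨?_, ?_⟩,
      (Finset.filter_union_filter_not_eq _ s).symm⟩
    · intro v hv
      obtain ⟨hvs, G', hEq, hlt⟩ := Finset.mem_filter.mp hv
      obtain ⟨G, rfl, hAll⟩ := hmemS v hvs
      rw [Sum.inr.injEq] at hEq
      subst hEq
      exact ⟨G, rfl, hAll.1, hAll.2.1, hlt⟩
    · intro G H h1 h2
      exact hcompS (Finset.mem_filter.mp h1).1 (Finset.mem_filter.mp h2).1
    · intro v hv
      obtain ⟨hvs, hnot⟩ := Finset.mem_filter.mp hv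
      obtain ⟨G, rfl, hAll⟩ := hmemS v hvs
      have hnotlt : ¬ G ⊂ F := fun h => hnot ⟨G, rfl, h⟩
      have hne : G ≠ F := fun h => hFs (h ▸ hvs)
      have hFG : F ⊂ G := by
        rcases hcompF G hvs with h | h
        · exact absurd (lt_of_le_of_ne h hne) hnotlt
        · exact lt_of_le_of_ne h hne.symm
      have heG : e ∈ G := by
        have hcard := Finset.card_lt_card hFG
        rcases hAll.2.2.2 with h | h | ⟨h, _⟩
        · exact h
        · omega
        · omega
      exact ⟨G, rfl, hAll.1,
        cl_subset_of_subset_flat hAll.1 (Finset.insert_subset heG hFG.subset),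
        hAll.2.2.1⟩
    · intro G H h1 h2
      exact hcompS (Finset.mem_filter.mp h1).1 (Finset.mem_filter.mp h2).1
  · rintro ⟨a, ⟨haM, haC⟩, w, ⟨hwM, hwC⟩, rfl⟩
    have cls : ∀ K, Sum.inr K ∈ insert (Sum.inr F) (a ∪ w) →
        K = F ∨ (Sum.inr K ∈ a ∧ K ⊆ F) ∨ (Sum.inr K ∈ w ∧ f.cl (insert e F) ⊆ K) := by
      intro K hK
      rcases Finset.mem_insert.mp hK with h | h
      · rw [Sum.inr.injEq] at h
        exact Or.inl h
      · rcases Finset.mem_union.mp h with h' | h'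
        · obtain ⟨G, hEq, _, _, hlt⟩ := haM _ h'
          rw [Sum.inr.injEq] at hEq
          subst hEq
          exact Or.inr (Or.inl ⟨h', hlt.subset⟩)
        · obtain ⟨G, hEq, _, hm, _⟩ := hwM _ h'
          rw [Sum.inr.injEq] at hEq
          subst hEq
          exact Or.inr (Or.inr ⟨h', hm⟩)
    constructor
    · intro h
      rcases Finset.mem_union.mp h with h' | h'
      · obtain ⟨G, hEq, _, _, hlt⟩ := haM _ h'
        rw [Sum.inr.injEq] at hEq
        exact absurd (hEq ▸ hlt) (lt_irrefl F)
      · obtain ⟨G, hEq, _, hm, _⟩ := hwM _ h'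
        rw [Sum.inr.injEq] at hEq
        subst hEq
        exact heF (hm hem)
    · constructor
      · intro v hv
        rcases Finset.mem_insert.mp hv with rfl | hvs
        · exact ⟨F, rfl, hF, hbF, hFB, Or.inr (Or.inr ⟨hcF, hFY⟩)⟩
        · rcases Finset.mem_union.mp hvs with h' | h'
          · obtain ⟨G, rfl, hGf, hbG, hGF⟩ := haM _ h'
            refine ⟨G, rfl, hGf, hbG, hGF.trans hFB, Or.inr (Or.inl ?_)⟩
            have := Finset.card_lt_card hGF
            omega
          · obtain ⟨G, rfl, hGf, hmG, hGB⟩ := hwM _ h'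
            exact ⟨G, rfl, hGf, lt_of_lt_of_le hbF (hFm.trans hmG), hGB,
              Or.inl (hmG hem)⟩
      · intro G H hG hH
        rcases cls G hG with rfl | ⟨hGa, hGF⟩ | ⟨hGw, hGm⟩ <;>
          rcases cls H hH with rfl | ⟨hHa, hHF⟩ | ⟨hHw, hHm⟩
        · exact Or.inl (Finset.Subset.refl _)
        · exact Or.inr hHF
        · exact Or.inl (hFm.trans hHm)
        · exact Or.inl hGF
        · exact haC hGa hHa
        · exact Or.inl (hGF.trans (hFm.trans hHm))
        · exact Or.inr (hFm.trans hGm)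
        · exact Or.inr (hHF.trans (hFm.trans hGm))
        · exact hwC hGw hHw

theorem gam_facet (hx : f.Exch) (hb : f.IsFlat b) (hB : f.IsFlat B) (heB : e ∈ B)
    (heb : e ∉ b) (hF : f.IsFlat F) (hbF : b ⊂ F) (hFB : F ⊂ B) (heF : e ∉ F)
    (hcF : F.card = c) (hFY : F ∉ Y) :
    ∀ s, IsFacet (f.gam b B e c (insert F Y)) s → IsFacet (f.gam b B e c Y) s := by
  rintro s ⟨hs, hmax⟩
  have hdel := gam_delete (f := f) (b := b) (B := B) (e := e) (c := c) (Y := Y)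
    hF heF hcF hFY hbF hFB
  have hsY : s ∈ f.gam b B e c Y ∧ Sum.inr F ∉ s := by
    rw [← hdel] at hs
    exact ⟨hs.1, hs.2⟩
  refine ⟨hsY.1, ?_⟩
  intro t ht hst
  by_cases hFt : Sum.inr F ∈ t
  case neg =>
    exact hmax t (by rw [← hdel]; exact ⟨ht, hFt⟩) hst
  exfalso
  obtain ⟨hsmem, hscomp⟩ := hsY.1
  have hcompF : ∀ G, Sum.inr G ∈ s → G ⊂ F ∨ F ⊂ G := by
    intro G hGs
    have hne : G ≠ F := fun h => hsY.2 (h ▸ hGs)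
    rcases ht.2 (hst hGs) hFt with h | h
    · exact Or.inl (lt_of_le_of_ne h hne)
    · exact Or.inr (lt_of_le_of_ne h hne.symm)
  obtain ⟨G₁, hG₁flat, hbG₁, hG₁F, hG₁max⟩ :
      ∃ G₁, f.IsFlat G₁ ∧ b ⊆ G₁ ∧ G₁ ⊂ F ∧
        ∀ H, Sum.inr H ∈ s → H ⊂ F → H ⊆ G₁ := by
    classical
    set sL := (Finset.univ.filter (fun G : Finset E => Sum.inr G ∈ s ∧ G ⊂ F))
      with hsLdef
    by_cases hne : sL.Nonempty
    · obtain ⟨G₁, hmem1, hmax1⟩ := Finset.exists_max_image sL Finset.card hne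
      rw [hsLdef, Finset.mem_filter] at hmem1
      obtain ⟨-, hG₁s, hG₁F⟩ := hmem1
      obtain ⟨G', hEq, hAll⟩ := hsmem _ hG₁s
      rw [Sum.inr.injEq] at hEq
      subst hEq
      refine ⟨G₁, hAll.1, hAll.2.1.subset, hG₁F, ?_⟩
      intro H hHs hHF
      have hcard : H.card ≤ G₁.card := hmax1 H (by
        rw [hsLdef, Finset.mem_filter]
        exact ⟨Finset.mem_univ _, hHs, hHF⟩)
      rcases hscomp hHs hG₁s with h | h
      · exact h
      · exact (Finset.eq_of_subset_of_card_le h hcard) ▸ Finset.Subset.refl _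
    · refine ⟨b, hb, Finset.Subset.refl _, hbF, fun H hHs hHF => ?_⟩
      exact absurd ⟨H, by
        rw [hsLdef, Finset.mem_filter]
        exact ⟨Finset.mem_univ _, hHs, hHF⟩⟩ hne
  set m := f.cl (insert e G₁) with hmdef
  have hG₁m : G₁ ⊆ m := (Finset.subset_insert _ _).trans (f.subset_cl _)
  have hem : e ∈ m := f.subset_cl _ (Finset.mem_insert_self _ _)
  have hFm : ¬ F ⊆ m := by
    intro hsub
    have hne : F ≠ m := fun h => heF (h ▸ hem)
    exact hG₁F.ne' (flat_between hx e hG₁flat hF hG₁F.subset hsub hne)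
  have hmB : m ⊆ B :=
    cl_subset_of_subset_flat hB
      (Finset.insert_subset heB (hG₁F.subset.trans hFB.subset))
  have hmBs : m ⊂ B := lt_of_le_of_ne hmB (fun h => hFm (h ▸ hFB.subset))
  have hbm : b ⊂ m :=
    lt_of_le_of_ne (hbG₁.trans hG₁m) (fun h => heb (h ▸ hem))
  have hms : Sum.inr m ∉ s := by
    intro hmem
    rcases hcompF m hmem with h | h
    · exact heF (h.subset hem)
    · exact hFm h.subset
  have hmcomp : ∀ H, Sum.inr H ∈ s → m ⊆ H ∨ H ⊆ m := by
    intro H hHs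
    rcases hcompF H hHs with h | h
    · exact Or.inr ((hG₁max H hHs h).trans hG₁m)
    · obtain ⟨H', hEq, hAll⟩ := hsmem _ hHs
      rw [Sum.inr.injEq] at hEq
      subst hEq
      have heH : e ∈ H := by
        have hcard := Finset.card_lt_card h
        rcases hAll.2.2.2 with h1 | h1 | ⟨h1, _⟩
        · exact h1
        · omega
        · omega
      exact Or.inl (cl_subset_of_subset_flat hAll.1
        (Finset.insert_subset heH (hG₁F.subset.trans h.subset)))
  have hins : insert (Sum.inr m) s ∈ f.gam b B e c (insert F Y) := by
    refine ⟨fun v hv => ?_, fun G H hG hH => ?_⟩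
    · rcases Finset.mem_insert.mp hv with rfl | hvs
      · exact ⟨m, rfl, isFlat_cl _, hbm, hmBs, Or.inl hem⟩
      · exact hs.1 v hvs
    · have cls : ∀ K, Sum.inr K ∈ insert (Sum.inr m) s → K = m ∨ Sum.inr K ∈ s := by
        intro K hK
        rcases Finset.mem_insert.mp hK with h | h
        · rw [Sum.inr.injEq] at h
          exact Or.inl h
        · exact Or.inr h
      rcases cls G hG with rfl | hGs <;> rcases cls H hH with rfl | hHs
      · exact Or.inl (Finset.Subset.refl _)
      · exact (hmcomp H hHs).imp id id
      · exact (hmcomp G hGs).symm.imp id id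
      · exact hscomp hGs hHs
  have := hmax _ hins (Finset.subset_insert _ _)
  exact hms (this ▸ Finset.mem_insert_self _ _)

end ClosureOp


namespace ClosureOp

set_option linter.unusedSectionVars false
set_option linter.unusedVariables false
set_option maxHeartbeats 1000000

variable {E : Type*} [Fintype E] [DecidableEq E] {f : ClosureOp E}

instance instDecIsFlat (f : ClosureOp E) : DecidablePred f.IsFlat := fun G =>
  decidable_of_iff (f.cl G = G) Iff.rfl

/-- Induction predicate: all partial interval complexes over intervals of size at
most `n` are vertex decomposable. -/
def P3 (f : ClosureOp E) (n : ℕ) : Prop :=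
  ∀ b B e (c : ℕ) (Y : Finset (Finset E)), f.IsFlat b → f.IsFlat B → b ⊂ B →
    e ∈ B → e ∉ b → (B \ b).card ≤ n → IsVertexDecomposable (f.gam b B e c Y)

theorem vdIoo {n : ℕ} (h : P3 f n) {b B : Finset E} (hb : f.IsFlat b)
    (hB : f.IsFlat B) (hsub : b ⊆ B) (hm : (B \ b).card ≤ n) :
    IsVertexDecomposable (f.ioo b B) := by
  by_cases hne : b = B
  · subst hne
    have he : f.ioo b b = {t : Finset (E ⊕ Finset E) | t ⊆ ∅} := by
      refine chainsOf_empty_pred (fun G hG => ?_)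
      exact absurd (hG.2.1.trans hG.2.2) (lt_irrefl b)
    rw [he]
    exact .simplex ∅
  · have hbB : b ⊂ B := lt_of_le_of_ne hsub hne
    obtain ⟨e, heB, heb⟩ := Finset.exists_of_ssubset hbB
    rw [ioo_eq_gam e]
    exact h b B e _ _ hb hB hbB heB heb hm

theorem vdIcc {n : ℕ} (h : P3 f n) {b B : Finset E} (hb : f.IsFlat b)
    (hB : f.IsFlat B) (hsub : b ⊆ B) (hm : (B \ b).card ≤ n) :
    IsVertexDecomposable (f.icc b B) := by
  by_cases hne : b = B
  · subst hne
    have he : f.icc b b = {t : Finset (E ⊕ Finset E) | t ⊆ ∅} := by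
      refine chainsOf_empty_pred (fun G hG => ?_)
      exact absurd (lt_of_lt_of_le hG.2.2 hG.2.1) (lt_irrefl G)
    rw [he]
    exact .simplex ∅
  · have hbB : b ⊂ B := lt_of_le_of_ne hsub hne
    have hcone : f.icc b B
        = myJoin {t : Finset (E ⊕ Finset E) | t ⊆ {Sum.inr b}}
            (f.ioo b B) := by
      refine chainsOf_eq_cone (fun G => ?_) (fun hQ => absurd hQ.2.1 (lt_irrefl b))
        (fun G hQ => hQ.2.1.subset)
      constructor
      · rintro ⟨h1, h2, h3⟩
        by_cases hGb : G = b
        · exact Or.inl hGb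
        · exact Or.inr ⟨h1, lt_of_le_of_ne h2 (Ne.symm hGb), h3⟩
      · rintro (rfl | ⟨h1, h2, h3⟩)
        · exact ⟨hb, Finset.Subset.refl _, hbB⟩
        · exact ⟨h1, h2.subset, h3⟩
    rw [hcone]
    refine vd_myJoin (.simplex _) _ (vdIoo h hb hB hsub hm)
      (fun s hs t ht => ht.trans hs) (dClosed_chainsOf _) ?_
    intro a ha w hw
    rw [Finset.disjoint_left]
    intro x hxa hxw
    have hxb : x = Sum.inr b := by
      have := ha hxa
      rwa [Finset.mem_singleton] at this
    obtain ⟨G, hEq, _, hlt, _⟩ := hw.1 x hxw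
    rw [hxb, Sum.inr.injEq] at hEq
    exact absurd (hEq ▸ hlt) (lt_irrefl b)

theorem p3_all (hx : f.Exch) : ∀ n, P3 f n := by
  intro n
  induction n using Nat.strong_induction_on with
  | _ n ihn =>
  intro b B e c Y hb hB hbB heB heb hn
  have hpos : 0 < (B \ b).card := by
    obtain ⟨x, hxB, hxb⟩ := Finset.exists_of_ssubset hbB
    exact Finset.card_pos.mpr ⟨x, Finset.mem_sdiff.mpr ⟨hxB, hxb⟩⟩
  obtain ⟨m, rfl⟩ : ∃ m, n = m + 1 := ⟨n - 1, by omega⟩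
  have hPm : P3 f m := ihn m (Nat.lt_succ_self m)
  have hkey : ∀ b' : Finset E, b ⊆ b' → b' ⊆ B → e ∈ b' → (B \ b').card ≤ m := by
    intro b' h1 h2 h3
    have hsub : B \ b' ⊆ B \ b := Finset.sdiff_subset_sdiff (Finset.Subset.refl B) h1
    have hlt : (B \ b').card < (B \ b).card := by
      refine Finset.card_lt_card ⟨hsub, fun hcon => ?_⟩
      have := hcon (Finset.mem_sdiff.mpr ⟨heB, heb⟩)
      exact (Finset.mem_sdiff.mp this).2 h3
    omega
  have hkey2 : ∀ B' : Finset E, B' ⊆ B → e ∉ B' → (B' \ b).card ≤ m := by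
    intro B' h1 h2
    have hsub : B' \ b ⊆ B \ b := Finset.sdiff_subset_sdiff h1 (Finset.Subset.refl b)
    have hlt : (B' \ b).card < (B \ b).card := by
      refine Finset.card_lt_card ⟨hsub, fun hcon => ?_⟩
      have := hcon (Finset.mem_sdiff.mpr ⟨heB, heb⟩)
      exact h2 (Finset.mem_sdiff.mp this).1
    omega
  induction c generalizing Y with
  | zero =>
    rw [gam_zero hb heb Y]
    have hclB : f.cl (insert e b) ⊆ B :=
      cl_subset_of_subset_flat hB (Finset.insert_subset heB hbB.subset)
    refine vdIcc hPm (isFlat_cl _) hB hclB ?_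
    exact hkey _ ((Finset.subset_insert _ _).trans (f.subset_cl _)) hclB
      (f.subset_cl _ (Finset.mem_insert_self _ _))
  | succ c ihc =>
    have key : ∀ (k : ℕ) (Y' : Finset (Finset E)),
        (Finset.univ.filter (fun G : Finset E => f.IsFlat G ∧ b ⊂ G ∧ G ⊂ B ∧
          e ∉ G ∧ G.card = c + 1 ∧ G ∉ Y')).card ≤ k →
        IsVertexDecomposable (f.gam b B e (c + 1) Y') := by
      intro k
      induction k with
      | zero =>
        intro Y' hk
        have hempty : ∀ G, f.IsFlat G → b ⊂ G → G ⊂ B → e ∉ G → G.card = c + 1 →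
            G ∈ Y' := by
          intro G h1 h2 h3 h4 h5
          by_contra h6
          have hmem : G ∈ Finset.univ.filter (fun G : Finset E => f.IsFlat G ∧
              b ⊂ G ∧ G ⊂ B ∧ e ∉ G ∧ G.card = c + 1 ∧ G ∉ Y') :=
            Finset.mem_filter.mpr ⟨Finset.mem_univ _, h1, h2, h3, h4, h5, h6⟩
          have := Finset.card_pos.mpr ⟨G, hmem⟩
          omega
        rw [gam_succ_stall hempty]
        exact ihc ∅
      | succ k ihk =>
        intro Y' hk
        by_cases hne : (Finset.univ.filter (fun G : Finset E => f.IsFlat G ∧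
            b ⊂ G ∧ G ⊂ B ∧ e ∉ G ∧ G.card = c + 1 ∧ G ∉ Y')).Nonempty
        case neg =>
          have hempty : ∀ G, f.IsFlat G → b ⊂ G → G ⊂ B → e ∉ G → G.card = c + 1 →
              G ∈ Y' := by
            intro G h1 h2 h3 h4 h5
            by_contra h6
            exact hne ⟨G, Finset.mem_filter.mpr
              ⟨Finset.mem_univ _, h1, h2, h3, h4, h5, h6⟩⟩
          rw [gam_succ_stall hempty]
          exact ihc ∅
        obtain ⟨F, hFmem⟩ := hne
        rw [Finset.mem_filter] at hFmem
        obtain ⟨-, hFflat, hbF, hFB, heF, hcF, hFY⟩ := hFmem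
        refine .step _ (Sum.inr F)
          (singleton_mem_chainsOf ⟨hFflat, hbF, hFB, Or.inr (Or.inr ⟨hcF, hFY⟩)⟩)
          ?_ ?_ ?_
        · rw [gam_delete hFflat heF hcF hFY hbF hFB]
          refine ihk (insert F Y') ?_
          have hsub : (Finset.univ.filter (fun G : Finset E => f.IsFlat G ∧
              b ⊂ G ∧ G ⊂ B ∧ e ∉ G ∧ G.card = c + 1 ∧ G ∉ insert F Y'))
              ⊆ (Finset.univ.filter (fun G : Finset E => f.IsFlat G ∧
              b ⊂ G ∧ G ⊂ B ∧ e ∉ G ∧ G.card = c + 1 ∧ G ∉ Y')).erase F := by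
            intro G hG
            rw [Finset.mem_filter] at hG
            obtain ⟨_, h1, h2, h3, h4, h5, h6⟩ := hG
            refine Finset.mem_erase.mpr ⟨fun h => h6 (h ▸ Finset.mem_insert_self _ _),
              Finset.mem_filter.mpr ⟨Finset.mem_univ _, h1, h2, h3, h4, h5,
                fun h => h6 (Finset.mem_insert_of_mem h)⟩⟩
          have hFold : F ∈ Finset.univ.filter (fun G : Finset E => f.IsFlat G ∧
              b ⊂ G ∧ G ⊂ B ∧ e ∉ G ∧ G.card = c + 1 ∧ G ∉ Y') :=
            Finset.mem_filter.mpr ⟨Finset.mem_univ _, hFflat, hbF, hFB, heF, hcF, hFY⟩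
          have h1 := Finset.card_le_card hsub
          have h2 := Finset.card_erase_of_mem hFold
          omega
        · rw [gam_link hFflat hbF hFB heF hcF hFY]
          refine vd_myJoin
            (vdIoo hPm hb hFflat hbF.subset (hkey2 F hFB.subset heF)) _
            (vdIcc hPm (isFlat_cl _) hB
              (cl_subset_of_subset_flat hB (Finset.insert_subset heB hFB.subset))
              (hkey _ (hbF.subset.trans
                ((Finset.subset_insert _ _).trans (f.subset_cl _)))
                (cl_subset_of_subset_flat hB (Finset.insert_subset heB hFB.subset))
                (f.subset_cl _ (Finset.mem_insert_self _ _))))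
            (dClosed_chainsOf _) (dClosed_chainsOf _) ?_
          intro a ha w hw
          rw [Finset.disjoint_left]
          intro x hxa hxw
          obtain ⟨G, rfl, _, _, hGF⟩ := ha.1 x hxa
          obtain ⟨H, hEq, _, hmH, _⟩ := hw.1 _ hxw
          rw [Sum.inr.injEq] at hEq
          subst hEq
          exact heF (hGF.subset (hmH (f.subset_cl _ (Finset.mem_insert_self _ _))))
        · rw [gam_delete hFflat heF hcF hFY hbF hFB]
          exact gam_facet hx hb hB heB heb hFflat hbF hFB heF hcF hFY
    exact key _ Y le_rfl

end ClosureOp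


namespace ClosureOp

set_option linter.unusedSectionVars false
set_option linter.unusedVariables false
set_option maxHeartbeats 1000000

variable {E : Type*} [Fintype E] [DecidableEq E]

theorem mem_faceIndep {s : Finset (E ⊕ Finset E)} {i : E} :
    i ∈ faceIndep s ↔ Sum.inl i ∈ s := Finset.mem_preimage

theorem mem_faceFlag {s : Finset (E ⊕ Finset E)} {G : Finset E} :
    G ∈ faceFlag s ↔ Sum.inr G ∈ s := Finset.mem_preimage

theorem faceIndep_mono {s t : Finset (E ⊕ Finset E)} (h : s ⊆ t) :
    faceIndep s ⊆ faceIndep t :=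
  fun i hi => mem_faceIndep.mpr (h (mem_faceIndep.mp hi))

theorem faceFlag_mono {s t : Finset (E ⊕ Finset E)} (h : s ⊆ t) :
    faceFlag s ⊆ faceFlag t :=
  fun G hG => mem_faceFlag.mpr (h (mem_faceFlag.mp hG))

theorem faceIndep_insert_inl {s : Finset (E ⊕ Finset E)} {e : E} :
    faceIndep (insert (Sum.inl e) s) = insert e (faceIndep s) := by
  ext i
  simp [mem_faceIndep, Finset.mem_insert]

theorem faceFlag_insert_inl {s : Finset (E ⊕ Finset E)} {e : E} :
    faceFlag (insert (Sum.inl e) s) = faceFlag s := by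
  ext G
  simp [mem_faceFlag, Finset.mem_insert]

theorem faceIndep_insert_inr {s : Finset (E ⊕ Finset E)} {D : Finset E} :
    faceIndep (insert (Sum.inr D) s) = faceIndep s := by
  ext i
  simp [mem_faceIndep, Finset.mem_insert]

theorem faceFlag_insert_inr {s : Finset (E ⊕ Finset E)} {D : Finset E} :
    faceFlag (insert (Sum.inr D) s) = insert D (faceFlag s) := by
  ext G
  simp [mem_faceFlag, Finset.mem_insert]

theorem face_decomp (s : Finset (E ⊕ Finset E)) :
    s = (faceIndep s).image Sum.inl ∪ (faceFlag s).image Sum.inr := by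
  ext v
  cases v with
  | inl i => simp [mem_faceIndep, mem_faceFlag]
  | inr G => simp [mem_faceIndep, mem_faceFlag]

theorem faceIndep_image_union (I : Finset E) (C : Finset (Finset E)) :
    faceIndep (I.image Sum.inl ∪ C.image Sum.inr) = I := by
  ext i
  simp [mem_faceIndep]

theorem faceFlag_image_union (I : Finset E) (C : Finset (Finset E)) :
    faceFlag (I.image Sum.inl ∪ C.image Sum.inr) = C := by
  ext G
  simp [mem_faceFlag]

variable (f : ClosureOp E)

/-- The partially y-deleted augmented Bergman complex: independent-part vertices
restricted to `S`, relative to an already-chosen independent set `K`. -/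
def aug (S K : Finset E) : Set (Finset (E ⊕ Finset E)) :=
  {s | faceIndep s ⊆ S ∧ f.Indep (faceIndep s ∪ K) ∧
    (∀ G ∈ faceFlag s, f.IsProperFlat G ∧ f.cl (faceIndep s ∪ K) ⊆ G) ∧
    (∀ ⦃G H : Finset E⦄, G ∈ faceFlag s → H ∈ faceFlag s → G ⊆ H ∨ H ⊆ G)}

variable {f}

theorem indep_empty : f.Indep ∅ := fun i hi => absurd hi (Finset.notMem_empty i)

theorem dClosed_aug {S K : Finset E} : DClosed (f.aug S K) := by
  intro s hs t ht
  have hI := faceIndep_mono ht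
  have hC := faceFlag_mono ht
  refine ⟨hI.trans hs.1, hs.2.1.subset (Finset.union_subset_union_left hI), ?_, ?_⟩
  · intro G hG
    refine ⟨(hs.2.2.1 G (hC hG)).1, ?_⟩
    exact (f.cl_mono (Finset.union_subset_union_left hI)).trans
      (hs.2.2.1 G (hC hG)).2
  · intro G H hG hH
    exact hs.2.2.2 (hC hG) (hC hH)

theorem singleton_mem_aug {S K : Finset E} {e : E} (heS : e ∈ S)
    (hind : f.Indep (insert e K)) : ({Sum.inl e} : Finset (E ⊕ Finset E)) ∈ f.aug S K := by
  have hI : faceIndep ({Sum.inl e} : Finset (E ⊕ Finset E)) = {e} := by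
    ext i; simp [mem_faceIndep]
  have hC : faceFlag ({Sum.inl e} : Finset (E ⊕ Finset E)) = ∅ := by
    ext G; simp [mem_faceFlag]
  refine ⟨?_, ?_, ?_, ?_⟩
  · rw [hI]; exact Finset.singleton_subset_iff.mpr heS
  · rw [hI, ← Finset.insert_eq]; exact hind
  · rw [hC]; intro G hG; exact absurd hG (Finset.notMem_empty G)
  · rw [hC]; intro G H hG _; exact absurd hG (Finset.notMem_empty G)

theorem aug_del {S K : Finset E} {e : E} :
    faceDeletion (f.aug S K) (Sum.inl e) = f.aug (S.erase e) K := by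
  ext s
  constructor
  · rintro ⟨hs, hes⟩
    refine ⟨Finset.subset_erase.mpr ⟨hs.1, fun h => hes (mem_faceIndep.mp h)⟩,
      hs.2.1, hs.2.2.1, hs.2.2.2⟩
  · intro hs
    refine ⟨⟨hs.1.trans (Finset.erase_subset _ _), hs.2.1, hs.2.2.1, hs.2.2.2⟩, ?_⟩
    intro h
    exact (Finset.subset_erase.mp hs.1).2 (mem_faceIndep.mpr h)

theorem aug_link {S K : Finset E} {e : E} (heS : e ∈ S) (heK : e ∉ K) :
    faceLink (f.aug S K) (Sum.inl e) = f.aug (S.erase e) (insert e K) := by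
  have hrw : ∀ I : Finset E, insert e I ∪ K = I ∪ insert e K := by
    intro I
    rw [Finset.insert_union, Finset.union_insert]
  ext s
  constructor
  · rintro ⟨hes, hins⟩
    have heI : e ∉ faceIndep s := fun h => hes (mem_faceIndep.mp h)
    obtain ⟨h1, h2, h3, h4⟩ := hins
    simp only [faceIndep_insert_inl, faceFlag_insert_inl] at h1 h2 h3 h4
    rw [hrw] at h2
    refine ⟨Finset.subset_erase.mpr ⟨(Finset.subset_insert _ _).trans h1, heI⟩,
      h2, ?_, h4⟩
    intro G hG
    refine ⟨(h3 G hG).1, ?_⟩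
    rw [← hrw]
    exact (h3 G hG).2
  · rintro ⟨h1, h2, h3, h4⟩
    have heI : e ∉ faceIndep s := (Finset.subset_erase.mp h1).2
    refine ⟨fun h => heI (mem_faceIndep.mpr h), ?_, ?_, ?_, ?_⟩
    · simp only [faceIndep_insert_inl]
      exact Finset.insert_subset heS ((Finset.subset_erase.mp h1).1)
    · simp only [faceIndep_insert_inl]
      rw [hrw]; exact h2
    · simp only [faceIndep_insert_inl, faceFlag_insert_inl]
      intro G hG
      refine ⟨(h3 G hG).1, ?_⟩
      rw [hrw]
      exact (h3 G hG).2
    · simp only [faceFlag_insert_inl]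
      exact h4

theorem aug_facet {S K : Finset E} {e : E} (heS : e ∈ S) (heK : e ∉ f.cl K) :
    ∀ s, IsFacet (f.aug (S.erase e) K) s → IsFacet (f.aug S K) s := by
  rintro s ⟨hs, hmax⟩
  refine ⟨⟨(hs.1.trans (Finset.erase_subset _ _)), hs.2.1, hs.2.2.1, hs.2.2.2⟩, ?_⟩
  intro t ht hst
  by_cases het : Sum.inl e ∈ t
  case neg =>
    refine hmax t ⟨Finset.subset_erase.mpr ⟨ht.1, fun h => het (mem_faceIndep.mp h)⟩,
      ht.2.1, ht.2.2.1, ht.2.2.2⟩ hst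
  exfalso
  set I := faceIndep s with hIdef
  set D := f.cl (I ∪ K) with hDdef
  have heI : e ∉ I := (Finset.subset_erase.mp hs.1).2
  have heKm : e ∉ K := fun h => heK (f.subset_cl _ h)
  have heIK : e ∉ I ∪ K := fun h => by
    rcases Finset.mem_union.mp h with h' | h'
    · exact heI h'
    · exact heKm h'
  have hsub : insert e (I ∪ K) ⊆ faceIndep t ∪ K :=
    Finset.insert_subset (Finset.mem_union_left _ (mem_faceIndep.mpr het))
      (Finset.union_subset_union_left (faceIndep_mono hst))
  have hind : f.Indep (insert e (I ∪ K)) := ht.2.1.subset hsub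
  have heD : e ∉ D := hind.notMem_cl heIK
  by_cases hDC : D ∈ faceFlag s
  · have hDCt : D ∈ faceFlag t := faceFlag_mono hst hDC
    have hprop := ht.2.2.1 D hDCt
    exact heD (hprop.2 (f.subset_cl _ (Finset.mem_union_left _ (mem_faceIndep.mpr het))))
  by_cases hDu : D = Finset.univ
  · exact heD (hDu ▸ Finset.mem_univ e)
  have hins : insert (Sum.inr D) s ∈ f.aug (S.erase e) K := by
    refine ⟨?_, ?_, ?_, ?_⟩ <;>
      simp only [faceIndep_insert_inr, faceFlag_insert_inr]
    · exact hs.1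
    · exact hs.2.1
    · intro G hG
      rcases Finset.mem_insert.mp hG with rfl | hG'
      · exact ⟨⟨isFlat_cl _, hDu⟩, Finset.Subset.refl _⟩
      · exact hs.2.2.1 G hG'
    · intro G H hG hH
      rcases Finset.mem_insert.mp hG with rfl | hG' <;>
        rcases Finset.mem_insert.mp hH with rfl | hH'
      · exact Or.inl (Finset.Subset.refl _)
      · exact Or.inl (hs.2.2.1 H hH').2
      · exact Or.inr (hs.2.2.1 G hG').2
      · exact hs.2.2.2 hG' hH'
  have heq := hmax _ hins (Finset.subset_insert _ _)
  have : Sum.inr D ∈ s := by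
    rw [heq]; exact Finset.mem_insert_self _ _
  exact hDC (mem_faceFlag.mpr this)

theorem aug_base_eq {S K : Finset E} (hS : ∀ x ∈ S, x ∈ f.cl K) (hK : f.Indep K) :
    f.aug S K = myJoin {t : Finset (E ⊕ Finset E) | t ⊆ (S ∩ K).image Sum.inl}
      (f.icc (f.cl K) Finset.univ) := by
  ext s
  constructor
  · rintro ⟨h1, h2, h3, h4⟩
    have hIK : faceIndep s ⊆ S ∩ K := by
      intro i hi
      refine Finset.mem_inter.mpr ⟨h1 hi, ?_⟩
      by_contra hiK
      have hKsub : K ⊆ (faceIndep s ∪ K).erase i :=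
        Finset.subset_erase.mpr ⟨Finset.subset_union_right, hiK⟩
      have : i ∈ f.cl ((faceIndep s ∪ K).erase i) :=
        f.cl_mono hKsub (hS i (h1 hi))
      exact (indep_iff.mp h2) i (Finset.mem_union_left _ hi) this
    have hsubK : faceIndep s ∪ K = K :=
      Finset.union_eq_right.mpr (fun i hi => (Finset.mem_inter.mp (hIK hi)).2)
    refine ⟨(faceIndep s).image Sum.inl, Finset.image_subset_image hIK,
      (faceFlag s).image Sum.inr, ⟨?_, ?_⟩, face_decomp s⟩
    · intro v hv
      obtain ⟨G, hG, rfl⟩ := Finset.mem_image.mp hv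
      have := h3 G hG
      refine ⟨G, rfl, this.1.1, ?_, ?_⟩
      · rw [← hsubK]; exact this.2
      · exact lt_of_le_of_ne (Finset.subset_univ G) this.1.2
    · intro G H hG hH
      have hG' : G ∈ faceFlag s := by
        obtain ⟨G', hG', hEq⟩ := Finset.mem_image.mp hG
        rw [Sum.inr.injEq] at hEq
        exact hEq ▸ hG'
      have hH' : H ∈ faceFlag s := by
        obtain ⟨H', hH', hEq⟩ := Finset.mem_image.mp hH
        rw [Sum.inr.injEq] at hEq
        exact hEq ▸ hH'
      exact h4 hG' hH'
  · rintro ⟨a, ha, w, ⟨hwM, hwC⟩, rfl⟩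
    have hIa : ∀ i, Sum.inl i ∈ a ∪ w → i ∈ S ∩ K := by
      intro i hi
      rcases Finset.mem_union.mp hi with h | h
      · obtain ⟨j, hj, hEq⟩ := Finset.mem_image.mp (ha h)
        rw [Sum.inl.injEq] at hEq
        exact hEq ▸ hj
      · obtain ⟨G, hEq, _⟩ := hwM _ h
        exact absurd hEq (by simp)
    have hIsub : faceIndep (a ∪ w) ⊆ S ∩ K :=
      fun i hi => hIa i (mem_faceIndep.mp hi)
    have hsubK : faceIndep (a ∪ w) ∪ K = K :=
      Finset.union_eq_right.mpr (fun i hi => (Finset.mem_inter.mp (hIsub hi)).2)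
    have hinrw : ∀ G : Finset E, Sum.inr G ∈ a ∪ w → Sum.inr G ∈ w := by
      intro G h
      rcases Finset.mem_union.mp h with h' | h'
      · obtain ⟨j, _, hEq⟩ := Finset.mem_image.mp (ha h')
        exact absurd hEq (by simp)
      · exact h'
    have hCw : ∀ G, G ∈ faceFlag (a ∪ w) →
        f.IsFlat G ∧ f.cl K ⊆ G ∧ G ⊂ Finset.univ := by
      intro G hG
      obtain ⟨G', hEq, hp⟩ := hwM _ (hinrw G (mem_faceFlag.mp hG))
      rw [Sum.inr.injEq] at hEq
      exact hEq ▸ hp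
    refine ⟨fun i hi => (Finset.mem_inter.mp (hIsub hi)).1, ?_, ?_, ?_⟩
    · rw [hsubK]; exact hK
    · intro G hG
      obtain ⟨hflat, hclK, hGu⟩ := hCw G hG
      refine ⟨⟨hflat, hGu.ne⟩, ?_⟩
      rw [hsubK]
      exact hclK
    · intro G H hG hH
      exact hwC (hinrw G (mem_faceFlag.mp hG)) (hinrw H (mem_faceFlag.mp hH))

end ClosureOp


namespace ClosureOp

set_option linter.unusedSectionVars false
set_option linter.unusedVariables false
set_option maxHeartbeats 1000000

variable {E : Type*} [Fintype E] [DecidableEq E] {f : ClosureOp E}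

theorem vdAug (hx : f.Exch) :
    ∀ (n : ℕ) (S K : Finset E), S.card ≤ n → f.Indep K →
      IsVertexDecomposable (f.aug S K) := by
  have base : ∀ S K : Finset E, (∀ x ∈ S, x ∈ f.cl K) → f.Indep K →
      IsVertexDecomposable (f.aug S K) := by
    intro S K hS hK
    rw [aug_base_eq hS hK]
    refine vd_myJoin (.simplex _) _
      (vdIcc (p3_all hx _) (isFlat_cl _) isFlat_univ (Finset.subset_univ _) le_rfl)
      (fun s hs t ht => ht.trans hs) (dClosed_chainsOf _) ?_
    intro a ha w hw
    rw [Finset.disjoint_left]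
    intro x hxa hxw
    obtain ⟨G, rfl, _⟩ := hw.1 x hxw
    obtain ⟨j, _, hEq⟩ := Finset.mem_image.mp (ha hxa)
    exact absurd hEq (by simp)
  intro n
  induction n with
  | zero =>
    intro S K hSc hK
    have hS0 : S = ∅ := Finset.card_eq_zero.mp (Nat.le_zero.mp hSc)
    exact base S K (by rw [hS0]; intro x hx; exact absurd hx (Finset.notMem_empty x)) hK
  | succ n ihn =>
    intro S K hSc hK
    by_cases hex : ∃ e ∈ S, e ∉ f.cl K
    · obtain ⟨e, heS, heK⟩ := hex
      have heKm : e ∉ K := fun h => heK (f.subset_cl _ h)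
      have hindeK : f.Indep (insert e K) := indep_insert hx hK heK
      refine .step _ (Sum.inl e) (singleton_mem_aug heS hindeK) ?_ ?_ ?_
      · rw [aug_del]
        refine ihn _ _ ?_ hK
        have := Finset.card_erase_of_mem heS
        have := Finset.card_pos.mpr ⟨e, heS⟩
        omega
      · rw [aug_link heS heKm]
        refine ihn _ _ ?_ hindeK
        have := Finset.card_erase_of_mem heS
        have := Finset.card_pos.mpr ⟨e, heS⟩
        omega
      · rw [aug_del]
        exact aug_facet heS heK
    · refine base S K (fun x hx => ?_) hK
      by_contra hxc
      exact hex ⟨x, hx, hxc⟩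

theorem augBergman_eq_aug : f.augBergman = f.aug Finset.univ ∅ := by
  ext s
  constructor
  · rintro ⟨I, C, rfl, hI, hC1, hC2, hC3⟩
    refine ⟨?_, ?_, ?_, ?_⟩ <;>
      simp only [faceIndep_image_union, faceFlag_image_union, Finset.union_empty]
    · exact Finset.subset_univ I
    · exact hI
    · exact fun G hG => ⟨hC1 G hG, hC3 G hG⟩
    · exact fun G H hG hH => hC2 G hG H hH
  · intro hs
    exact ⟨faceIndep s, faceFlag s, face_decomp s, by
      have := hs.2.1; rwa [Finset.union_empty] at this, fun F hF => (hs.2.2.1 F hF).1,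
      fun F hF G hG => hs.2.2.2 hF hG, fun F hF => by
        have := (hs.2.2.1 F hF).2; rwa [Finset.union_empty] at this⟩

end ClosureOp


theorem matroid_closureOp_exch {E : Type*} [Fintype E] [DecidableEq E]
    (M : Matroid E) (hE : M.E = Set.univ) : (M.closureOp hE).Exch := by
  intro A a b ha hb
  simp only [Matroid.closureOp, Set.Finite.mem_toFinset] at ha hb ⊢
  rw [Finset.coe_insert] at ha ⊢
  exact (Matroid.closure_exchange ⟨ha, hb⟩).1


/-- The augmented Bergman complex of a matroid on a finite ground set
is vertex decomposable. -/
theorem augBergman_isVertexDecomposable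
    {E : Type*} [Fintype E] [DecidableEq E] (M : Matroid E) (hE : M.E = Set.univ) :
    IsVertexDecomposable (M.closureOp hE).augBergman := by
  rw [ClosureOp.augBergman_eq_aug]
  exact ClosureOp.vdAug (matroid_closureOp_exch M hE) _ _ _ le_rfl
    ClosureOp.indep_empty
end

section
/- Let M be a matroid on a finite ground set E and let L be an upper-set of proper flats of M. Then the induced subcomplex Δ_M(L) of the augmented Bergman complex Δ̂(M) on the vertex set {y_i : i ∈ E} ⊔ {x_F : F ∈ L} is vertex decomposable. -/
open Finset

/-! ### Part 1: generic machinery -/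

section AuxComplexes

variable {V : Type*} {W : Type*}

lemma IsVertexDecomposable.empty_mem [DecidableEq V] {Δ : Set (Finset V)}
    (h : IsVertexDecomposable Δ) : ∅ ∈ Δ := by
  induction h with
  | simplex s => exact Finset.empty_subset s
  | step Δ v hv hdel hlink hfacet ihdel ihlink => exact ihdel.1

/-- The image of a complex under a vertex map. -/
def imageComplex [DecidableEq W] (φ : V → W) (Δ : Set (Finset V)) : Set (Finset W) :=
  {t | ∃ s ∈ Δ, t = s.image φ}

lemma imageComplex_vd [DecidableEq V] [DecidableEq W] {Δ : Set (Finset V)}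
    {φ : V → W} (hφ : Function.Injective φ) (h : IsVertexDecomposable Δ) :
    IsVertexDecomposable (imageComplex φ Δ) := by
  have himg_inj : ∀ {a b : Finset V}, a.image φ = b.image φ → a = b := by
    intro a b hab
    exact Finset.Subset.antisymm
      ((Finset.image_subset_image_iff hφ).mp (le_of_eq hab))
      ((Finset.image_subset_image_iff hφ).mp (le_of_eq hab.symm))
  induction h with
  | simplex s =>
    have he : imageComplex φ {t | t ⊆ s} = {t | t ⊆ s.image φ} := by
      ext t
      constructor
      · rintro ⟨u, hu, rfl⟩
        exact Finset.image_subset_image hu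
      · intro ht
        refine ⟨s.filter (fun x => φ x ∈ t), fun x hx => (Finset.mem_filter.mp hx).1, ?_⟩
        ext y
        simp only [Finset.mem_image, Finset.mem_filter]
        constructor
        · intro hy
          obtain ⟨x, hxs, rfl⟩ := Finset.mem_image.mp (ht hy)
          exact ⟨x, ⟨hxs, hy⟩, rfl⟩
        · rintro ⟨x, ⟨hxs, hxt⟩, rfl⟩
          exact hxt
    rw [he]
    exact IsVertexDecomposable.simplex _
  | step Δ v hv hdel hlink hfacet ihdel ihlink =>
    have hdelid : faceDeletion (imageComplex φ Δ) (φ v) = imageComplex φ (faceDeletion Δ v) := by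
      ext t
      constructor
      · rintro ⟨⟨u, hu, rfl⟩, hv'⟩
        exact ⟨u, ⟨hu, fun hvu => hv' (Finset.mem_image_of_mem φ hvu)⟩, rfl⟩
      · rintro ⟨u, ⟨hu, hvu⟩, rfl⟩
        refine ⟨⟨u, hu, rfl⟩, fun hc => hvu ?_⟩
        obtain ⟨x, hx, hxe⟩ := Finset.mem_image.mp hc
        rwa [hφ hxe] at hx
    have hlinkid : faceLink (imageComplex φ Δ) (φ v) = imageComplex φ (faceLink Δ v) := by
      ext t
      constructor
      · rintro ⟨hvt, u, hu, hins⟩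
        have hvu : v ∈ u := by
          have h1 : φ v ∈ u.image φ := by rw [← hins]; exact Finset.mem_insert_self _ _
          obtain ⟨x, hx, hxe⟩ := Finset.mem_image.mp h1
          rwa [hφ hxe] at hx
        refine ⟨u.erase v, ⟨Finset.notMem_erase _ _, ?_⟩, ?_⟩
        · rwa [Finset.insert_erase hvu]
        · rw [Finset.image_erase hφ, ← hins, Finset.erase_insert hvt]
      · rintro ⟨u, ⟨hvu, hins⟩, rfl⟩
        constructor
        · intro hc
          obtain ⟨x, hx, hxe⟩ := Finset.mem_image.mp hc
          rw [hφ hxe] at hx; exact hvu hx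
        · exact ⟨insert v u, hins, by rw [Finset.image_insert]⟩
    have hfacet' : ∀ t, IsFacet (faceDeletion (imageComplex φ Δ) (φ v)) t →
        IsFacet (imageComplex φ Δ) t := by
      intro t ht
      rw [hdelid] at ht
      obtain ⟨⟨u, hu, rfl⟩, hmax⟩ := ht
      have hufacet : IsFacet (faceDeletion Δ v) u := by
        refine ⟨hu, fun u' hu' hsub => ?_⟩
        exact himg_inj (hmax (u'.image φ) ⟨u', hu', rfl⟩ (Finset.image_subset_image hsub))
      have hufΔ : IsFacet Δ u := hfacet u hufacet
      refine ⟨⟨u, hufΔ.1, rfl⟩, ?_⟩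
      rintro t' ⟨u', hu', rfl⟩ hsub
      rw [hufΔ.2 u' hu' ((Finset.image_subset_image_iff hφ).mp hsub)]
    refine IsVertexDecomposable.step _ (φ v) ⟨{v}, hv, by simp⟩ ?_ ?_ hfacet'
    · rw [hdelid]; exact ihdel
    · rw [hlinkid]; exact ihlink

/-- The join of two complexes living on complementary parts of the same vertex set. -/
def JP [DecidableEq V] (p : V → Prop) [DecidablePred p] (Δ Γ : Set (Finset V)) :
    Set (Finset V) :=
  {s | s.filter p ∈ Δ ∧ s.filter (fun x => ¬ p x) ∈ Γ}

section JPFacts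

variable [DecidableEq V] {p : V → Prop} [DecidablePred p] {Δ Γ : Set (Finset V)}

lemma JP_facet_iff (hΔp : ∀ s ∈ Δ, ∀ x ∈ s, p x) (hΓp : ∀ s ∈ Γ, ∀ x ∈ s, ¬ p x)
    {u : Finset V} :
    IsFacet (JP p Δ Γ) u ↔
      IsFacet Δ (u.filter p) ∧ IsFacet Γ (u.filter (fun x => ¬ p x)) := by
  constructor
  · rintro ⟨⟨h1, h2⟩, hmax⟩
    constructor
    · refine ⟨h1, fun a' ha' hsub => ?_⟩
      have hmem : (a' ∪ u.filter (fun x => ¬ p x)) ∈ JP p Δ Γ := by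
        constructor
        · rw [Finset.filter_union, Finset.filter_true_of_mem (hΔp a' ha'),
            Finset.filter_false_of_mem
              (fun x hx => (Finset.mem_filter.mp hx).2 : ∀ x ∈ u.filter (fun x => ¬ p x), ¬ p x),
            Finset.union_empty]
          exact ha'
        · rw [Finset.filter_union,
            Finset.filter_false_of_mem
              (fun x hx => not_not_intro (hΔp a' ha' x hx) :
                ∀ x ∈ a', ¬ ¬ p x),
            Finset.filter_true_of_mem
              (fun x hx => (Finset.mem_filter.mp hx).2 : ∀ x ∈ u.filter (fun x => ¬ p x), ¬ p x),
            Finset.empty_union]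
          exact h2
      have hsub2 : u ⊆ a' ∪ u.filter (fun x => ¬ p x) := by
        conv_lhs => rw [← Finset.filter_union_filter_not_eq p u]
        exact Finset.union_subset_union hsub le_rfl
      have heq := hmax _ hmem hsub2
      rw [heq, Finset.filter_union, Finset.filter_true_of_mem (hΔp a' ha'),
        Finset.filter_false_of_mem
          (fun x hx => (Finset.mem_filter.mp hx).2 : ∀ x ∈ u.filter (fun x => ¬ p x), ¬ p x),
        Finset.union_empty]
    · refine ⟨h2, fun b' hb' hsub => ?_⟩
      have hmem : (u.filter p ∪ b') ∈ JP p Δ Γ := by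
        constructor
        · rw [Finset.filter_union,
            Finset.filter_true_of_mem
              (fun x hx => (Finset.mem_filter.mp hx).2 : ∀ x ∈ u.filter p, p x),
            Finset.filter_false_of_mem (hΓp b' hb'), Finset.union_empty]
          exact h1
        · rw [Finset.filter_union,
            Finset.filter_false_of_mem
              (fun x hx => not_not_intro (Finset.mem_filter.mp hx).2 :
                ∀ x ∈ u.filter p, ¬ ¬ p x),
            Finset.filter_true_of_mem (hΓp b' hb'), Finset.empty_union]
          exact hb'
      have hsub2 : u ⊆ u.filter p ∪ b' := by
        conv_lhs => rw [← Finset.filter_union_filter_not_eq p u]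
        exact Finset.union_subset_union le_rfl hsub
      have heq := hmax _ hmem hsub2
      rw [heq, Finset.filter_union,
        Finset.filter_false_of_mem
          (fun x hx => not_not_intro (Finset.mem_filter.mp hx).2 :
            ∀ x ∈ u.filter p, ¬ ¬ p x),
        Finset.filter_true_of_mem (hΓp b' hb'), Finset.empty_union]
  · rintro ⟨⟨ha, hamax⟩, ⟨hb, hbmax⟩⟩
    refine ⟨⟨ha, hb⟩, ?_⟩
    rintro u' ⟨h1', h2'⟩ hsub
    have e1 := hamax _ h1' (Finset.filter_subset_filter _ hsub)
    have e2 := hbmax _ h2' (Finset.filter_subset_filter _ hsub)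
    rw [← Finset.filter_union_filter_not_eq p u, ← Finset.filter_union_filter_not_eq p u',
      ← e1, ← e2]

lemma JP_del_left {v : V} (hv : p v) :
    faceDeletion (JP p Δ Γ) v = JP p (faceDeletion Δ v) Γ := by
  ext s
  constructor
  · rintro ⟨⟨h1, h2⟩, hv'⟩
    exact ⟨⟨h1, fun hc => hv' (Finset.mem_of_mem_filter _ hc)⟩, h2⟩
  · rintro ⟨⟨h1, hvf⟩, h2⟩
    exact ⟨⟨h1, h2⟩, fun hvs => hvf (Finset.mem_filter.mpr ⟨hvs, hv⟩)⟩

lemma JP_del_right {v : V} (hv : ¬ p v) :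
    faceDeletion (JP p Δ Γ) v = JP p Δ (faceDeletion Γ v) := by
  ext s
  constructor
  · rintro ⟨⟨h1, h2⟩, hv'⟩
    exact ⟨h1, h2, fun hc => hv' (Finset.mem_of_mem_filter _ hc)⟩
  · rintro ⟨h1, h2, hvf⟩
    exact ⟨⟨h1, h2⟩, fun hvs => hvf (Finset.mem_filter.mpr ⟨hvs, hv⟩)⟩

lemma JP_link_left {v : V} (hv : p v) :
    faceLink (JP p Δ Γ) v = JP p (faceLink Δ v) Γ := by
  ext s
  constructor
  · rintro ⟨hvs, h1, h2⟩
    rw [Finset.filter_insert, if_pos hv] at h1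
    rw [Finset.filter_insert, if_neg (not_not_intro hv)] at h2
    exact ⟨⟨fun hc => hvs (Finset.mem_of_mem_filter _ hc), h1⟩, h2⟩
  · rintro ⟨⟨hvf, h1⟩, h2⟩
    have hvs : v ∉ s := fun hvs => hvf (Finset.mem_filter.mpr ⟨hvs, hv⟩)
    refine ⟨hvs, ?_, ?_⟩
    · rw [Finset.filter_insert, if_pos hv]; exact h1
    · rw [Finset.filter_insert, if_neg (not_not_intro hv)]; exact h2

lemma JP_link_right {v : V} (hv : ¬ p v) :
    faceLink (JP p Δ Γ) v = JP p Δ (faceLink Γ v) := by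
  ext s
  constructor
  · rintro ⟨hvs, h1, h2⟩
    rw [Finset.filter_insert, if_neg hv] at h1
    rw [Finset.filter_insert, if_pos hv] at h2
    exact ⟨h1, ⟨fun hc => hvs (Finset.mem_of_mem_filter _ hc), h2⟩⟩
  · rintro ⟨h1, ⟨hvf, h2⟩⟩
    have hvs : v ∉ s := fun hvs => hvf (Finset.mem_filter.mpr ⟨hvs, hv⟩)
    refine ⟨hvs, ?_, ?_⟩
    · rw [Finset.filter_insert, if_neg hv]; exact h1
    · rw [Finset.filter_insert, if_pos hv]; exact h2

lemma JP_vd_simplex (p : V → Prop) [DecidablePred p] (s : Finset V) (hs : ∀ x ∈ s, p x) :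
    ∀ {Γ : Set (Finset V)}, IsVertexDecomposable Γ → (∀ u ∈ Γ, ∀ x ∈ u, ¬ p x) →
      IsVertexDecomposable (JP p {t | t ⊆ s} Γ) := by
  have hsimpl : ∀ u ∈ ({t | t ⊆ s} : Set (Finset V)), ∀ x ∈ u, p x :=
    fun u hu x hx => hs x (hu hx)
  intro Γ hΓ
  induction hΓ with
  | simplex t =>
    intro hΓp
    have ht : ∀ x ∈ t, ¬ p x :=
      fun x hx => hΓp {x} (Finset.singleton_subset_iff.mpr hx) x (Finset.mem_singleton_self x)
    have he : JP p {u | u ⊆ s} {u | u ⊆ t} = {u | u ⊆ s ∪ t} := by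
      ext u
      constructor
      · rintro ⟨h1, h2⟩ x hx
        by_cases hpx : p x
        · exact Finset.mem_union_left _ (h1 (Finset.mem_filter.mpr ⟨hx, hpx⟩))
        · exact Finset.mem_union_right _ (h2 (Finset.mem_filter.mpr ⟨hx, hpx⟩))
      · intro h
        constructor
        · intro x hx
          obtain ⟨hxu, hpx⟩ := Finset.mem_filter.mp hx
          rcases Finset.mem_union.mp (h hxu) with h' | h'
          · exact h'
          · exact absurd hpx (ht x h')
        · intro x hx
          obtain ⟨hxu, hpx⟩ := Finset.mem_filter.mp hx
          rcases Finset.mem_union.mp (h hxu) with h' | h'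
          · exact absurd (hs x h') hpx
          · exact h'
    rw [he]
    exact IsVertexDecomposable.simplex _
  | step Γ v hv hdel hlink hfacet ihdel ihlink =>
    intro hΓp
    have hpv : ¬ p v := hΓp {v} hv v (Finset.mem_singleton_self v)
    have hΓpdel : ∀ u ∈ faceDeletion Γ v, ∀ x ∈ u, ¬ p x := fun u hu => hΓp u hu.1
    have hΓplink : ∀ u ∈ faceLink Γ v, ∀ x ∈ u, ¬ p x :=
      fun u hu x hx => hΓp _ hu.2 x (Finset.mem_insert_of_mem hx)
    refine IsVertexDecomposable.step _ v ?_ ?_ ?_ ?_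
    · constructor
      · show Finset.filter p {v} ∈ _
        rw [Finset.filter_singleton, if_neg hpv]
        exact Finset.empty_subset s
      · show Finset.filter _ {v} ∈ Γ
        rw [Finset.filter_singleton, if_pos hpv]
        exact hv
    · rw [JP_del_right hpv]; exact ihdel hΓpdel
    · rw [JP_link_right hpv]; exact ihlink hΓplink
    · intro u hu
      rw [JP_del_right hpv] at hu
      rw [JP_facet_iff hsimpl hΓpdel] at hu
      rw [JP_facet_iff hsimpl hΓp]
      exact ⟨hu.1, hfacet _ hu.2⟩

lemma JP_vd (p : V → Prop) [DecidablePred p] {Δ : Set (Finset V)}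
    (hΔ : IsVertexDecomposable Δ) :
    ∀ {Γ : Set (Finset V)}, (∀ u ∈ Δ, ∀ x ∈ u, p x) → IsVertexDecomposable Γ →
      (∀ u ∈ Γ, ∀ x ∈ u, ¬ p x) → IsVertexDecomposable (JP p Δ Γ) := by
  induction hΔ with
  | simplex s =>
    intro Γ hΔp hΓ hΓp
    have hs : ∀ x ∈ s, p x :=
      fun x hx => hΔp {x} (Finset.singleton_subset_iff.mpr hx) x (Finset.mem_singleton_self x)
    exact JP_vd_simplex p s hs hΓ hΓp
  | step Δ v hv hdel hlink hfacet ihdel ihlink =>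
    intro Γ hΔp hΓ hΓp
    have hpv : p v := hΔp {v} hv v (Finset.mem_singleton_self v)
    have hΔpdel : ∀ u ∈ faceDeletion Δ v, ∀ x ∈ u, p x := fun u hu => hΔp u hu.1
    have hΔplink : ∀ u ∈ faceLink Δ v, ∀ x ∈ u, p x :=
      fun u hu x hx => hΔp _ hu.2 x (Finset.mem_insert_of_mem hx)
    refine IsVertexDecomposable.step _ v ?_ ?_ ?_ ?_
    · constructor
      · show Finset.filter p {v} ∈ Δ
        rw [Finset.filter_singleton, if_pos hpv]
        exact hv
      · show Finset.filter _ {v} ∈ Γ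
        rw [Finset.filter_singleton, if_neg (not_not_intro hpv)]
        exact hΓ.empty_mem
    · rw [JP_del_left hpv]; exact ihdel hΔpdel hΓ hΓp
    · rw [JP_link_left hpv]; exact ihlink hΔplink hΓ hΓp
    · intro u hu
      rw [JP_del_left hpv] at hu
      rw [JP_facet_iff hΔpdel hΓp] at hu
      rw [JP_facet_iff hΔp hΓp]
      exact ⟨hfacet _ hu.1, hu.2⟩

end JPFacts

end AuxComplexes
/-! ### Part 2: matroid translation and independence complexes -/

section MatroidPart

variable {E : Type*} [Fintype E] [DecidableEq E]

lemma closureOp_cl_coe (M : Matroid E) (hE : M.E = Set.univ) (A : Finset E) :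
    (((M.closureOp hE).cl A : Finset E) : Set E) = M.closure ↑A :=
  Set.Finite.coe_toFinset _

lemma mem_closureOp_cl {M : Matroid E} {hE : M.E = Set.univ} {A : Finset E} {i : E} :
    i ∈ (M.closureOp hE).cl A ↔ i ∈ M.closure ↑A :=
  Set.Finite.mem_toFinset _

lemma closureOp_erase_ssubset_iff (M : Matroid E) (hE : M.E = Set.univ)
    {I : Finset E} {i : E} (hi : i ∈ I) :
    (M.closureOp hE).cl (I.erase i) ⊂ (M.closureOp hE).cl I ↔
      i ∉ M.closure (↑I \ {i}) := by
  have hcoe : ((I.erase i : Finset E) : Set E) = ↑I \ {i} := Finset.coe_erase i I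
  constructor
  · intro hss hmem
    have h1 : M.closure ↑I = M.closure (↑I \ {i}) := by
      have h2 : (↑I : Set E) = insert i (↑I \ {i}) := by
        rw [Set.insert_diff_singleton, Set.insert_eq_self.mpr (Finset.mem_coe.mpr hi)]
      conv_lhs => rw [h2]
      rw [Matroid.closure_insert_eq_of_mem_closure hmem]
    have h3 : (M.closureOp hE).cl (I.erase i) = (M.closureOp hE).cl I := by
      ext x
      rw [mem_closureOp_cl, mem_closureOp_cl, hcoe, ← h1]
    rw [h3] at hss
    exact (lt_irrefl _ hss)
  · intro hnot
    rw [Finset.ssubset_iff_of_subset ((M.closureOp hE).cl_mono (Finset.erase_subset i I))]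
    refine ⟨i, ?_, ?_⟩
    · rw [mem_closureOp_cl]
      exact M.subset_closure ↑I (by rw [hE]; exact Set.subset_univ _) (Finset.mem_coe.mpr hi)
    · rw [mem_closureOp_cl, hcoe]
      exact hnot

lemma closureOp_indep_iff (M : Matroid E) (hE : M.E = Set.univ) {I : Finset E} :
    (M.closureOp hE).Indep I ↔ M.Indep ↑I := by
  rw [Matroid.indep_iff_forall_notMem_closure_diff']
  constructor
  · intro h
    refine ⟨by rw [hE]; exact Set.subset_univ _, fun e he => ?_⟩
    exact (closureOp_erase_ssubset_iff M hE (Finset.mem_coe.mp he)).mp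
      (h e (Finset.mem_coe.mp he))
  · rintro ⟨-, h2⟩ i hi
    exact (closureOp_erase_ssubset_iff M hE hi).mpr (h2 i (Finset.mem_coe.mpr hi))

lemma closureOp_properFlat_iff (M : Matroid E) (hE : M.E = Set.univ) {F : Finset E} :
    (M.closureOp hE).IsProperFlat F ↔ (M.closure ↑F = ↑F ∧ F ≠ Finset.univ) := by
  unfold ClosureOp.IsProperFlat
  constructor
  · rintro ⟨h1, h2⟩
    exact ⟨by rw [← closureOp_cl_coe M hE F, h1], h2⟩
  · rintro ⟨h1, h2⟩
    refine ⟨Finset.coe_injective ?_, h2⟩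
    rw [closureOp_cl_coe, h1]

lemma closureOp_cl_flat (M : Matroid E) (hE : M.E = Set.univ) {F A : Finset E}
    (hF : M.closure ↑F = ↑F) (hAF : A ⊆ F) : (M.closureOp hE).cl A ⊆ F := by
  intro x hx
  rw [mem_closureOp_cl] at hx
  have := M.closure_subset_closure (Finset.coe_subset.mpr hAF) hx
  rw [hF] at this
  exact Finset.mem_coe.mp this

/-- The relative independence complex: independent sets over `J` avoiding `J ∪ D`. -/
def IndOn (M : Matroid E) (J D : Finset E) : Set (Finset E) :=
  {I | M.Indep ↑(I ∪ J) ∧ Disjoint I (J ∪ D)}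

lemma indOn_vd_nogood (M : Matroid E) (J D : Finset E) (hJ : M.Indep ↑J)
    (hng : ¬ ∃ e ∈ M.E \ ↑(J ∪ D), M.Indep (insert e ↑J) ∧
        e ∈ M.closure (↑J ∪ ((M.E \ ↑(J ∪ D)) \ {e}))) :
    IsVertexDecomposable (IndOn M J D) := by
  set S : Set E := M.E \ ↑(J ∪ D) with hS
  set S' : Set E := {e | e ∈ S ∧ M.Indep (insert e ↑J)} with hS'
  have hfin : S'.Finite := Set.toFinite _
  have claimA : ∀ t : Finset E, ↑t ⊆ S' → M.Indep (↑J ∪ ↑t) := by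
    intro t
    induction t using Finset.induction_on with
    | empty => intro _; simpa using hJ
    | @insert a t ha IHt =>
      intro hsub
      have hamem : a ∈ S' := hsub (by simp)
      have htsub : ↑t ⊆ S' := fun x hx => hsub (by simp [hx])
      have hIndt : M.Indep (↑J ∪ ↑t) := IHt htsub
      have hanot : a ∉ M.closure (↑J ∪ (S \ {a})) := fun hc => hng ⟨a, hamem.1, hamem.2, hc⟩
      have hsub2 : (↑J ∪ ↑t : Set E) ⊆ ↑J ∪ (S \ {a}) := by
        apply Set.union_subset_union_right
        intro x hx
        refine ⟨(htsub hx).1, fun hxa => ?_⟩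
        rw [Set.mem_singleton_iff] at hxa
        rw [hxa] at hx
        exact ha (Finset.mem_coe.mp hx)
      have hanot2 : a ∉ M.closure (↑J ∪ ↑t) :=
        fun hc => hanot (M.closure_subset_closure hsub2 hc)
      have hins : M.Indep (insert a (↑J ∪ ↑t)) := by
        rw [Matroid.insert_indep_iff]
        exact ⟨hIndt, fun _ => ⟨hamem.1.1, hanot2⟩⟩
      rw [Finset.coe_insert, Set.union_insert]
      exact hins
  set Cf : Finset E := hfin.toFinset with hCf
  have claimB : IndOn M J D = {t | t ⊆ Cf} := by
    ext t
    constructor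
    · rintro ⟨hind, hdisj⟩ e he
      rw [hCf, Set.Finite.mem_toFinset]
      refine ⟨⟨?_, ?_⟩, ?_⟩
      · exact hind.subset_ground (by simp [he])
      · intro hc
        exact (Finset.disjoint_left.mp hdisj he) (Finset.mem_coe.mp hc)
      · apply hind.subset
        rw [Set.insert_subset_iff]
        constructor
        · simp [he]
        · rw [Finset.coe_union]
          exact Set.subset_union_right
    · intro hsub
      have hcf : ↑t ⊆ S' := by
        intro x hx
        have h := hsub (Finset.mem_coe.mp hx)
        rwa [hCf, Set.Finite.mem_toFinset] at h
      constructor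
      · have h := claimA t hcf
        rw [Finset.coe_union, Set.union_comm]
        exact h
      · rw [Finset.disjoint_left]
        intro x hxt hxJD
        exact (hcf (Finset.mem_coe.mpr hxt)).1.2 (Finset.mem_coe.mpr hxJD)
  rw [claimB]
  exact IsVertexDecomposable.simplex Cf

lemma indOn_vd (n : ℕ) : ∀ (M : Matroid E) (J D : Finset E), M.Indep ↑J →
    (M.E \ ↑(J ∪ D)).ncard ≤ n → IsVertexDecomposable (IndOn M J D) := by
  induction n with
  | zero =>
    intro M J D hJ hcard
    apply indOn_vd_nogood M J D hJ
    rintro ⟨e, he, -, -⟩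
    have h0 : (M.E \ ↑(J ∪ D)).ncard = 0 := Nat.le_zero.mp hcard
    rw [Set.ncard_eq_zero (Set.toFinite _)] at h0
    rw [h0] at he
    exact he
  | succ n IH =>
    intro M J D hJ hcard
    by_cases hgood : ∃ e ∈ M.E \ ↑(J ∪ D), M.Indep (insert e ↑J) ∧
        e ∈ M.closure (↑J ∪ ((M.E \ ↑(J ∪ D)) \ {e}))
    · obtain ⟨e, heS, heIns, hecl⟩ := hgood
      obtain ⟨heE, heJD⟩ := heS
      have hset1 : M.E \ ↑(J ∪ insert e D) = (M.E \ ↑(J ∪ D)) \ {e} := by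
        rw [Finset.union_insert, Finset.coe_insert, Set.insert_eq, Set.union_comm,
          ← Set.diff_diff]
      have hset2 : M.E \ ↑(insert e J ∪ D) = (M.E \ ↑(J ∪ D)) \ {e} := by
        rw [Finset.insert_union, Finset.coe_insert, Set.insert_eq, Set.union_comm,
          ← Set.diff_diff]
      have hcard' : ((M.E \ ↑(J ∪ D)) \ {e}).ncard ≤ n := by
        have hlt := Set.ncard_diff_singleton_lt_of_mem
          (show e ∈ M.E \ ↑(J ∪ D) from ⟨heE, heJD⟩) (Set.toFinite _)
        omega
      have hdelid : faceDeletion (IndOn M J D) e = IndOn M J (insert e D) := by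
        ext I
        constructor
        · rintro ⟨⟨h1, h2⟩, he'⟩
          refine ⟨h1, ?_⟩
          rw [Finset.union_insert, Finset.disjoint_insert_right]
          exact ⟨he', h2⟩
        · rintro ⟨h1, h2⟩
          rw [Finset.union_insert, Finset.disjoint_insert_right] at h2
          exact ⟨⟨h1, h2.2⟩, h2.1⟩
      have hlinkid : faceLink (IndOn M J D) e = IndOn M (insert e J) D := by
        ext I
        constructor
        · rintro ⟨heI, ⟨h1, h2⟩⟩
          rw [Finset.insert_union] at h1
          rw [Finset.disjoint_insert_left] at h2
          constructor
          · rw [Finset.union_insert]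
            exact h1
          · rw [Finset.insert_union, Finset.disjoint_insert_right]
            exact ⟨heI, h2.2⟩
        · rintro ⟨h1, h2⟩
          rw [Finset.insert_union, Finset.disjoint_insert_right] at h2
          refine ⟨h2.1, ⟨?_, ?_⟩⟩
          · rw [Finset.insert_union, ← Finset.union_insert]
            exact h1
          · rw [Finset.disjoint_insert_left]
            exact ⟨fun hc => heJD (Finset.mem_coe.mpr hc), h2.2⟩
      refine IsVertexDecomposable.step _ e ?_ ?_ ?_ ?_
      · constructor
        · rw [← Finset.insert_eq, Finset.coe_insert]
          exact heIns
        · rw [Finset.disjoint_singleton_left]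
          intro hc
          exact heJD (Finset.mem_coe.mpr hc)
      · rw [hdelid]
        apply IH M J (insert e D) hJ
        rw [hset1]
        exact hcard'
      · rw [hlinkid]
        apply IH M (insert e J) D
        · rw [Finset.coe_insert]
          exact heIns
        · rw [hset2]
          exact hcard'
      · intro s hs
        rw [hdelid] at hs
        obtain ⟨⟨hsInd, hsDisj⟩, hsmax⟩ := hs
        rw [Finset.union_insert, Finset.disjoint_insert_right] at hsDisj
        obtain ⟨heS2, hsDisj'⟩ := hsDisj
        refine ⟨⟨hsInd, hsDisj'⟩, ?_⟩
        intro t ht hsub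
        by_contra hne
        obtain ⟨x, hxt, hxs⟩ :=
          Finset.exists_of_ssubset (Finset.ssubset_iff_subset_ne.mpr ⟨hsub, hne⟩)
        obtain ⟨htInd, htDisj⟩ := ht
        have hIndSJ : M.Indep (↑s ∪ ↑J) := by
          have h := hsInd
          rwa [Finset.coe_union] at h
        have hins_mem : ∀ y ∈ t, y ∉ s → insert y s ∈ IndOn M J D := by
          intro y hyt hys
          constructor
          · apply htInd.subset
            rw [Finset.coe_union, Finset.coe_union, Finset.coe_insert]
            apply Set.union_subset_union_left
            rw [Set.insert_subset_iff]
            exact ⟨Finset.mem_coe.mpr hyt, Finset.coe_subset.mpr hsub⟩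
          · rw [Finset.disjoint_insert_left]
            exact ⟨fun hc => Finset.disjoint_left.mp htDisj hyt hc, hsDisj'⟩
        by_cases hxe : x = e
        · subst hxe
          have h2 : (↑(insert x s ∪ J) : Set E) = insert x (↑s ∪ ↑J) := by
            rw [Finset.insert_union, Finset.coe_insert, Finset.coe_union]
          have henotcl : x ∉ M.closure (↑s ∪ ↑J) := by
            have h3 := (hins_mem x hxt hxs).1
            rw [h2, Matroid.insert_indep_iff] at h3
            have hx1 : x ∉ (↑s ∪ ↑J : Set E) := by
              rintro (hc | hc)
              · exact hxs (Finset.mem_coe.mp hc)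
              · exact heJD (Finset.mem_coe.mpr
                  (Finset.mem_union_left D (Finset.mem_coe.mp hc)))
            exact (h3.2 hx1).2
          have hsup : ↑J ∪ ((M.E \ ↑(J ∪ D)) \ {x}) ⊆ M.closure (↑s ∪ ↑J) := by
            rintro y (hyJ | ⟨⟨hyE, hyJD⟩, hyne⟩)
            · exact M.subset_closure _ hIndSJ.subset_ground (Or.inr hyJ)
            · by_cases hysmem : y ∈ s
              · exact M.subset_closure _ hIndSJ.subset_ground
                  (Or.inl (Finset.mem_coe.mpr hysmem))
              · have hnotface : insert y s ∉ IndOn M J (insert x D) := by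
                  intro hc
                  have heq := hsmax _ hc (Finset.subset_insert y s)
                  have : y ∈ s := by rw [heq]; exact Finset.mem_insert_self y s
                  exact hysmem this
                have hdisj2 : Disjoint (insert y s) (J ∪ insert x D) := by
                  rw [Finset.union_insert, Finset.disjoint_insert_left]
                  constructor
                  · intro hc
                    rcases Finset.mem_insert.mp hc with h | h
                    · exact hyne (Set.mem_singleton_iff.mpr h)
                    · exact hyJD (Finset.mem_coe.mpr h)
                  · rw [Finset.disjoint_insert_right]
                    exact ⟨hxs, hsDisj'⟩
                have hindfail : ¬ M.Indep ↑(insert y s ∪ J) :=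
                  fun hc => hnotface ⟨hc, hdisj2⟩
                have h2y : (↑(insert y s ∪ J) : Set E) = insert y (↑s ∪ ↑J) := by
                  rw [Finset.insert_union, Finset.coe_insert, Finset.coe_union]
                rw [h2y, Matroid.insert_indep_iff] at hindfail
                by_contra hycl
                exact hindfail ⟨hIndSJ, fun _ => ⟨hyE, hycl⟩⟩
          exact henotcl (M.closure_subset_closure_of_subset_closure hsup hecl)
        · have hmem2 : insert x s ∈ IndOn M J (insert e D) := by
            obtain ⟨hi1, hi2⟩ := hins_mem x hxt hxs
            refine ⟨hi1, ?_⟩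
            rw [Finset.union_insert, Finset.disjoint_insert_right]
            refine ⟨?_, hi2⟩
            intro hc
            rcases Finset.mem_insert.mp hc with h | h
            · exact hxe h.symm
            · exact heS2 h
          have heq := hsmax _ hmem2 (Finset.subset_insert x s)
          have : x ∈ s := by rw [heq]; exact Finset.mem_insert_self x s
          exact hxs this
    · exact indOn_vd_nogood M J D hJ hgood

end MatroidPart
/-! ### Part 3a: order complexes of families of flats -/

section OrderComplexPart
set_option linter.unusedSectionVars false

variable {E : Type*} [Fintype E] [DecidableEq E]

/-- Order complex of a family of finsets: the faces are the chains. -/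
def OCC (S : Set (Finset E)) : Set (Finset (Finset E)) :=
  {C | (∀ G ∈ C, G ∈ S) ∧ ∀ G ∈ C, ∀ H ∈ C, G ⊆ H ∨ H ⊆ G}

/-- The open interval of flats of `M` between `K` and `T`. -/
def flatItv (M : Matroid E) (K T : Finset E) : Set (Finset E) :=
  {G | M.closure ↑G = ↑G ∧ K ⊂ G ∧ G ⊂ T}

lemma occ_down {S : Set (Finset E)} {C t : Finset (Finset E)} (hts : t ⊆ C)
    (hC : C ∈ OCC S) : t ∈ OCC S :=
  ⟨fun G hG => hC.1 G (hts hG), fun G hG H hH => hC.2 G (hts hG) H (hts hH)⟩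

lemma occ_mono {S S' : Set (Finset E)} (h : S ⊆ S') {C : Finset (Finset E)}
    (hC : C ∈ OCC S) : C ∈ OCC S' :=
  ⟨fun G hG => h (hC.1 G hG), hC.2⟩

lemma occ_del (S : Set (Finset E)) (G₀ : Finset E) :
    faceDeletion (OCC S) G₀ = OCC (S \ {G₀}) := by
  ext C
  constructor
  · rintro ⟨⟨h1, h2⟩, h3⟩
    exact ⟨fun G hG => ⟨h1 G hG, fun hc => h3 (Set.mem_singleton_iff.mp hc ▸ hG)⟩, h2⟩
  · rintro ⟨h1, h2⟩
    exact ⟨⟨fun G hG => (h1 G hG).1, h2⟩, fun hc => (h1 G₀ hc).2 rfl⟩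

lemma occ_link (S : Set (Finset E)) (G₀ : Finset E) (hG₀ : G₀ ∈ S) :
    faceLink (OCC S) G₀ =
      JP (fun G => G ⊂ G₀) (OCC {G | G ∈ S ∧ G ⊂ G₀}) (OCC {G | G ∈ S ∧ G₀ ⊂ G}) := by
  ext C
  constructor
  · rintro ⟨hG₀C, hmem, hch⟩
    constructor
    · constructor
      · intro G hG
        obtain ⟨hGC, hGlt⟩ := Finset.mem_filter.mp hG
        exact ⟨hmem G (Finset.mem_insert_of_mem hGC), hGlt⟩
      · intro G hG H hH
        exact hch G (Finset.mem_insert_of_mem (Finset.mem_filter.mp hG).1)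
          H (Finset.mem_insert_of_mem (Finset.mem_filter.mp hH).1)
    · constructor
      · intro G hG
        obtain ⟨hGC, hGnlt⟩ := Finset.mem_filter.mp hG
        refine ⟨hmem G (Finset.mem_insert_of_mem hGC), ?_⟩
        have hGne : G ≠ G₀ := fun hc => hG₀C (hc ▸ hGC)
        rcases hch G (Finset.mem_insert_of_mem hGC) G₀ (Finset.mem_insert_self _ _) with h | h
        · exact absurd (Finset.ssubset_iff_subset_ne.mpr ⟨h, hGne⟩) hGnlt
        · exact Finset.ssubset_iff_subset_ne.mpr ⟨h, fun hc => hGne hc.symm⟩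
      · intro G hG H hH
        exact hch G (Finset.mem_insert_of_mem (Finset.mem_filter.mp hG).1)
          H (Finset.mem_insert_of_mem (Finset.mem_filter.mp hH).1)
  · rintro ⟨⟨hb1, hb2⟩, ⟨ha1, ha2⟩⟩
    have hdicho : ∀ G ∈ C, (G ∈ S ∧ G ⊂ G₀) ∨ (G ∈ S ∧ G₀ ⊂ G) := by
      intro G hG
      by_cases h : G ⊂ G₀
      · exact Or.inl (hb1 G (Finset.mem_filter.mpr ⟨hG, h⟩))
      · exact Or.inr (ha1 G (Finset.mem_filter.mpr ⟨hG, h⟩))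
    have hG₀C : G₀ ∉ C := by
      intro hc
      rcases hdicho G₀ hc with ⟨-, h⟩ | ⟨-, h⟩ <;> exact (Finset.ssubset_iff_subset_ne.mp h).2 rfl
    refine ⟨hG₀C, ?_, ?_⟩
    · intro G hG
      rcases Finset.mem_insert.mp hG with rfl | hGC
      · exact hG₀
      · rcases hdicho G hGC with ⟨h, -⟩ | ⟨h, -⟩ <;> exact h
    · intro G hG H hH
      rcases Finset.mem_insert.mp hG with rfl | hGC <;>
        rcases Finset.mem_insert.mp hH with rfl | hHC
      · exact Or.inl Finset.Subset.rfl
      · rcases hdicho H hHC with ⟨-, h⟩ | ⟨-, h⟩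
        · exact Or.inr h.subset
        · exact Or.inl h.subset
      · rcases hdicho G hGC with ⟨-, h⟩ | ⟨-, h⟩
        · exact Or.inl h.subset
        · exact Or.inr h.subset
      · by_cases hGb : G ⊂ G₀ <;> by_cases hHb : H ⊂ G₀
        · exact hb2 G (Finset.mem_filter.mpr ⟨hGC, hGb⟩) H (Finset.mem_filter.mpr ⟨hHC, hHb⟩)
        · rcases hdicho H hHC with ⟨-, h⟩ | ⟨-, h⟩
          · exact absurd h hHb
          · exact Or.inl (hGb.subset.trans h.subset)
        · rcases hdicho G hGC with ⟨-, h⟩ | ⟨-, h⟩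
          · exact absurd h hGb
          · exact Or.inr (hHb.subset.trans h.subset)
        · exact ha2 G (Finset.mem_filter.mpr ⟨hGC, hGb⟩) H (Finset.mem_filter.mpr ⟨hHC, hHb⟩)

lemma occ_empty : OCC (∅ : Set (Finset E)) = {t | t ⊆ (∅ : Finset (Finset E))} := by
  ext C
  constructor
  · rintro ⟨h1, -⟩
    intro G hG
    exact absurd (h1 G hG) (Set.notMem_empty G)
  · intro h
    have : C = ∅ := Finset.subset_empty.mp h
    subst this
    exact ⟨fun G hG => absurd hG (Finset.notMem_empty G), fun G hG => absurd hG (Finset.notMem_empty G)⟩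

lemma occ_singleton (G : Finset E) :
    OCC ({G} : Set (Finset E)) = {t | t ⊆ ({G} : Finset (Finset E))} := by
  ext C
  constructor
  · rintro ⟨h1, -⟩
    intro H hH
    rw [Finset.mem_singleton]
    exact h1 H hH
  · intro h
    constructor
    · intro H hH
      exact Finset.mem_singleton.mp (h hH)
    · intro H hH H' hH'
      rw [Finset.mem_singleton.mp (h hH), Finset.mem_singleton.mp (h hH')]
      exact Or.inl Finset.Subset.rfl

lemma occ_subsingleton_vd {S : Set (Finset E)} (hS : S.Subsingleton) :
    IsVertexDecomposable (OCC S) := by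
  rcases hS.eq_empty_or_singleton with rfl | ⟨G, rfl⟩
  · rw [occ_empty]; exact IsVertexDecomposable.simplex _
  · rw [occ_singleton]; exact IsVertexDecomposable.simplex _

lemma occ_cone (Z : Finset E) (S' : Set (Finset E)) (hZ : Z ∉ S')
    (hmin : ∀ G ∈ S', Z ⊂ G) :
    OCC (insert Z S') =
      JP (fun G => G = Z) {t | t ⊆ ({Z} : Finset (Finset E))} (OCC S') := by
  ext C
  constructor
  · rintro ⟨h1, h2⟩
    constructor
    · intro G hG
      rw [Finset.mem_singleton]
      exact (Finset.mem_filter.mp hG).2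
    · constructor
      · intro G hG
        obtain ⟨hGC, hGne⟩ := Finset.mem_filter.mp hG
        rcases Set.mem_insert_iff.mp (h1 G hGC) with h | h
        · exact absurd h hGne
        · exact h
      · intro G hG H hH
        exact h2 G (Finset.mem_filter.mp hG).1 H (Finset.mem_filter.mp hH).1
  · rintro ⟨h1, h2⟩
    have hdicho : ∀ G ∈ C, G = Z ∨ G ∈ S' := by
      intro G hG
      by_cases h : G = Z
      · exact Or.inl h
      · exact Or.inr ((h2.1) G (Finset.mem_filter.mpr ⟨hG, h⟩))
    constructor
    · intro G hG
      rcases hdicho G hG with rfl | h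
      · exact Set.mem_insert _ _
      · exact Set.mem_insert_of_mem _ h
    · intro G hG H hH
      rcases hdicho G hG with rfl | hG' <;> rcases hdicho H hH with hh | hH'
      · rw [hh]; exact Or.inl Finset.Subset.rfl
      · exact Or.inl (hmin H hH').subset
      · rw [hh] at *; exact Or.inr (hmin G hG').subset
      · exact h2.2 G (Finset.mem_filter.mpr ⟨hG, fun hc => hZ (hc ▸ hG')⟩)
          H (Finset.mem_filter.mpr ⟨hH, fun hc => hZ (hc ▸ hH')⟩)

lemma chain_ub (C : Finset (Finset E)) (hne : C.Nonempty)
    (hch : ∀ G ∈ C, ∀ H ∈ C, G ⊆ H ∨ H ⊆ G) : ∃ A ∈ C, ∀ G ∈ C, G ⊆ A := by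
  obtain ⟨A, hA, hmax⟩ := C.exists_max_image Finset.card hne
  refine ⟨A, hA, fun G hG => ?_⟩
  rcases hch G hG A hA with h | h
  · exact h
  · have h2 := Finset.eq_of_subset_of_card_le h (hmax G hG)
    rw [h2]

/-- Closure as a finset. -/
noncomputable def clF (M : Matroid E) (X : Set E) : Finset E := (M.closure X).toFinite.toFinset

lemma coe_clF (M : Matroid E) (X : Set E) : (↑(clF M X) : Set E) = M.closure X :=
  Set.Finite.coe_toFinset _

lemma mem_clF {M : Matroid E} {X : Set E} {x : E} : x ∈ clF M X ↔ x ∈ M.closure X :=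
  Set.Finite.mem_toFinset _

lemma clF_flat (M : Matroid E) (X : Set E) : M.closure ↑(clF M X) = ↑(clF M X) := by
  rw [coe_clF, Matroid.closure_closure]

lemma closure_insert_ne (M : Matroid E) {A G₀ : Finset E} {B : Set E} {e₀ : E}
    (hA : M.closure ↑A = ↑A) (hG₀ : M.closure ↑G₀ = ↑G₀)
    (hAG : A ⊂ G₀) (he₀ : e₀ ∉ G₀) (hGB : ↑G₀ ⊆ B) :
    M.closure (insert e₀ ↑A) ≠ B := by
  intro hc
  obtain ⟨g, hgG, hgA⟩ := Finset.exists_of_ssubset hAG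
  have hg1 : g ∈ M.closure (insert e₀ ↑A) := by
    rw [hc]; exact hGB (Finset.mem_coe.mpr hgG)
  have hg2 : g ∉ M.closure ↑A := by
    rw [hA]; exact fun hc2 => hgA (Finset.mem_coe.mp hc2)
  have hex := Matroid.closure_exchange ⟨hg1, hg2⟩
  have hsub : M.closure (insert g ↑A) ⊆ ↑G₀ := by
    have h1 : insert g ↑A ⊆ (↑G₀ : Set E) := Set.insert_subset_iff.mpr
      ⟨Finset.mem_coe.mpr hgG, Finset.coe_subset.mpr hAG.subset⟩
    have h2 := M.closure_subset_closure h1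
    rwa [hG₀] at h2
  exact he₀ (Finset.mem_coe.mp (hsub hex.1))

end OrderComplexPart
/-! ### Part 3b: vertex decomposability of interval order complexes -/

section OrderComplexMain
set_option linter.unusedSectionVars false
set_option maxHeartbeats 1000000

variable {E : Type*} [Fintype E] [DecidableEq E]

/-- Flats of the open interval avoiding `e₀` whose span with `e₀` is the top. -/
def Q1 (M : Matroid E) (K T : Finset E) (e₀ : E) : Set (Finset E) :=
  {G | G ∈ flatItv M K T ∧ e₀ ∉ G ∧ M.closure (insert e₀ ↑G) = ↑T}

/-- Flats of the open interval avoiding `e₀` whose span with `e₀` is not the top. -/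
def Q2 (M : Matroid E) (K T : Finset E) (e₀ : E) : Set (Finset E) :=
  {G | G ∈ flatItv M K T ∧ e₀ ∉ G ∧ M.closure (insert e₀ ↑G) ≠ ↑T}

lemma Q1_or_Q2 {M : Matroid E} {K T : Finset E} {e₀ : E} {G : Finset E}
    (hG : G ∈ flatItv M K T) (he : e₀ ∉ G) :
    G ∈ Q1 M K T e₀ ∨ G ∈ Q2 M K T e₀ := by
  by_cases h : M.closure (insert e₀ ↑G) = ↑T
  · exact Or.inl ⟨hG, he, h⟩
  · exact Or.inr ⟨hG, he, h⟩

/-- The basic construction: the closure of `A ∪ {e₀}` for a flat `K ⊆ A ⊊ G₀`. -/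
lemma Xcons (M : Matroid E) (hE : M.E = Set.univ) {K G₀ T : Finset E} {e₀ : E}
    (hG₀ : M.closure ↑G₀ = ↑G₀) (hKG₀ : K ⊂ G₀) (hG₀T : G₀ ⊂ T)
    (hT : M.closure ↑T = ↑T) (he₀T : e₀ ∈ T) (he₀G₀ : e₀ ∉ G₀)
    {A : Finset E} (hA : M.closure ↑A = ↑A) (hKA : K ⊆ A) (hAG₀ : A ⊂ G₀) :
    M.closure ↑(clF M (insert e₀ ↑A)) = ↑(clF M (insert e₀ ↑A)) ∧
    e₀ ∈ clF M (insert e₀ ↑A) ∧ A ⊆ clF M (insert e₀ ↑A) ∧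
    K ⊂ clF M (insert e₀ ↑A) ∧ clF M (insert e₀ ↑A) ⊂ T ∧
    clF M (insert e₀ ↑A) ≠ G₀ ∧
    (∀ B : Finset E, M.closure ↑B = ↑B → G₀ ⊂ B → e₀ ∈ B →
      clF M (insert e₀ ↑A) ⊂ B) := by
  have hground : insert e₀ (↑A : Set E) ⊆ M.E := by rw [hE]; exact Set.subset_univ _
  have he₀X : e₀ ∈ clF M (insert e₀ ↑A) :=
    mem_clF.mpr (M.subset_closure _ hground (Set.mem_insert _ _))
  have hAX : A ⊆ clF M (insert e₀ ↑A) := by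
    intro a ha
    exact mem_clF.mpr
      (M.subset_closure _ hground (Set.mem_insert_of_mem _ (Finset.mem_coe.mpr ha)))
  have he₀K : e₀ ∉ K := fun hc => he₀G₀ (hKG₀.subset hc)
  have hXsubT : clF M (insert e₀ ↑A) ⊆ T := by
    intro x hx
    have h1 : insert e₀ (↑A : Set E) ⊆ ↑T := Set.insert_subset_iff.mpr
      ⟨Finset.mem_coe.mpr he₀T, Finset.coe_subset.mpr (hAG₀.subset.trans hG₀T.subset)⟩
    have h2 := M.closure_subset_closure h1
    rw [hT] at h2
    exact Finset.mem_coe.mp (h2 (mem_clF.mp hx))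
  have hXneT : clF M (insert e₀ ↑A) ≠ T := by
    intro hc
    apply closure_insert_ne M hA hG₀ hAG₀ he₀G₀ (Finset.coe_subset.mpr hG₀T.subset)
    rw [← coe_clF M (insert e₀ ↑A), hc]
  refine ⟨clF_flat M _, he₀X, hAX, ?_, ?_, ?_, ?_⟩
  · exact Finset.ssubset_iff_subset_ne.mpr
      ⟨hKA.trans hAX, fun hc => he₀K (hc ▸ he₀X)⟩
  · exact Finset.ssubset_iff_subset_ne.mpr ⟨hXsubT, hXneT⟩
  · exact fun hc => he₀G₀ (hc ▸ he₀X)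
  · intro B hB hG₀B he₀B
    have hXB : clF M (insert e₀ ↑A) ⊆ B := by
      intro x hx
      have h1 : insert e₀ (↑A : Set E) ⊆ ↑B := Set.insert_subset_iff.mpr
        ⟨Finset.mem_coe.mpr he₀B, Finset.coe_subset.mpr (hAG₀.subset.trans hG₀B.subset)⟩
      have h2 := M.closure_subset_closure h1
      rw [hB] at h2
      exact Finset.mem_coe.mp (h2 (mem_clF.mp hx))
    refine Finset.ssubset_iff_subset_ne.mpr ⟨hXB, fun hc => ?_⟩
    apply closure_insert_ne M hA hG₀ hAG₀ he₀G₀ (Finset.coe_subset.mpr hG₀B.subset)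
    rw [← coe_clF M (insert e₀ ↑A), hc]

lemma occ_state_vd : ∀ (m n : ℕ) (M : Matroid E), M.E = Set.univ → ∀ (K T : Finset E),
    M.closure ↑K = ↑K → M.closure ↑T = ↑T → K ⊆ T → ∀ (e₀ : E), e₀ ∈ T → e₀ ∉ K →
    ∀ (W₁ W₂ : Set (Finset E)),
      W₁ ⊆ Q1 M K T e₀ → W₂ ⊆ Q2 M K T e₀ →
      (∀ x ∈ W₁, ∀ y ∈ Q1 M K T e₀ \ W₁, y.card ≤ x.card) →
      (∀ x ∈ W₂, ∀ y ∈ Q2 M K T e₀ \ W₂, y.card ≤ x.card) →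
      (W₂.Nonempty → Q1 M K T e₀ ⊆ W₁) →
      (flatItv M K T).ncard ≤ m →
      (flatItv M K T \ (W₁ ∪ W₂)).ncard ≤ n →
      IsVertexDecomposable (OCC (flatItv M K T \ (W₁ ∪ W₂))) := by
  intro m
  induction m using Nat.strong_induction_on with
  | _ m IHm =>
  intro n
  induction n with
  | zero =>
    intro M hE K T hK hT hKT e₀ he₀T he₀K W₁ W₂ hW₁ hW₂ hc1 hc2 hc3 hm hn
    have h0 : flatItv M K T \ (W₁ ∪ W₂) = ∅ := by
      rw [← Set.ncard_eq_zero (Set.toFinite _)]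
      omega
    rw [h0]
    exact occ_subsingleton_vd Set.subsingleton_empty
  | succ n IHn =>
    intro M hE K T hK hT hKT e₀ he₀T he₀K W₁ W₂ hW₁ hW₂ hc1 hc2 hc3 hm hn
    have hFull : ∀ (K' T' : Finset E), M.closure ↑K' = ↑K' → M.closure ↑T' = ↑T' →
        K' ⊆ T' → (flatItv M K' T').ncard < m →
        IsVertexDecomposable (OCC (flatItv M K' T')) := by
      intro K' T' hK' hT' hK'T' hlt
      by_cases he : ∃ e ∈ T', e ∉ K'
      · obtain ⟨e, heT, heK⟩ := he
        have hid : flatItv M K' T' \ ((∅ : Set (Finset E)) ∪ ∅) = flatItv M K' T' := by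
          simp
        rw [← hid]
        exact IHm _ hlt _ M hE K' T' hK' hT' hK'T' e heT heK ∅ ∅
          (Set.empty_subset _) (Set.empty_subset _)
          (fun x hx => absurd hx (Set.notMem_empty x))
          (fun x hx => absurd hx (Set.notMem_empty x))
          (fun hne => absurd hne Set.not_nonempty_empty)
          le_rfl (by rw [hid])
      · push_neg at he
        have hempty : flatItv M K' T' = ∅ := by
          ext G
          simp only [Set.mem_empty_iff_false, iff_false]
          rintro ⟨-, hg1, hg2⟩
          have hTK : T' ⊆ K' := fun x hx => he x hx
          exact (Finset.ssubset_iff_subset_ne.mp hg1).2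
            (Finset.Subset.antisymm hg1.subset (hg2.subset.trans hTK))
        rw [hempty]
        exact occ_subsingleton_vd Set.subsingleton_empty
    by_cases hss : (flatItv M K T \ (W₁ ∪ W₂)).Subsingleton
    · exact occ_subsingleton_vd hss
    have hQdisj : ∀ G, G ∈ Q1 M K T e₀ → G ∈ Q2 M K T e₀ → False :=
      fun G hq1 hq2 => hq2.2.2 hq1.2.2
    by_cases h1 : (Q1 M K T e₀ \ W₁).Nonempty
    · -- Branch 1: delete a maximal live flat spanning `T` with `e₀`
      obtain ⟨G₀', hG₀'⟩ := h1
      obtain ⟨G₀, hG₀mem, hG₀max'⟩ :=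
        Finset.exists_max_image ((Q1 M K T e₀ \ W₁).toFinite.toFinset) Finset.card
          ⟨G₀', (Set.Finite.mem_toFinset _).mpr hG₀'⟩
      rw [Set.Finite.mem_toFinset] at hG₀mem
      obtain ⟨hG₀Q1, hG₀W1⟩ := hG₀mem
      have hG₀max : ∀ G ∈ Q1 M K T e₀ \ W₁, G.card ≤ G₀.card :=
        fun G hG => hG₀max' G ((Set.Finite.mem_toFinset _).mpr hG)
      have hG₀flat : M.closure ↑G₀ = ↑G₀ := hG₀Q1.1.1
      have hKG₀ : K ⊂ G₀ := hG₀Q1.1.2.1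
      have hG₀T : G₀ ⊂ T := hG₀Q1.1.2.2
      have hG₀e : e₀ ∉ G₀ := hG₀Q1.2.1
      have hG₀cl : M.closure (insert e₀ ↑G₀) = ↑T := hG₀Q1.2.2
      have hW₂empty : W₂ = ∅ := by
        by_contra hne
        exact hG₀W1 (hc3 (Set.nonempty_iff_ne_empty.mpr hne) hG₀Q1)
      have hG₀S : G₀ ∈ flatItv M K T \ (W₁ ∪ W₂) := by
        refine ⟨hG₀Q1.1, ?_⟩
        rintro (h | h)
        · exact hG₀W1 h
        · exact hQdisj G₀ hG₀Q1 (hW₂ h)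
      have hAbove : {G | G ∈ flatItv M K T \ (W₁ ∪ W₂) ∧ G₀ ⊂ G} = ∅ := by
        ext G
        simp only [Set.mem_setOf_eq, Set.mem_empty_iff_false, iff_false, not_and]
        intro hGS hGgt
        obtain ⟨⟨hGflat, hKG, hGT⟩, hGW⟩ := hGS
        by_cases he : e₀ ∈ G
        · have hins : insert e₀ (↑G₀ : Set E) ⊆ (↑G : Set E) := Set.insert_subset_iff.mpr
            ⟨Finset.mem_coe.mpr he, Finset.coe_subset.mpr hGgt.subset⟩
          have h2 := M.closure_subset_closure hins
          rw [hG₀cl, hGflat] at h2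
          exact (Finset.ssubset_iff_subset_ne.mp hGT).2
            (Finset.Subset.antisymm hGT.subset (Finset.coe_subset.mp h2))
        · have hGQ1 : G ∈ Q1 M K T e₀ := by
            refine ⟨⟨hGflat, hKG, hGT⟩, he, Set.Subset.antisymm ?_ ?_⟩
            · have h3 := M.closure_subset_closure (Set.insert_subset_iff.mpr
                ⟨Finset.mem_coe.mpr he₀T, Finset.coe_subset.mpr hGT.subset⟩)
              rwa [hT] at h3
            · rw [← hG₀cl]
              exact M.closure_subset_closure
                (Set.insert_subset_insert (Finset.coe_subset.mpr hGgt.subset))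
          have hle := hG₀max G ⟨hGQ1, fun h => hGW (Or.inl h)⟩
          have hlt := Finset.card_lt_card hGgt
          omega
      have hBelow : {G | G ∈ flatItv M K T \ (W₁ ∪ W₂) ∧ G ⊂ G₀} = flatItv M K G₀ := by
        ext G
        constructor
        · rintro ⟨⟨⟨hGflat, hKG, -⟩, -⟩, hGlt⟩
          exact ⟨hGflat, hKG, hGlt⟩
        · rintro ⟨hGflat, hKG, hGlt⟩
          refine ⟨⟨⟨hGflat, hKG, hGlt.trans hG₀T⟩, ?_⟩, hGlt⟩
          rintro (h | h)
          · have hle := hc1 G h G₀ ⟨hG₀Q1, hG₀W1⟩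
            have hlt := Finset.card_lt_card hGlt
            omega
          · rw [hW₂empty] at h
            exact h
      have hmKG₀ : (flatItv M K G₀).ncard < m := by
        have hsub : flatItv M K G₀ ⊆ flatItv M K T \ {G₀} := by
          rintro G ⟨hGflat, hKG, hGlt⟩
          exact ⟨⟨hGflat, hKG, hGlt.trans hG₀T⟩,
            fun hc => (Finset.ssubset_iff_subset_ne.mp hGlt).2 (Set.mem_singleton_iff.mp hc)⟩
        have h4 := Set.ncard_le_ncard hsub (Set.toFinite _)
        have h5 := Set.ncard_diff_singleton_lt_of_mem
          (show G₀ ∈ flatItv M K T from hG₀Q1.1) (Set.toFinite _)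
        omega
      refine IsVertexDecomposable.step _ G₀ ?_ ?_ ?_ ?_
      · refine ⟨?_, ?_⟩
        · intro G hG
          rw [Finset.mem_singleton.mp hG]
          exact hG₀S
        · intro G hG H hH
          rw [Finset.mem_singleton.mp hG, Finset.mem_singleton.mp hH]
          exact Or.inl Finset.Subset.rfl
      · rw [occ_del]
        have hid : (flatItv M K T \ (W₁ ∪ W₂)) \ {G₀} =
            flatItv M K T \ ((W₁ ∪ {G₀}) ∪ W₂) := by
          ext G
          simp only [Set.mem_diff, Set.mem_union, Set.mem_singleton_iff]
          tauto
        have hcard : (flatItv M K T \ ((W₁ ∪ {G₀}) ∪ W₂)).ncard ≤ n := by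
          rw [← hid]
          have h6 := Set.ncard_diff_singleton_lt_of_mem hG₀S (Set.toFinite _)
          omega
        rw [hid]
        refine IHn M hE K T hK hT hKT e₀ he₀T he₀K (W₁ ∪ {G₀}) W₂ ?_ hW₂ ?_ hc2
          (fun hne => (hc3 hne).trans Set.subset_union_left) hm hcard
        · rintro G (h | h)
          · exact hW₁ h
          · rw [Set.mem_singleton_iff.mp h]
            exact hG₀Q1
        · rintro x (hx | hx) y hy
          · exact hc1 x hx y ⟨hy.1, fun hc => hy.2 (Or.inl hc)⟩
          · rw [Set.mem_singleton_iff.mp hx]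
            exact hG₀max y ⟨hy.1, fun hc => hy.2 (Or.inl hc)⟩
      · rw [occ_link _ _ hG₀S, hBelow, hAbove]
        refine JP_vd _ (hFull K G₀ hK hG₀flat hKG₀.subset hmKG₀) ?_ ?_ ?_
        · exact fun u hu x hx => (hu.1 x hx).2.2
        · exact occ_subsingleton_vd Set.subsingleton_empty
        · exact fun u hu x hx => absurd (hu.1 x hx) (Set.notMem_empty x)
      · intro s hs
        rw [occ_del] at hs
        obtain ⟨hsmem, hsmax⟩ := hs
        have hsS : s ∈ OCC (flatItv M K T \ (W₁ ∪ W₂)) := occ_mono Set.diff_subset hsmem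
        refine ⟨hsS, ?_⟩
        intro t ht hsub
        by_contra hne
        obtain ⟨u, hut, hus⟩ :=
          Finset.exists_of_ssubset (Finset.ssubset_iff_subset_ne.mpr ⟨hsub, hne⟩)
        have hins : insert u s ∈ OCC (flatItv M K T \ (W₁ ∪ W₂)) :=
          occ_down (Finset.insert_subset hut hsub) ht
        by_cases hu : u = G₀
        · subst hu
          have hcomp : ∀ G ∈ s, G ⊂ u := by
            intro G hGs
            have hGS' := hsmem.1 G hGs
            have hGne : G ≠ u := fun hc => hGS'.2 (Set.mem_singleton_iff.mpr hc)
            rcases hins.2 G (Finset.mem_insert_of_mem hGs) u (Finset.mem_insert_self _ _)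
              with h | h
            · exact Finset.ssubset_iff_subset_ne.mpr ⟨h, hGne⟩
            · have hGab : G ∈ ({G | G ∈ flatItv M K T \ (W₁ ∪ W₂) ∧ u ⊂ G} :
                  Set (Finset E)) :=
                ⟨hGS'.1, Finset.ssubset_iff_subset_ne.mpr ⟨h, fun hc => hGne hc.symm⟩⟩
              rw [hAbove] at hGab
              exact absurd hGab (Set.notMem_empty G)
          obtain ⟨A, hAflat, hKA, hAG₀, hAub⟩ :
              ∃ A : Finset E, M.closure ↑A = ↑A ∧ K ⊆ A ∧ A ⊂ u ∧ ∀ G ∈ s, G ⊆ A := by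
            rcases Finset.eq_empty_or_nonempty s with rfl | hsne
            · exact ⟨K, hK, Finset.Subset.rfl, hKG₀,
                fun G hG => absurd hG (Finset.notMem_empty G)⟩
            · obtain ⟨A, hAs, hAub⟩ := chain_ub s hsne (fun G hG H hH => hsmem.2 G hG H hH)
              have hAS := ((hsmem.1 A hAs).1).1
              exact ⟨A, hAS.1, hAS.2.1.subset, hcomp A hAs, hAub⟩
          obtain ⟨hXflat, he₀X, hAX, hKX, hXT, hXG₀, -⟩ :=
            Xcons M hE hG₀flat hKG₀ hG₀T hT he₀T hG₀e hAflat hKA hAG₀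
          have hXS : clF M (insert e₀ ↑A) ∈ flatItv M K T \ (W₁ ∪ W₂) := by
            refine ⟨⟨hXflat, hKX, hXT⟩, ?_⟩
            rintro (h | h)
            · exact (hW₁ h).2.1 he₀X
            · exact (hW₂ h).2.1 he₀X
          have hXs : clF M (insert e₀ ↑A) ∉ s := by
            intro hc
            exact hG₀e ((hcomp _ hc).subset he₀X)
          have hins2 : insert (clF M (insert e₀ ↑A)) s ∈
              OCC ((flatItv M K T \ (W₁ ∪ W₂)) \ {u}) := by
            constructor
            · intro G hG
              rcases Finset.mem_insert.mp hG with rfl | hGs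
              · exact ⟨hXS, fun hc => hXG₀ (Set.mem_singleton_iff.mp hc)⟩
              · exact hsmem.1 G hGs
            · intro G hG H hH
              rcases Finset.mem_insert.mp hG with rfl | hGs
              · rcases Finset.mem_insert.mp hH with hh | hHs
                · rw [hh]
                  exact Or.inl Finset.Subset.rfl
                · exact Or.inr ((hAub H hHs).trans hAX)
              · rcases Finset.mem_insert.mp hH with hh | hHs
                · rw [hh]
                  exact Or.inl ((hAub G hGs).trans hAX)
                · exact hsmem.2 G hGs H hHs
          have heq := hsmax _ hins2 (Finset.subset_insert _ s)
          have hXin : clF M (insert e₀ ↑A) ∈ s := by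
            rw [heq]
            exact Finset.mem_insert_self _ s
          exact hXs hXin
        · have hins' : insert u s ∈ OCC ((flatItv M K T \ (W₁ ∪ W₂)) \ {G₀}) := by
            refine ⟨?_, hins.2⟩
            intro G hG
            rcases Finset.mem_insert.mp hG with rfl | hGs
            · exact ⟨ht.1 G hut, fun hc => hu (Set.mem_singleton_iff.mp hc)⟩
            · exact hsmem.1 G hGs
          have heq := hsmax _ hins' (Finset.subset_insert u s)
          have huin : u ∈ s := by
            rw [heq]
            exact Finset.mem_insert_self u s
          exact hus huin
    · -- Q1 is exhausted
      have hQ1sub : Q1 M K T e₀ ⊆ W₁ :=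
        Set.diff_eq_empty.mp (Set.not_nonempty_iff_eq_empty.mp h1)
      by_cases h2 : (Q2 M K T e₀ \ W₂).Nonempty
      · -- Branch 2
        obtain ⟨G₀', hG₀'⟩ := h2
        obtain ⟨G₀, hG₀mem, hG₀max'⟩ :=
          Finset.exists_max_image ((Q2 M K T e₀ \ W₂).toFinite.toFinset) Finset.card
            ⟨G₀', (Set.Finite.mem_toFinset _).mpr hG₀'⟩
        rw [Set.Finite.mem_toFinset] at hG₀mem
        obtain ⟨hG₀Q2, hG₀W2⟩ := hG₀mem
        have hG₀max : ∀ G ∈ Q2 M K T e₀ \ W₂, G.card ≤ G₀.card :=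
          fun G hG => hG₀max' G ((Set.Finite.mem_toFinset _).mpr hG)
        have hG₀flat : M.closure ↑G₀ = ↑G₀ := hG₀Q2.1.1
        have hKG₀ : K ⊂ G₀ := hG₀Q2.1.2.1
        have hG₀T : G₀ ⊂ T := hG₀Q2.1.2.2
        have hG₀e : e₀ ∉ G₀ := hG₀Q2.2.1
        have hG₀cl : M.closure (insert e₀ ↑G₀) ≠ ↑T := hG₀Q2.2.2
        have hG₀S : G₀ ∈ flatItv M K T \ (W₁ ∪ W₂) := by
          refine ⟨hG₀Q2.1, ?_⟩
          rintro (h | h)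
          · exact hQdisj G₀ (hW₁ h) hG₀Q2
          · exact hG₀W2 h
        -- the flat Z = cl (G₀ + e₀)
        have hgroundZ : insert e₀ (↑G₀ : Set E) ⊆ M.E := by
          rw [hE]; exact Set.subset_univ _
        have hZflat : M.closure ↑(clF M (insert e₀ ↑G₀)) = ↑(clF M (insert e₀ ↑G₀)) :=
          clF_flat M _
        have he₀Z : e₀ ∈ clF M (insert e₀ ↑G₀) :=
          mem_clF.mpr (M.subset_closure _ hgroundZ (Set.mem_insert _ _))
        have hG₀Zsub : G₀ ⊆ clF M (insert e₀ ↑G₀) := by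
          intro a ha
          exact mem_clF.mpr
            (M.subset_closure _ hgroundZ (Set.mem_insert_of_mem _ (Finset.mem_coe.mpr ha)))
        have hG₀Z : G₀ ⊂ clF M (insert e₀ ↑G₀) :=
          Finset.ssubset_iff_subset_ne.mpr ⟨hG₀Zsub, fun hc => hG₀e (hc ▸ he₀Z)⟩
        have hZsubT : clF M (insert e₀ ↑G₀) ⊆ T := by
          intro x hx
          have hsubT : insert e₀ (↑G₀ : Set E) ⊆ ↑T := Set.insert_subset_iff.mpr
            ⟨Finset.mem_coe.mpr he₀T, Finset.coe_subset.mpr hG₀T.subset⟩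
          have h3 := M.closure_subset_closure hsubT
          rw [hT] at h3
          exact Finset.mem_coe.mp (h3 (mem_clF.mp hx))
        have hZT : clF M (insert e₀ ↑G₀) ⊂ T := by
          refine Finset.ssubset_iff_subset_ne.mpr ⟨hZsubT, fun hc => ?_⟩
          apply hG₀cl
          rw [← coe_clF M (insert e₀ ↑G₀), hc]
        have hKZ : K ⊂ clF M (insert e₀ ↑G₀) := hKG₀.trans hG₀Z
        have hZS : clF M (insert e₀ ↑G₀) ∈ flatItv M K T \ (W₁ ∪ W₂) := by
          refine ⟨⟨hZflat, hKZ, hZT⟩, ?_⟩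
          rintro (h | h)
          · exact (hW₁ h).2.1 he₀Z
          · exact (hW₂ h).2.1 he₀Z
        have hZnotItv : clF M (insert e₀ ↑G₀) ∉ flatItv M (clF M (insert e₀ ↑G₀)) T :=
          fun hc => (Finset.ssubset_iff_subset_ne.mp hc.2.1).2 rfl
        have hAboveZ : {G | G ∈ flatItv M K T \ (W₁ ∪ W₂) ∧ G₀ ⊂ G} =
            insert (clF M (insert e₀ ↑G₀)) (flatItv M (clF M (insert e₀ ↑G₀)) T) := by
          ext G
          constructor
          · rintro ⟨⟨⟨hGflat, hKG, hGT⟩, hGW⟩, hGgt⟩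
            have he : e₀ ∈ G := by
              by_contra he
              rcases Q1_or_Q2 ⟨hGflat, hKG, hGT⟩ he with hq | hq
              · exact hGW (Or.inl (hQ1sub hq))
              · have hle := hG₀max G ⟨hq, fun h => hGW (Or.inr h)⟩
                have hlt := Finset.card_lt_card hGgt
                omega
            have hZG : clF M (insert e₀ ↑G₀) ⊆ G := by
              intro x hx
              have hsubG : insert e₀ (↑G₀ : Set E) ⊆ ↑G := Set.insert_subset_iff.mpr
                ⟨Finset.mem_coe.mpr he, Finset.coe_subset.mpr hGgt.subset⟩
              have h3 := M.closure_subset_closure hsubG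
              rw [hGflat] at h3
              exact Finset.mem_coe.mp (h3 (mem_clF.mp hx))
            by_cases hGZ : G = clF M (insert e₀ ↑G₀)
            · exact Set.mem_insert_iff.mpr (Or.inl hGZ)
            · exact Set.mem_insert_of_mem _
                ⟨hGflat, Finset.ssubset_iff_subset_ne.mpr ⟨hZG, fun hc => hGZ hc.symm⟩, hGT⟩
          · intro hG
            rcases Set.mem_insert_iff.mp hG with rfl | ⟨hGflat, hZG, hGT⟩
            · exact ⟨hZS, hG₀Z⟩
            · have he : e₀ ∈ G := hZG.subset he₀Z
              refine ⟨⟨⟨hGflat, hKZ.trans hZG, hGT⟩, ?_⟩, hG₀Z.trans hZG⟩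
              rintro (h | h)
              · exact (hW₁ h).2.1 he
              · exact (hW₂ h).2.1 he
        have hBelow : {G | G ∈ flatItv M K T \ (W₁ ∪ W₂) ∧ G ⊂ G₀} = flatItv M K G₀ := by
          ext G
          constructor
          · rintro ⟨⟨⟨hGflat, hKG, -⟩, -⟩, hGlt⟩
            exact ⟨hGflat, hKG, hGlt⟩
          · rintro ⟨hGflat, hKG, hGlt⟩
            refine ⟨⟨⟨hGflat, hKG, hGlt.trans hG₀T⟩, ?_⟩, hGlt⟩
            rintro (h | h)
            · have hGQ1 := hW₁ h
              apply hG₀cl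
              refine Set.Subset.antisymm ?_ ?_
              · have h3 := M.closure_subset_closure (Set.insert_subset_iff.mpr
                  ⟨Finset.mem_coe.mpr he₀T, Finset.coe_subset.mpr hG₀T.subset⟩)
                rwa [hT] at h3
              · rw [← hGQ1.2.2]
                exact M.closure_subset_closure
                  (Set.insert_subset_insert (Finset.coe_subset.mpr hGlt.subset))
            · have hle := hc2 G h G₀ ⟨hG₀Q2, hG₀W2⟩
              have hlt := Finset.card_lt_card hGlt
              omega
        have hmKG₀ : (flatItv M K G₀).ncard < m := by
          have hsub : flatItv M K G₀ ⊆ flatItv M K T \ {G₀} := by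
            rintro G ⟨hGflat, hKG, hGlt⟩
            exact ⟨⟨hGflat, hKG, hGlt.trans hG₀T⟩,
              fun hc => (Finset.ssubset_iff_subset_ne.mp hGlt).2 (Set.mem_singleton_iff.mp hc)⟩
          have h4 := Set.ncard_le_ncard hsub (Set.toFinite _)
          have h5 := Set.ncard_diff_singleton_lt_of_mem
            (show G₀ ∈ flatItv M K T from hG₀Q2.1) (Set.toFinite _)
          omega
        have hmZT : (flatItv M (clF M (insert e₀ ↑G₀)) T).ncard < m := by
          have hsub : flatItv M (clF M (insert e₀ ↑G₀)) T ⊆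
              flatItv M K T \ {clF M (insert e₀ ↑G₀)} := by
            rintro G ⟨hGflat, hZG, hGT⟩
            exact ⟨⟨hGflat, hKZ.trans hZG, hGT⟩,
              fun hc => (Finset.ssubset_iff_subset_ne.mp hZG).2
                (Set.mem_singleton_iff.mp hc).symm⟩
          have h4 := Set.ncard_le_ncard hsub (Set.toFinite _)
          have h5 := Set.ncard_diff_singleton_lt_of_mem
            (show clF M (insert e₀ ↑G₀) ∈ flatItv M K T from ⟨hZflat, hKZ, hZT⟩)
            (Set.toFinite _)
          omega
        have hconeVD : IsVertexDecomposable
            (OCC (insert (clF M (insert e₀ ↑G₀)) (flatItv M (clF M (insert e₀ ↑G₀)) T))) := by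
          rw [occ_cone _ _ hZnotItv (fun G hG => hG.2.1)]
          refine JP_vd _ (IsVertexDecomposable.simplex {clF M (insert e₀ ↑G₀)}) ?_ ?_ ?_
          · exact fun u hu x hx => Finset.mem_singleton.mp (hu hx)
          · exact hFull _ T hZflat hT hZsubT hmZT
          · exact fun u hu x hx hc =>
              (Finset.ssubset_iff_subset_ne.mp (hu.1 x hx).2.1).2 hc.symm
        refine IsVertexDecomposable.step _ G₀ ?_ ?_ ?_ ?_
        · refine ⟨?_, ?_⟩
          · intro G hG
            rw [Finset.mem_singleton.mp hG]
            exact hG₀S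
          · intro G hG H hH
            rw [Finset.mem_singleton.mp hG, Finset.mem_singleton.mp hH]
            exact Or.inl Finset.Subset.rfl
        · rw [occ_del]
          have hid : (flatItv M K T \ (W₁ ∪ W₂)) \ {G₀} =
              flatItv M K T \ (W₁ ∪ (W₂ ∪ {G₀})) := by
            ext G
            simp only [Set.mem_diff, Set.mem_union, Set.mem_singleton_iff]
            tauto
          have hcard : (flatItv M K T \ (W₁ ∪ (W₂ ∪ {G₀}))).ncard ≤ n := by
            rw [← hid]
            have h6 := Set.ncard_diff_singleton_lt_of_mem hG₀S (Set.toFinite _)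
            omega
          rw [hid]
          refine IHn M hE K T hK hT hKT e₀ he₀T he₀K W₁ (W₂ ∪ {G₀}) hW₁ ?_ hc1 ?_
            (fun _ => hQ1sub) hm hcard
          · rintro G (h | h)
            · exact hW₂ h
            · rw [Set.mem_singleton_iff.mp h]
              exact hG₀Q2
          · rintro x (hx | hx) y hy
            · exact hc2 x hx y ⟨hy.1, fun hc => hy.2 (Or.inl hc)⟩
            · rw [Set.mem_singleton_iff.mp hx]
              exact hG₀max y ⟨hy.1, fun hc => hy.2 (Or.inl hc)⟩
        · rw [occ_link _ _ hG₀S, hBelow, hAboveZ]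
          refine JP_vd _ (hFull K G₀ hK hG₀flat hKG₀.subset hmKG₀) ?_ hconeVD ?_
          · exact fun u hu x hx => (hu.1 x hx).2.2
          · intro u hu x hx hc
            rcases Set.mem_insert_iff.mp (hu.1 x hx) with rfl | hxmem
            · have hcard1 := Finset.card_lt_card hG₀Z
              have hcard2 := Finset.card_lt_card hc
              omega
            · have hcard1 := Finset.card_lt_card (hG₀Z.trans hxmem.2.1)
              have hcard2 := Finset.card_lt_card hc
              omega
        · intro s hs
          rw [occ_del] at hs
          obtain ⟨hsmem, hsmax⟩ := hs
          have hsS : s ∈ OCC (flatItv M K T \ (W₁ ∪ W₂)) := occ_mono Set.diff_subset hsmem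
          refine ⟨hsS, ?_⟩
          intro t ht hsub
          by_contra hne
          obtain ⟨u, hut, hus⟩ :=
            Finset.exists_of_ssubset (Finset.ssubset_iff_subset_ne.mpr ⟨hsub, hne⟩)
          have hins : insert u s ∈ OCC (flatItv M K T \ (W₁ ∪ W₂)) :=
            occ_down (Finset.insert_subset hut hsub) ht
          by_cases hu : u = G₀
          · subst hu
            have hcomp : ∀ G ∈ s, G ⊂ u ∨ u ⊂ G := by
              intro G hGs
              have hGS' := hsmem.1 G hGs
              have hGne : G ≠ u := fun hc => hGS'.2 (Set.mem_singleton_iff.mpr hc)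
              rcases hins.2 G (Finset.mem_insert_of_mem hGs) u (Finset.mem_insert_self _ _)
                with h | h
              · exact Or.inl (Finset.ssubset_iff_subset_ne.mpr ⟨h, hGne⟩)
              · exact Or.inr (Finset.ssubset_iff_subset_ne.mpr ⟨h, fun hc => hGne hc.symm⟩)
            have habove : ∀ G ∈ s, u ⊂ G → (clF M (insert e₀ ↑u) ⊆ G ∧ e₀ ∈ G ∧
                M.closure ↑G = ↑G) := by
              intro G hGs huG
              have hGab : G ∈ ({G | G ∈ flatItv M K T \ (W₁ ∪ W₂) ∧ u ⊂ G} :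
                  Set (Finset E)) := ⟨(hsmem.1 G hGs).1, huG⟩
              rw [hAboveZ] at hGab
              rcases Set.mem_insert_iff.mp hGab with rfl | ⟨hGflat, hZG, -⟩
              · exact ⟨Finset.Subset.rfl, he₀Z, hZflat⟩
              · exact ⟨hZG.subset, hZG.subset he₀Z, hGflat⟩
            obtain ⟨A, hAflat, hKA, hAG₀, hAub⟩ :
                ∃ A : Finset E, M.closure ↑A = ↑A ∧ K ⊆ A ∧ A ⊂ u ∧
                  ∀ G ∈ s, G ⊂ u → G ⊆ A := by
              rcases Finset.eq_empty_or_nonempty (s.filter (fun G => G ⊂ u))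
                with hemp | hsne
              · refine ⟨K, hK, Finset.Subset.rfl, hKG₀, fun G hG hGu => ?_⟩
                have : G ∈ s.filter (fun G => G ⊂ u) := Finset.mem_filter.mpr ⟨hG, hGu⟩
                rw [hemp] at this
                exact absurd this (Finset.notMem_empty G)
              · obtain ⟨A, hAs, hAub⟩ := chain_ub _ hsne
                  (fun G hG H hH => hsmem.2 G (Finset.mem_of_mem_filter _ hG)
                    H (Finset.mem_of_mem_filter _ hH))
                obtain ⟨hAs', hAu⟩ := Finset.mem_filter.mp hAs
                have hAS := ((hsmem.1 A hAs').1).1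
                exact ⟨A, hAS.1, hAS.2.1.subset, hAu,
                  fun G hG hGu => hAub G (Finset.mem_filter.mpr ⟨hG, hGu⟩)⟩
            obtain ⟨hXflat, he₀X, hAX, hKX, hXT, hXG₀, hXlast⟩ :=
              Xcons M hE hG₀flat hKG₀ hG₀T hT he₀T hG₀e hAflat hKA hAG₀
            have hXS : clF M (insert e₀ ↑A) ∈ flatItv M K T \ (W₁ ∪ W₂) := by
              refine ⟨⟨hXflat, hKX, hXT⟩, ?_⟩
              rintro (h | h)
              · exact (hW₁ h).2.1 he₀X
              · exact (hW₂ h).2.1 he₀X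
            have hXs : clF M (insert e₀ ↑A) ∉ s := by
              intro hc
              rcases hcomp _ hc with h | h
              · exact hG₀e (h.subset he₀X)
              · obtain ⟨-, he₀G, hGflat⟩ := habove _ hc h
                exact (Finset.ssubset_iff_subset_ne.mp
                  (hXlast _ hGflat h he₀G)).2 rfl
            have hins2 : insert (clF M (insert e₀ ↑A)) s ∈
                OCC ((flatItv M K T \ (W₁ ∪ W₂)) \ {u}) := by
              constructor
              · intro G hG
                rcases Finset.mem_insert.mp hG with rfl | hGs
                · exact ⟨hXS, fun hc => hXG₀ (Set.mem_singleton_iff.mp hc)⟩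
                · exact hsmem.1 G hGs
              · intro G hG H hH
                rcases Finset.mem_insert.mp hG with rfl | hGs
                · rcases Finset.mem_insert.mp hH with hh | hHs
                  · rw [hh]
                    exact Or.inl Finset.Subset.rfl
                  · rcases hcomp H hHs with h | h
                    · exact Or.inr ((hAub H hHs h).trans hAX)
                    · obtain ⟨-, he₀H, hHflat⟩ := habove H hHs h
                      exact Or.inl (hXlast H hHflat h he₀H).subset
                · rcases Finset.mem_insert.mp hH with hh | hHs
                  · rw [hh]
                    rcases hcomp G hGs with h | h
                    · exact Or.inl ((hAub G hGs h).trans hAX)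
                    · obtain ⟨-, he₀G, hGflat⟩ := habove G hGs h
                      exact Or.inr (hXlast G hGflat h he₀G).subset
                  · exact hsmem.2 G hGs H hHs
            have heq := hsmax _ hins2 (Finset.subset_insert _ s)
            have hXin : clF M (insert e₀ ↑A) ∈ s := by
              rw [heq]
              exact Finset.mem_insert_self _ s
            exact hXs hXin
          · have hins' : insert u s ∈ OCC ((flatItv M K T \ (W₁ ∪ W₂)) \ {G₀}) := by
              refine ⟨?_, hins.2⟩
              intro G hG
              rcases Finset.mem_insert.mp hG with rfl | hGs
              · exact ⟨ht.1 G hut, fun hc => hu (Set.mem_singleton_iff.mp hc)⟩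
              · exact hsmem.1 G hGs
            have heq := hsmax _ hins' (Finset.subset_insert u s)
            have huin : u ∈ s := by
              rw [heq]
              exact Finset.mem_insert_self u s
            exact hus huin
      · -- Branch 3: the complex is a cone with apex cl (K + e₀)
        have hQ2sub : Q2 M K T e₀ ⊆ W₂ :=
          Set.diff_eq_empty.mp (Set.not_nonempty_iff_eq_empty.mp h2)
        have hgroundA : insert e₀ (↑K : Set E) ⊆ M.E := by
          rw [hE]; exact Set.subset_univ _
        have hA₀flat : M.closure ↑(clF M (insert e₀ ↑K)) = ↑(clF M (insert e₀ ↑K)) :=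
          clF_flat M _
        have he₀A₀ : e₀ ∈ clF M (insert e₀ ↑K) :=
          mem_clF.mpr (M.subset_closure _ hgroundA (Set.mem_insert _ _))
        have hKA₀sub : K ⊆ clF M (insert e₀ ↑K) := by
          intro a ha
          exact mem_clF.mpr
            (M.subset_closure _ hgroundA (Set.mem_insert_of_mem _ (Finset.mem_coe.mpr ha)))
        have hKA₀ : K ⊂ clF M (insert e₀ ↑K) :=
          Finset.ssubset_iff_subset_ne.mpr ⟨hKA₀sub, fun hc => he₀K (hc ▸ he₀A₀)⟩
        have hA₀subT : clF M (insert e₀ ↑K) ⊆ T := by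
          intro x hx
          have hsubT : insert e₀ (↑K : Set E) ⊆ ↑T := Set.insert_subset_iff.mpr
            ⟨Finset.mem_coe.mpr he₀T, Finset.coe_subset.mpr hKT⟩
          have h3 := M.closure_subset_closure hsubT
          rw [hT] at h3
          exact Finset.mem_coe.mp (h3 (mem_clF.mp hx))
        have hSall : ∀ G ∈ flatItv M K T \ (W₁ ∪ W₂), clF M (insert e₀ ↑K) ⊆ G := by
          intro G hG
          obtain ⟨⟨hGflat, hKG, hGT⟩, hGW⟩ := hG
          have he : e₀ ∈ G := by
            by_contra he
            rcases Q1_or_Q2 ⟨hGflat, hKG, hGT⟩ he with hq | hq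
            · exact hGW (Or.inl (hQ1sub hq))
            · exact hGW (Or.inr (hQ2sub hq))
          intro x hx
          have hsubG : insert e₀ (↑K : Set E) ⊆ ↑G := Set.insert_subset_iff.mpr
            ⟨Finset.mem_coe.mpr he, Finset.coe_subset.mpr hKG.subset⟩
          have h3 := M.closure_subset_closure hsubG
          rw [hGflat] at h3
          exact Finset.mem_coe.mp (h3 (mem_clF.mp hx))
        by_cases hA₀T : clF M (insert e₀ ↑K) = T
        · exfalso
          apply hss
          intro G hG G' hG'
          exfalso
          have h3 := hSall G hG
          rw [hA₀T] at h3
          exact (Finset.ssubset_iff_subset_ne.mp hG.1.2.2).2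
            (Finset.Subset.antisymm hG.1.2.2.subset h3)
        · have hA₀T' : clF M (insert e₀ ↑K) ⊂ T :=
            Finset.ssubset_iff_subset_ne.mpr ⟨hA₀subT, hA₀T⟩
          have hSid : flatItv M K T \ (W₁ ∪ W₂) =
              insert (clF M (insert e₀ ↑K)) (flatItv M (clF M (insert e₀ ↑K)) T) := by
            ext G
            constructor
            · intro hG
              have hss2 := hSall G hG
              by_cases hGA : G = clF M (insert e₀ ↑K)
              · exact Set.mem_insert_iff.mpr (Or.inl hGA)
              · exact Set.mem_insert_of_mem _
                  ⟨hG.1.1, Finset.ssubset_iff_subset_ne.mpr ⟨hss2, fun hc => hGA hc.symm⟩,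
                    hG.1.2.2⟩
            · intro hG
              rcases Set.mem_insert_iff.mp hG with rfl | ⟨hGflat, hAG, hGT⟩
              · refine ⟨⟨hA₀flat, hKA₀, hA₀T'⟩, ?_⟩
                rintro (h | h)
                · exact (hW₁ h).2.1 he₀A₀
                · exact (hW₂ h).2.1 he₀A₀
              · have he : e₀ ∈ G := hAG.subset he₀A₀
                refine ⟨⟨hGflat, hKA₀.trans hAG, hGT⟩, ?_⟩
                rintro (h | h)
                · exact (hW₁ h).2.1 he
                · exact (hW₂ h).2.1 he
          have hmA₀ : (flatItv M (clF M (insert e₀ ↑K)) T).ncard < m := by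
            have hsub : flatItv M (clF M (insert e₀ ↑K)) T ⊆
                flatItv M K T \ {clF M (insert e₀ ↑K)} := by
              rintro G ⟨hGflat, hAG, hGT⟩
              exact ⟨⟨hGflat, hKA₀.trans hAG, hGT⟩,
                fun hc => (Finset.ssubset_iff_subset_ne.mp hAG).2
                  (Set.mem_singleton_iff.mp hc).symm⟩
            have h4 := Set.ncard_le_ncard hsub (Set.toFinite _)
            have h5 := Set.ncard_diff_singleton_lt_of_mem
              (show clF M (insert e₀ ↑K) ∈ flatItv M K T from ⟨hA₀flat, hKA₀, hA₀T'⟩)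
              (Set.toFinite _)
            omega
          rw [hSid, occ_cone _ _ (fun hc => (Finset.ssubset_iff_subset_ne.mp hc.2.1).2 rfl)
            (fun G hG => hG.2.1)]
          refine JP_vd _ (IsVertexDecomposable.simplex {clF M (insert e₀ ↑K)}) ?_ ?_ ?_
          · exact fun u hu x hx => Finset.mem_singleton.mp (hu hx)
          · exact hFull _ T hA₀flat hT hA₀T'.subset hmA₀
          · exact fun u hu x hx hc =>
              (Finset.ssubset_iff_subset_ne.mp (hu.1 x hx).2.1).2 hc.symm

end OrderComplexMain
/-! ### Part 4a: faces of the augmented Bergman complex -/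

section AugFaces
set_option linter.unusedSectionVars false

variable {E : Type*} [Fintype E] [DecidableEq E]

lemma occ_full_vd (M : Matroid E) (hE : M.E = Set.univ) (K T : Finset E)
    (hK : M.closure ↑K = ↑K) (hT : M.closure ↑T = ↑T) (hKT : K ⊆ T) :
    IsVertexDecomposable (OCC (flatItv M K T)) := by
  by_cases he : ∃ e ∈ T, e ∉ K
  · obtain ⟨e, heT, heK⟩ := he
    have hid : flatItv M K T \ ((∅ : Set (Finset E)) ∪ ∅) = flatItv M K T := by simp
    rw [← hid]
    exact occ_state_vd (flatItv M K T).ncard (flatItv M K T).ncard M hE K T hK hT hKT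
      e heT heK ∅ ∅ (Set.empty_subset _) (Set.empty_subset _)
      (fun x hx => absurd hx (Set.notMem_empty x))
      (fun x hx => absurd hx (Set.notMem_empty x))
      (fun hne => absurd hne Set.not_nonempty_empty) le_rfl (by rw [hid])
  · push_neg at he
    have hempty : flatItv M K T = ∅ := by
      ext G
      simp only [Set.mem_empty_iff_false, iff_false]
      rintro ⟨-, hg1, hg2⟩
      exact (Finset.ssubset_iff_subset_ne.mp hg1).2
        (Finset.Subset.antisymm hg1.subset (hg2.subset.trans (fun x hx => he x hx)))
    rw [hempty]
    exact occ_subsingleton_vd Set.subsingleton_empty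

lemma chain_lb (C : Finset (Finset E)) (hne : C.Nonempty)
    (hch : ∀ G ∈ C, ∀ H ∈ C, G ⊆ H ∨ H ⊆ G) : ∃ B ∈ C, ∀ G ∈ C, B ⊆ G := by
  obtain ⟨B, hB, hmin⟩ := C.exists_min_image Finset.card hne
  refine ⟨B, hB, fun G hG => ?_⟩
  rcases hch G hG B hB with h | h
  · have h2 := Finset.eq_of_subset_of_card_le h (hmin G hG)
    rw [← h2]
  · exact h

lemma mem_faceIndep {s : Finset (E ⊕ Finset E)} {i : E} :
    i ∈ ClosureOp.faceIndep s ↔ Sum.inl i ∈ s := Finset.mem_preimage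

lemma mem_faceFlag {s : Finset (E ⊕ Finset E)} {F : Finset E} :
    F ∈ ClosureOp.faceFlag s ↔ Sum.inr F ∈ s := Finset.mem_preimage

lemma face_decomp (s : Finset (E ⊕ Finset E)) :
    s = (ClosureOp.faceIndep s).image Sum.inl ∪ (ClosureOp.faceFlag s).image Sum.inr := by
  ext x
  constructor
  · intro hx
    cases x with
    | inl i =>
      exact Finset.mem_union_left _ (Finset.mem_image_of_mem _ (Finset.mem_preimage.mpr hx))
    | inr F =>
      exact Finset.mem_union_right _ (Finset.mem_image_of_mem _ (Finset.mem_preimage.mpr hx))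
  · intro hx
    rcases Finset.mem_union.mp hx with h | h
    · obtain ⟨i, hi, rfl⟩ := Finset.mem_image.mp h
      exact Finset.mem_preimage.mp hi
    · obtain ⟨F, hF, rfl⟩ := Finset.mem_image.mp h
      exact Finset.mem_preimage.mp hF

lemma faceIndep_image (I : Finset E) (C : Finset (Finset E)) :
    ClosureOp.faceIndep (I.image Sum.inl ∪ C.image Sum.inr) = I := by
  ext i
  simp [ClosureOp.faceIndep, Finset.mem_preimage]

lemma faceFlag_image (I : Finset E) (C : Finset (Finset E)) :
    ClosureOp.faceFlag (I.image Sum.inl ∪ C.image Sum.inr) = C := by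
  ext F
  simp [ClosureOp.faceFlag, Finset.mem_preimage]

lemma faceIndep_insert_inl (i : E) (s : Finset (E ⊕ Finset E)) :
    ClosureOp.faceIndep (insert (Sum.inl i) s) = insert i (ClosureOp.faceIndep s) := by
  ext j
  simp [ClosureOp.faceIndep, Finset.mem_preimage]

lemma faceFlag_insert_inl (i : E) (s : Finset (E ⊕ Finset E)) :
    ClosureOp.faceFlag (insert (Sum.inl i) s) = ClosureOp.faceFlag s := by
  ext F
  simp [ClosureOp.faceFlag, Finset.mem_preimage]

lemma faceIndep_insert_inr (F : Finset E) (s : Finset (E ⊕ Finset E)) :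
    ClosureOp.faceIndep (insert (Sum.inr F) s) = ClosureOp.faceIndep s := by
  ext j
  simp [ClosureOp.faceIndep, Finset.mem_preimage]

lemma faceFlag_insert_inr (F : Finset E) (s : Finset (E ⊕ Finset E)) :
    ClosureOp.faceFlag (insert (Sum.inr F) s) = insert F (ClosureOp.faceFlag s) := by
  ext G
  simp [ClosureOp.faceFlag, Finset.mem_preimage]

lemma filter_isLeft_eq (s : Finset (E ⊕ Finset E)) :
    s.filter (fun x => x.isLeft = true) = (ClosureOp.faceIndep s).image Sum.inl := by
  ext x
  cases x with
  | inl i => simp [ClosureOp.faceIndep, Finset.mem_preimage]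
  | inr F => simp

lemma filter_isRight_eq (s : Finset (E ⊕ Finset E)) :
    s.filter (fun x => ¬ (Sum.isLeft x = true)) = (ClosureOp.faceFlag s).image Sum.inr := by
  ext x
  cases x with
  | inl i => simp
  | inr F => simp [ClosureOp.faceFlag, Finset.mem_preimage]

lemma mem_augBergmanOn_iff (f : ClosureOp E) (L : Set (Finset E))
    (s : Finset (E ⊕ Finset E)) :
    s ∈ f.augBergmanOn L ↔
      f.Indep (ClosureOp.faceIndep s) ∧
      (∀ F ∈ ClosureOp.faceFlag s, f.IsProperFlat F) ∧
      (∀ F ∈ ClosureOp.faceFlag s, ∀ G ∈ ClosureOp.faceFlag s, F ⊆ G ∨ G ⊆ F) ∧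
      (∀ F ∈ ClosureOp.faceFlag s, f.cl (ClosureOp.faceIndep s) ⊆ F) ∧
      (∀ F ∈ ClosureOp.faceFlag s, F ∈ L) := by
  constructor
  · rintro ⟨⟨I, C, hsplit, hI, hflats, hchain, hcl⟩, hLmem⟩
    have e1 : ClosureOp.faceIndep s = I := by rw [hsplit]; exact faceIndep_image I C
    have e2 : ClosureOp.faceFlag s = C := by rw [hsplit]; exact faceFlag_image I C
    rw [e1, e2]
    exact ⟨hI, hflats, hchain, hcl, fun F hF => hLmem F (mem_faceFlag.mp (e2 ▸ hF))⟩
  · rintro ⟨hI, hflats, hchain, hcl, hLmem⟩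
    refine ⟨⟨ClosureOp.faceIndep s, ClosureOp.faceFlag s, face_decomp s, hI, hflats,
      hchain, hcl⟩, ?_⟩
    intro F hF
    exact hLmem F (mem_faceFlag.mpr hF)

lemma augBergmanOn_mono (f : ClosureOp E) {L₁ L₂ : Set (Finset E)} (h : L₁ ⊆ L₂)
    {s : Finset (E ⊕ Finset E)} (hs : s ∈ f.augBergmanOn L₁) : s ∈ f.augBergmanOn L₂ :=
  ⟨hs.1, fun F hF => h (hs.2 F hF)⟩

lemma augBergmanOn_down (M : Matroid E) (hE : M.E = Set.univ) (L : Set (Finset E))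
    {t s : Finset (E ⊕ Finset E)} (hts : t ⊆ s)
    (hs : s ∈ (M.closureOp hE).augBergmanOn L) : t ∈ (M.closureOp hE).augBergmanOn L := by
  rw [mem_augBergmanOn_iff] at hs ⊢
  have hIsub : ClosureOp.faceIndep t ⊆ ClosureOp.faceIndep s :=
    fun i hi => mem_faceIndep.mpr (hts (mem_faceIndep.mp hi))
  have hFsub : ClosureOp.faceFlag t ⊆ ClosureOp.faceFlag s :=
    fun F hF => mem_faceFlag.mpr (hts (mem_faceFlag.mp hF))
  refine ⟨?_, fun F hF => hs.2.1 F (hFsub hF),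
    fun F hF G hG => hs.2.2.1 F (hFsub hF) G (hFsub hG),
    fun F hF => subset_trans ((M.closureOp hE).cl_mono hIsub) (hs.2.2.2.1 F (hFsub hF)),
    fun F hF => hs.2.2.2.2 F (hFsub hF)⟩
  rw [closureOp_indep_iff] at hs ⊢
  exact hs.1.subset (Finset.coe_subset.mpr hIsub)

lemma augBergmanOn_del (f : ClosureOp E) (L : Set (Finset E)) (F : Finset E) :
    faceDeletion (f.augBergmanOn L) (Sum.inr F) = f.augBergmanOn (L \ {F}) := by
  ext s
  constructor
  · rintro ⟨hs, hF⟩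
    rw [mem_augBergmanOn_iff] at hs ⊢
    refine ⟨hs.1, hs.2.1, hs.2.2.1, hs.2.2.2.1, fun G hG => ⟨hs.2.2.2.2 G hG, ?_⟩⟩
    intro hc
    rw [Set.mem_singleton_iff] at hc
    subst hc
    exact hF (mem_faceFlag.mp hG)
  · intro hs
    rw [mem_augBergmanOn_iff] at hs
    refine ⟨?_, ?_⟩
    · rw [mem_augBergmanOn_iff]
      exact ⟨hs.1, hs.2.1, hs.2.2.1, hs.2.2.2.1, fun G hG => (hs.2.2.2.2 G hG).1⟩
    · intro hc
      exact (hs.2.2.2.2 F (mem_faceFlag.mpr hc)).2 rfl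

end AugFaces
/-! ### Part 4b: the main induction -/

section AugMain
set_option linter.unusedSectionVars false
set_option maxHeartbeats 1000000

variable {E : Type*} [Fintype E] [DecidableEq E]

lemma augBergmanOn_link (M : Matroid E) (hE : M.E = Set.univ) (L : Set (Finset E))
    (hL : (M.closureOp hE).IsFlatUpperSet L) {F : Finset E} (hFL : F ∈ L)
    (hFmin : ∀ G ∈ L, G ⊆ F → G = F) :
    faceLink ((M.closureOp hE).augBergmanOn L) (Sum.inr F) =
      JP (fun x : E ⊕ Finset E => x.isLeft = true)
        (imageComplex Sum.inl (IndOn (M.restrict (↑F : Set E)) ∅ ∅))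
        (imageComplex Sum.inr (OCC (flatItv M F Finset.univ))) := by
  have hFflat : M.closure ↑F = ↑F := ((closureOp_properFlat_iff M hE).mp (hL.1 F hFL)).1
  ext s
  constructor
  · rintro ⟨hFs, hins⟩
    rw [mem_augBergmanOn_iff, faceIndep_insert_inr, faceFlag_insert_inr] at hins
    obtain ⟨hI, hflats, hchain, hcl, hLm⟩ := hins
    have hFnotflag : F ∉ ClosureOp.faceFlag s := fun hc => hFs (mem_faceFlag.mp hc)
    have hclF : (M.closureOp hE).cl (ClosureOp.faceIndep s) ⊆ F :=
      hcl F (Finset.mem_insert_self _ _)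
    have hFlt : ∀ G ∈ ClosureOp.faceFlag s, F ⊂ G := by
      intro G hG
      have hGne : G ≠ F := fun hc => hFnotflag (hc ▸ hG)
      rcases hchain G (Finset.mem_insert_of_mem hG) F (Finset.mem_insert_self _ _) with h | h
      · exact absurd (hFmin G (hLm G (Finset.mem_insert_of_mem hG)) h) hGne
      · exact Finset.ssubset_iff_subset_ne.mpr ⟨h, fun hc => hGne hc.symm⟩
    constructor
    · rw [filter_isLeft_eq]
      refine ⟨ClosureOp.faceIndep s, ⟨?_, by simp⟩, rfl⟩
      rw [Finset.union_empty, Matroid.restrict_indep_iff]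
      exact ⟨(closureOp_indep_iff M hE).mp hI,
        Finset.coe_subset.mpr (subset_trans ((M.closureOp hE).subset_cl _) hclF)⟩
    · rw [filter_isRight_eq]
      refine ⟨ClosureOp.faceFlag s, ⟨?_, ?_⟩, rfl⟩
      · intro G hG
        have hGpf := (closureOp_properFlat_iff M hE).mp
          (hL.1 G (hLm G (Finset.mem_insert_of_mem hG)))
        exact ⟨hGpf.1, hFlt G hG,
          Finset.ssubset_iff_subset_ne.mpr ⟨Finset.subset_univ G, hGpf.2⟩⟩
      · intro G hG H hH
        exact hchain G (Finset.mem_insert_of_mem hG) H (Finset.mem_insert_of_mem hH)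
  · rintro ⟨hleft, hright⟩
    rw [filter_isLeft_eq] at hleft
    rw [filter_isRight_eq] at hright
    obtain ⟨I', hI'mem, hI'eq⟩ := hleft
    obtain ⟨C', hC'mem, hC'eq⟩ := hright
    have eI : ClosureOp.faceIndep s = I' :=
      Finset.Subset.antisymm
        ((Finset.image_subset_image_iff Sum.inl_injective).mp (le_of_eq hI'eq))
        ((Finset.image_subset_image_iff Sum.inl_injective).mp (le_of_eq hI'eq.symm))
    have eC : ClosureOp.faceFlag s = C' :=
      Finset.Subset.antisymm
        ((Finset.image_subset_image_iff Sum.inr_injective).mp (le_of_eq hC'eq))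
        ((Finset.image_subset_image_iff Sum.inr_injective).mp (le_of_eq hC'eq.symm))
    obtain ⟨hI'ind, -⟩ := hI'mem
    rw [Finset.union_empty, Matroid.restrict_indep_iff] at hI'ind
    obtain ⟨hIind, hIF⟩ := hI'ind
    obtain ⟨hC'mem1, hC'chain⟩ := hC'mem
    have hFs : Sum.inr F ∉ s := by
      intro hc
      have hFC : F ∈ C' := eC ▸ mem_faceFlag.mpr hc
      exact (Finset.ssubset_iff_subset_ne.mp (hC'mem1 F hFC).2.1).2 rfl
    refine ⟨hFs, ?_⟩
    rw [mem_augBergmanOn_iff, faceIndep_insert_inr, faceFlag_insert_inr, eI, eC]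
    have hclIF : (M.closureOp hE).cl I' ⊆ F :=
      closureOp_cl_flat M hE hFflat (Finset.coe_subset.mp hIF)
    refine ⟨?_, ?_, ?_, ?_, ?_⟩
    · rw [closureOp_indep_iff]
      exact hIind
    · intro G hG
      rcases Finset.mem_insert.mp hG with rfl | hG'
      · exact hL.1 _ hFL
      · rw [closureOp_properFlat_iff]
        exact ⟨(hC'mem1 G hG').1,
          (Finset.ssubset_iff_subset_ne.mp (hC'mem1 G hG').2.2).2⟩
    · intro G hG H hH
      rcases Finset.mem_insert.mp hG with rfl | hG'
      · rcases Finset.mem_insert.mp hH with hh | hH'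
        · rw [hh]
          exact Or.inl Finset.Subset.rfl
        · exact Or.inl (hC'mem1 H hH').2.1.subset
      · rcases Finset.mem_insert.mp hH with hh | hH'
        · rw [hh]
          exact Or.inr (hC'mem1 G hG').2.1.subset
        · exact hC'chain G hG' H hH'
    · intro G hG
      rcases Finset.mem_insert.mp hG with rfl | hG'
      · exact hclIF
      · exact subset_trans hclIF (hC'mem1 G hG').2.1.subset
    · intro G hG
      rcases Finset.mem_insert.mp hG with rfl | hG'
      · exact hFL
      · refine hL.2 F hFL G ?_ (hC'mem1 G hG').2.1.subset
        rw [closureOp_properFlat_iff]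
        exact ⟨(hC'mem1 G hG').1,
          (Finset.ssubset_iff_subset_ne.mp (hC'mem1 G hG').2.2).2⟩

lemma singleton_inr_mem (M : Matroid E) (hE : M.E = Set.univ) (L : Set (Finset E))
    (hL : (M.closureOp hE).IsFlatUpperSet L) {F : Finset E} (hFL : F ∈ L) :
    ({Sum.inr F} : Finset (E ⊕ Finset E)) ∈ (M.closureOp hE).augBergmanOn L := by
  have hFflat : M.closure ↑F = ↑F := ((closureOp_properFlat_iff M hE).mp (hL.1 F hFL)).1
  rw [mem_augBergmanOn_iff]
  have e1 : ClosureOp.faceIndep ({Sum.inr F} : Finset (E ⊕ Finset E)) = ∅ := by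
    ext i
    simp [ClosureOp.faceIndep, Finset.mem_preimage]
  have e2 : ClosureOp.faceFlag ({Sum.inr F} : Finset (E ⊕ Finset E)) = {F} := by
    ext G
    simp [ClosureOp.faceFlag, Finset.mem_preimage]
  rw [e1, e2]
  refine ⟨?_, ?_, ?_, ?_, ?_⟩
  · intro i hi
    exact absurd hi (Finset.notMem_empty i)
  · intro G hG
    rw [Finset.mem_singleton.mp hG]
    exact hL.1 F hFL
  · intro G hG H hH
    rw [Finset.mem_singleton.mp hG, Finset.mem_singleton.mp hH]
    exact Or.inl Finset.Subset.rfl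
  · intro G hG
    rw [Finset.mem_singleton.mp hG]
    exact closureOp_cl_flat M hE hFflat (Finset.empty_subset F)
  · intro G hG
    rw [Finset.mem_singleton.mp hG]
    exact hFL

lemma augBergmanOn_facet (M : Matroid E) (hE : M.E = Set.univ) (L : Set (Finset E))
    (hL : (M.closureOp hE).IsFlatUpperSet L) {F : Finset E} (hFL : F ∈ L)
    (hFmin : ∀ G ∈ L, G ⊆ F → G = F) :
    ∀ s, IsFacet (faceDeletion ((M.closureOp hE).augBergmanOn L) (Sum.inr F)) s →
      IsFacet ((M.closureOp hE).augBergmanOn L) s := by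
  intro s hs
  rw [augBergmanOn_del] at hs
  obtain ⟨hsmem, hsmax⟩ := hs
  have hsS : s ∈ (M.closureOp hE).augBergmanOn L :=
    augBergmanOn_mono _ Set.diff_subset hsmem
  refine ⟨hsS, ?_⟩
  intro t ht hsub
  by_contra hne
  obtain ⟨u, hut, hus⟩ :=
    Finset.exists_of_ssubset (Finset.ssubset_iff_subset_ne.mpr ⟨hsub, hne⟩)
  have hFnots : Sum.inr F ∉ s := by
    intro hc
    have h := (mem_augBergmanOn_iff _ _ s).mp hsmem
    exact (h.2.2.2.2 F (mem_faceFlag.mpr hc)).2 rfl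
  have hins : insert u s ∈ (M.closureOp hE).augBergmanOn L :=
    augBergmanOn_down M hE L (Finset.insert_subset hut hsub) ht
  by_cases hu : u = Sum.inr F
  · subst hu
    have hinschar := (mem_augBergmanOn_iff _ _ _).mp hins
    rw [faceIndep_insert_inr, faceFlag_insert_inr] at hinschar
    obtain ⟨hI, hflats, hchain, hcl, hLm⟩ := hinschar
    have hFnotflag : F ∉ ClosureOp.faceFlag s := fun hc => hFnots (mem_faceFlag.mp hc)
    have hclF : (M.closureOp hE).cl (ClosureOp.faceIndep s) ⊆ F :=
      hcl F (Finset.mem_insert_self _ _)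
    have hschar := (mem_augBergmanOn_iff _ _ s).mp hsmem
    rcases (ClosureOp.faceFlag s).eq_empty_or_nonempty with hflagem | hflagne
    · have hFneU : F ≠ Finset.univ := ((closureOp_properFlat_iff M hE).mp (hL.1 F hFL)).2
      obtain ⟨i, -, hiF⟩ := Finset.exists_of_ssubset
        (Finset.ssubset_iff_subset_ne.mpr ⟨Finset.subset_univ F, hFneU⟩)
      have hinotcl : i ∉ (M.closureOp hE).cl (ClosureOp.faceIndep s) :=
        fun hc => hiF (hclF hc)
      have hinotI : i ∉ ClosureOp.faceIndep s :=
        fun hc => hinotcl ((M.closureOp hE).subset_cl _ hc)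
      have hinsmem : insert (Sum.inl i) s ∈ (M.closureOp hE).augBergmanOn (L \ {F}) := by
        rw [mem_augBergmanOn_iff, faceIndep_insert_inl, faceFlag_insert_inl, hflagem]
        refine ⟨?_, ?_, ?_, ?_, ?_⟩
        · rw [closureOp_indep_iff, Finset.coe_insert, Matroid.insert_indep_iff]
          refine ⟨(closureOp_indep_iff M hE).mp hschar.1, fun _ => ⟨by rw [hE]; trivial, ?_⟩⟩
          intro hc
          exact hinotcl (mem_closureOp_cl.mpr hc)
        · intro G hG
          exact absurd hG (Finset.notMem_empty G)
        · intro G hG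
          exact absurd hG (Finset.notMem_empty G)
        · intro G hG
          exact absurd hG (Finset.notMem_empty G)
        · intro G hG
          exact absurd hG (Finset.notMem_empty G)
      have heq := hsmax _ hinsmem (Finset.subset_insert _ s)
      have hiin : Sum.inl i ∈ s := by
        rw [heq]
        exact Finset.mem_insert_self _ s
      exact hinotI (mem_faceIndep.mpr hiin)
    · obtain ⟨B, hBflag, hBmin⟩ := chain_lb _ hflagne hschar.2.2.1
      have hFB : F ⊂ B := by
        have hBne : B ≠ F := fun hc => hFnotflag (hc ▸ hBflag)
        rcases hchain B (Finset.mem_insert_of_mem hBflag) F (Finset.mem_insert_self _ _)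
          with h | h
        · exact absurd (hFmin B (hLm B (Finset.mem_insert_of_mem hBflag)) h) hBne
        · exact Finset.ssubset_iff_subset_ne.mpr ⟨h, fun hc => hBne hc.symm⟩
      obtain ⟨i, hiB, hiF⟩ := Finset.exists_of_ssubset hFB
      have hBflat : M.closure ↑B = ↑B :=
        ((closureOp_properFlat_iff M hE).mp (hschar.2.1 B hBflag)).1
      have hinotcl : i ∉ (M.closureOp hE).cl (ClosureOp.faceIndep s) :=
        fun hc => hiF (hclF hc)
      have hinotI : i ∉ ClosureOp.faceIndep s :=
        fun hc => hinotcl ((M.closureOp hE).subset_cl _ hc)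
      have hIsubB : insert i (ClosureOp.faceIndep s) ⊆ B := by
        intro x hx
        rcases Finset.mem_insert.mp hx with rfl | hx'
        · exact hiB
        · exact hFB.subset (hclF ((M.closureOp hE).subset_cl _ hx'))
      have hinsmem : insert (Sum.inl i) s ∈ (M.closureOp hE).augBergmanOn (L \ {F}) := by
        rw [mem_augBergmanOn_iff, faceIndep_insert_inl, faceFlag_insert_inl]
        have hschar' := (mem_augBergmanOn_iff _ _ s).mp hsmem
        refine ⟨?_, hschar'.2.1, hschar'.2.2.1, ?_, hschar'.2.2.2.2⟩
        · rw [closureOp_indep_iff, Finset.coe_insert, Matroid.insert_indep_iff]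
          refine ⟨(closureOp_indep_iff M hE).mp hschar.1, fun _ => ⟨by rw [hE]; trivial, ?_⟩⟩
          intro hc
          exact hinotcl (mem_closureOp_cl.mpr hc)
        · intro G hG
          exact subset_trans (closureOp_cl_flat M hE hBflat hIsubB) (hBmin G hG)
      have heq := hsmax _ hinsmem (Finset.subset_insert _ s)
      have hiin : Sum.inl i ∈ s := by
        rw [heq]
        exact Finset.mem_insert_self _ s
      exact hinotI (mem_faceIndep.mpr hiin)
  · have hinsdel : insert u s ∈ (M.closureOp hE).augBergmanOn (L \ {F}) := by
      rw [← augBergmanOn_del]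
      refine ⟨hins, ?_⟩
      intro hc
      rcases Finset.mem_insert.mp hc with h | h
      · exact hu h.symm
      · exact hFnots h
    have heq := hsmax _ hinsdel (Finset.subset_insert u s)
    have huin : u ∈ s := by
      rw [heq]
      exact Finset.mem_insert_self u s
    exact hus huin

lemma augBergmanOn_empty (M : Matroid E) (hE : M.E = Set.univ) :
    (M.closureOp hE).augBergmanOn (∅ : Set (Finset E)) =
      imageComplex Sum.inl (IndOn M ∅ ∅) := by
  ext s
  rw [mem_augBergmanOn_iff]
  constructor
  · rintro ⟨hI, -, -, -, hLm⟩
    have hflag : ClosureOp.faceFlag s = ∅ := by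
      rw [Finset.eq_empty_iff_forall_notMem]
      exact fun F hF => absurd (hLm F hF) (Set.notMem_empty F)
    refine ⟨ClosureOp.faceIndep s, ⟨?_, by simp⟩, ?_⟩
    · rw [Finset.union_empty]
      exact (closureOp_indep_iff M hE).mp hI
    · conv_lhs => rw [face_decomp s]
      rw [hflag, Finset.image_empty, Finset.union_empty]
  · rintro ⟨I, ⟨hIind, -⟩, rfl⟩
    rw [Finset.union_empty] at hIind
    have e1 : ClosureOp.faceIndep (I.image Sum.inl) = I := by
      have h := faceIndep_image I ∅
      rwa [Finset.image_empty, Finset.union_empty] at h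
    have e2 : ClosureOp.faceFlag (I.image Sum.inl) = (∅ : Finset (Finset E)) := by
      have h := faceFlag_image I ∅
      rwa [Finset.image_empty, Finset.union_empty] at h
    rw [e1, e2]
    refine ⟨(closureOp_indep_iff M hE).mpr hIind, ?_, ?_, ?_, ?_⟩ <;>
      · intro F hF
        exact absurd hF (Finset.notMem_empty F)

lemma augBergmanOn_vd_aux : ∀ (n : ℕ) (M : Matroid E) (hE : M.E = Set.univ)
    (L : Set (Finset E)), (M.closureOp hE).IsFlatUpperSet L → L.ncard ≤ n →
    IsVertexDecomposable ((M.closureOp hE).augBergmanOn L) := by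
  have hbase : ∀ (M : Matroid E) (hE : M.E = Set.univ),
      IsVertexDecomposable ((M.closureOp hE).augBergmanOn (∅ : Set (Finset E))) := by
    intro M hE
    rw [augBergmanOn_empty]
    refine imageComplex_vd Sum.inl_injective
      (indOn_vd ((M.E \ ↑((∅ : Finset E) ∪ ∅)).ncard) M ∅ ∅ ?_ le_rfl)
    rw [Finset.coe_empty]
    exact M.empty_indep
  intro n
  induction n with
  | zero =>
    intro M hE L hL hn
    have h0 : L = ∅ := by
      rw [← Set.ncard_eq_zero (Set.toFinite _)]
      omega
    subst h0
    exact hbase M hE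
  | succ n IH =>
    intro M hE L hL hn
    rcases L.eq_empty_or_nonempty with rfl | hne
    · exact hbase M hE
    · obtain ⟨F, hFL, hFmin'⟩ : ∃ F ∈ L, ∀ G ∈ L, G ≤ F → F = G := by
        obtain ⟨F, hF⟩ := (Set.toFinite L).exists_minimal hne
        exact ⟨F, hF.1, fun G hG hle => le_antisymm (hF.2 hG hle) hle⟩
      have hFmin : ∀ G ∈ L, G ⊆ F → G = F :=
        fun G hG hsub => (hFmin' G hG (Finset.le_iff_subset.mpr hsub)).symm
      have hFflat : M.closure ↑F = ↑F :=
        ((closureOp_properFlat_iff M hE).mp (hL.1 F hFL)).1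
      refine IsVertexDecomposable.step _ (Sum.inr F) (singleton_inr_mem M hE L hL hFL)
        ?_ ?_ (augBergmanOn_facet M hE L hL hFL hFmin)
      · rw [augBergmanOn_del]
        refine IH M hE (L \ {F}) ⟨fun G hG => hL.1 G hG.1, ?_⟩ ?_
        · intro G hG G' hG' hsub
          refine ⟨hL.2 G hG.1 G' hG' hsub, ?_⟩
          intro hc
          rw [Set.mem_singleton_iff] at hc
          subst hc
          exact hG.2 (Set.mem_singleton_iff.mpr (hFmin G hG.1 hsub))
        · have h6 := Set.ncard_diff_singleton_lt_of_mem hFL (Set.toFinite _)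
          omega
      · rw [augBergmanOn_link M hE L hL hFL hFmin]
        refine JP_vd _ ?_ ?_ ?_ ?_
        · refine imageComplex_vd Sum.inl_injective
            (indOn_vd (((M.restrict (↑F : Set E)).E \ ↑((∅ : Finset E) ∪ ∅)).ncard)
              (M.restrict ↑F) ∅ ∅ ?_ le_rfl)
          rw [Finset.coe_empty]
          exact (M.restrict ↑F).empty_indep
        · rintro u ⟨v, -, rfl⟩ x hx
          obtain ⟨j, -, rfl⟩ := Finset.mem_image.mp hx
          rfl
        · refine imageComplex_vd Sum.inr_injective
            (occ_full_vd M hE F Finset.univ hFflat ?_ (Finset.subset_univ F))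
          rw [Finset.coe_univ, Matroid.closure_univ, hE]
        · rintro u ⟨v, -, rfl⟩ x hx hc
          obtain ⟨G, -, rfl⟩ := Finset.mem_image.mp hx
          simp at hc

end AugMain

/-- For a matroid `M` on a finite ground set and any upper-set `L` of
proper flats, the induced subcomplex `Δ_M(L)` of the augmented Bergman complex on the
vertices `{y_i : i ∈ E} ⊔ {x_F : F ∈ L}` is vertex decomposable. -/
theorem augBergmanOn_isVertexDecomposable
    {E : Type*} [Fintype E] [DecidableEq E] (M : Matroid E) (hE : M.E = Set.univ)
    (L : Set (Finset E)) (hL : (M.closureOp hE).IsFlatUpperSet L) :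
    IsVertexDecomposable ((M.closureOp hE).augBergmanOn L) :=
  augBergmanOn_vd_aux L.ncard M hE L hL le_rfl
end
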